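/- arXiv:2202.06436 — 11 statements merged into one kernel-verified Lean document; each statement's English description precedes it below -/
import Mathlib

section
/- Let (E, Ω) be a finite-dimensional complex vector space with a non-degenerate Hermitian form Ω, and let L ∈ U(E, Ω). If λ and μ are eigenvalues of L with λ·conj(μ) ≠ 1, then the generalized eigenspaces (characteristic subspaces) E_λ = ker((L − λ·Id)^N) and E_μ = ker((L − μ·Id)^N) (for N ≥ dim E) are Ω-orthogonal. -/
/-- If `L` preserves a non-degenerate Hermitian form `Ω` and `λ·conj(μ) ≠ 1`, then the
generalized eigenspaces `ker((L − λ)^N)` and `ker((L − μ)^N)` (for `N ≥ dim E`) are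
`Ω`-orthogonal. -/
theorem stmt0 {E : Type*} [AddCommGroup E] [Module ℂ E] [FiniteDimensional ℂ E]
    (Ω : E → E → ℂ)
    (hΩadd : ∀ u u' v, Ω (u + u') v = Ω u v + Ω u' v)
    (hΩsmul : ∀ (a : ℂ) (u v : E), Ω (a • u) v = a * Ω u v)
    (hΩherm : ∀ u v, (starRingEnd ℂ) (Ω u v) = Ω v u)
    (hΩnd : ∀ u, (∀ v, Ω u v = 0) → u = 0)
    (L : Module.End ℂ E)
    (hL : ∀ u v, Ω (L u) (L v) = Ω u v)
    (lam mu : ℂ)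
    (hlam : Module.End.HasEigenvalue L lam)
    (hmu : Module.End.HasEigenvalue L mu)
    (hlm : lam * (starRingEnd ℂ) mu ≠ 1)
    (N : ℕ) (hN : Module.finrank ℂ E ≤ N)
    (u v : E)
    (hu : u ∈ LinearMap.ker ((L - lam • (1 : Module.End ℂ E)) ^ N))
    (hv : v ∈ LinearMap.ker ((L - mu • (1 : Module.End ℂ E)) ^ N)) :
    Ω u v = 0 := by
  -- basic consequences of the axioms
  have hΩzero_left : ∀ w : E, Ω 0 w = 0 := by
    intro w
    have := hΩadd 0 0 w
    simp only [add_zero] at this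
    linear_combination -this
  have hΩzero_right : ∀ w : E, Ω w 0 = 0 := by
    intro w
    have h := hΩherm 0 w
    rw [hΩzero_left] at h
    simpa using h.symm
  have hΩadd_right : ∀ u v v' : E, Ω u (v + v') = Ω u v + Ω u v' := by
    intro u v v'
    have h := hΩherm (v + v') u
    rw [hΩadd, map_add, hΩherm, hΩherm] at h
    exact h.symm
  have hΩsmul_right : ∀ (a : ℂ) (u v : E), Ω u (a • v) = (starRingEnd ℂ) a * Ω u v := by
    intro a u v
    have h := hΩherm (a • v) u
    rw [hΩsmul, map_mul, hΩherm] at h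
    exact h.symm
  -- main induction
  have key : ∀ n : ℕ, ∀ k l : ℕ, k + l ≤ n → ∀ u v : E,
      ((L - lam • (1 : Module.End ℂ E)) ^ k) u = 0 →
      ((L - mu • (1 : Module.End ℂ E)) ^ l) v = 0 → Ω u v = 0 := by
    intro n
    induction n with
    | zero =>
      intro k l hkl u v hu hv
      obtain ⟨hk, hl⟩ : k = 0 ∧ l = 0 := by omega
      subst hk
      simp only [pow_zero, Module.End.one_apply] at hu
      subst hu
      exact hΩzero_left v
    | succ n ih =>
      intro k l hkl u v hu hv
      match k, l with
      | 0, l =>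
        simp only [pow_zero, Module.End.one_apply] at hu
        subst hu
        exact hΩzero_left v
      | k, 0 =>
        simp only [pow_zero, Module.End.one_apply] at hv
        subst hv
        exact hΩzero_right u
      | k + 1, l + 1 =>
        set a := (L - lam • (1 : Module.End ℂ E)) u with ha
        set b := (L - mu • (1 : Module.End ℂ E)) v with hb
        have hLu : L u = lam • u + a := by
          simp [ha, LinearMap.sub_apply, LinearMap.smul_apply, Module.End.one_apply]
        have hLv : L v = mu • v + b := by
          simp [hb, LinearMap.sub_apply, LinearMap.smul_apply, Module.End.one_apply]
        have ha' : ((L - lam • (1 : Module.End ℂ E)) ^ k) a = 0 := by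
          have : ((L - lam • (1 : Module.End ℂ E)) ^ k) ((L - lam • (1 : Module.End ℂ E)) u)
              = ((L - lam • (1 : Module.End ℂ E)) ^ (k + 1)) u := by
            rw [pow_succ]
            rfl
          rw [ha, this, hu]
        have hb' : ((L - mu • (1 : Module.End ℂ E)) ^ l) b = 0 := by
          have : ((L - mu • (1 : Module.End ℂ E)) ^ l) ((L - mu • (1 : Module.End ℂ E)) v)
              = ((L - mu • (1 : Module.End ℂ E)) ^ (l + 1)) v := by
            rw [pow_succ]
            rfl
          rw [hb, this, hv]
        have h1 : Ω u b = 0 := ih (k + 1) l (by omega) u b hu hb'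
        have h2 : Ω a v = 0 := ih k (l + 1) (by omega) a v ha' hv
        have h3 : Ω a b = 0 := ih k l (by omega) a b ha' hb'
        have hmain : Ω u v = lam * (starRingEnd ℂ) mu * Ω u v := by
          calc Ω u v = Ω (L u) (L v) := (hL u v).symm
            _ = Ω (lam • u + a) (mu • v + b) := by rw [hLu, hLv]
            _ = lam * (starRingEnd ℂ) mu * Ω u v := by
                rw [hΩadd, hΩadd_right, hΩadd_right, hΩsmul, hΩsmul, hΩsmul_right,
                  hΩsmul_right, h1, h2, h3]
                ring
        have : (1 - lam * (starRingEnd ℂ) mu) * Ω u v = 0 := by linear_combination hmain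
        rcases mul_eq_zero.mp this with h | h
        · exfalso; apply hlm; linear_combination -h
        · exact h
  exact key (N + N) N N le_rfl u v hu hv
end

section
/- Let (E, Ω) be a finite-dimensional complex vector space with a non-degenerate Hermitian form, and L ∈ U(E, Ω). Then E admits a unique L-invariant Ω-orthogonal decomposition E = E_hu ⊕ E_eu ⊕ E_u where all eigenvalues of L restricted to E_hu have modulus ≠ 1, all eigenvalues of L restricted to E_eu have modulus 1 but are ≠ 1, and L restricted to E_u has 1 as its only eigenvalue. Moreover Ω restricts to a non-degenerate form on each summand. -/
open Module

namespace Stmt1Aux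

variable {E : Type*} [AddCommGroup E] [Module ℂ E]

section OmegaProps

variable (Ω : E → E → ℂ)

theorem omega_zero_left (hΩsmul : ∀ (a : ℂ) (u v : E), Ω (a • u) v = a * Ω u v) (v : E) :
    Ω 0 v = 0 := by
  have := hΩsmul 0 0 v
  simpa using this

theorem omega_zero_right (hΩsmul : ∀ (a : ℂ) (u v : E), Ω (a • u) v = a * Ω u v)
    (hΩherm : ∀ u v, (starRingEnd ℂ) (Ω u v) = Ω v u) (u : E) :
    Ω u 0 = 0 := by
  rw [← hΩherm, omega_zero_left Ω hΩsmul, map_zero]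

theorem omega_add_right (hΩadd : ∀ u u' v, Ω (u + u') v = Ω u v + Ω u' v)
    (hΩherm : ∀ u v, (starRingEnd ℂ) (Ω u v) = Ω v u) (u v v' : E) :
    Ω u (v + v') = Ω u v + Ω u v' := by
  rw [← hΩherm (v + v') u, hΩadd, map_add, hΩherm, hΩherm]

theorem omega_smul_right (hΩsmul : ∀ (a : ℂ) (u v : E), Ω (a • u) v = a * Ω u v)
    (hΩherm : ∀ u v, (starRingEnd ℂ) (Ω u v) = Ω v u) (a : ℂ) (u v : E) :
    Ω u (a • v) = (starRingEnd ℂ) a * Ω u v := by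
  rw [← hΩherm (a • v) u, hΩsmul, map_mul, hΩherm]

/-- The set of `u` with `Ω u v = 0`, as a submodule. -/
def rightOrth (hΩadd : ∀ u u' v, Ω (u + u') v = Ω u v + Ω u' v)
    (hΩsmul : ∀ (a : ℂ) (u v : E), Ω (a • u) v = a * Ω u v) (v : E) : Submodule ℂ E where
  carrier := {u | Ω u v = 0}
  add_mem' := by
    intro a b ha hb
    simp only [Set.mem_setOf_eq] at *
    rw [hΩadd, ha, hb, add_zero]
  zero_mem' := omega_zero_left Ω hΩsmul v
  smul_mem' := by
    intro c u hu
    simp only [Set.mem_setOf_eq] at *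
    rw [hΩsmul, hu, mul_zero]

/-- The set of `v` with `Ω u v = 0`, as a submodule. -/
def leftOrth (hΩadd : ∀ u u' v, Ω (u + u') v = Ω u v + Ω u' v)
    (hΩsmul : ∀ (a : ℂ) (u v : E), Ω (a • u) v = a * Ω u v)
    (hΩherm : ∀ u v, (starRingEnd ℂ) (Ω u v) = Ω v u) (u : E) : Submodule ℂ E where
  carrier := {v | Ω u v = 0}
  add_mem' := by
    intro a b ha hb
    simp only [Set.mem_setOf_eq] at *
    rw [omega_add_right Ω hΩadd hΩherm, ha, hb, add_zero]
  zero_mem' := omega_zero_right Ω hΩsmul hΩherm u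
  smul_mem' := by
    intro c v hv
    simp only [Set.mem_setOf_eq] at *
    rw [omega_smul_right Ω hΩsmul hΩherm, hv, mul_zero]

/-- Key induction: generalized eigenvectors for `lam`, `mu` with `lam * conj mu ≠ 1`
are orthogonal. -/
theorem ortho_aux (hΩadd : ∀ u u' v, Ω (u + u') v = Ω u v + Ω u' v)
    (hΩsmul : ∀ (a : ℂ) (u v : E), Ω (a • u) v = a * Ω u v)
    (hΩherm : ∀ u v, (starRingEnd ℂ) (Ω u v) = Ω v u)
    (L : Module.End ℂ E) (hL : ∀ u v, Ω (L u) (L v) = Ω u v)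
    {lam mu : ℂ} (hlm : lam * (starRingEnd ℂ) mu ≠ 1) :
    ∀ (n i j : ℕ) (u v : E), i + j ≤ n →
      ((L - lam • 1) ^ i) u = 0 → ((L - mu • 1) ^ j) v = 0 → Ω u v = 0 := by
  intro n
  induction n with
  | zero =>
    intro i j u v hij hu hv
    have hi0 : i = 0 := by omega
    subst hi0
    rw [pow_zero, Module.End.one_apply] at hu
    rw [hu]
    exact omega_zero_left Ω hΩsmul v
  | succ n ih =>
    intro i j u v hij hu hv
    match i, j with
    | 0, j =>
      rw [pow_zero, Module.End.one_apply] at hu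
      rw [hu]
      exact omega_zero_left Ω hΩsmul v
    | i, 0 =>
      rw [pow_zero, Module.End.one_apply] at hv
      rw [hv]
      exact omega_zero_right Ω hΩsmul hΩherm u
    | i' + 1, j' + 1 =>
      set a : E := (L - lam • 1) u with ha_def
      set b : E := (L - mu • 1) v with hb_def
      rw [pow_succ, Module.End.mul_apply] at hu hv
      have ha : ((L - lam • 1) ^ i') a = 0 := hu
      have hb : ((L - mu • 1) ^ j') b = 0 := hv
      have hLu : L u = a + lam • u := by
        rw [ha_def]
        simp [LinearMap.sub_apply, LinearMap.smul_apply, Module.End.one_apply]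
      have hLv : L v = b + mu • v := by
        rw [hb_def]
        simp [LinearMap.sub_apply, LinearMap.smul_apply, Module.End.one_apply]
      have hab : Ω a b = 0 := ih i' j' a b (by omega) ha hb
      have hav : Ω a v = 0 := ih i' (j' + 1) a v (by omega) ha (by
        rw [pow_succ, Module.End.mul_apply]; exact hb)
      have hub : Ω u b = 0 := ih (i' + 1) j' u b (by omega) (by
        rw [pow_succ, Module.End.mul_apply]; exact ha) hb
      have e1 : Ω u v = lam * ((starRingEnd ℂ) mu * Ω u v) := by
        have := (hL u v).symm
        rw [hLu, hLv, hΩadd, hΩsmul, omega_add_right Ω hΩadd hΩherm,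
          omega_add_right Ω hΩadd hΩherm, omega_smul_right Ω hΩsmul hΩherm,
          omega_smul_right Ω hΩsmul hΩherm, hab, hav, hub] at this
        simpa using this
      have h2 : (1 - lam * (starRingEnd ℂ) mu) * Ω u v = 0 := by linear_combination e1
      rcases mul_eq_zero.mp h2 with h | h
      · exact absurd (by linear_combination -h) hlm
      · exact h

theorem ortho_sup (hΩadd : ∀ u u' v, Ω (u + u') v = Ω u v + Ω u' v)
    (hΩsmul : ∀ (a : ℂ) (u v : E), Ω (a • u) v = a * Ω u v)
    (hΩherm : ∀ u v, (starRingEnd ℂ) (Ω u v) = Ω v u)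
    (L : Module.End ℂ E) (hL : ∀ u v, Ω (L u) (L v) = Ω u v)
    (S S' : Set ℂ) (h : ∀ lam ∈ S, ∀ mu ∈ S', lam * (starRingEnd ℂ) mu ≠ 1) :
    ∀ u ∈ ⨆ lam ∈ S, L.maxGenEigenspace lam,
      ∀ v ∈ ⨆ mu ∈ S', L.maxGenEigenspace mu, Ω u v = 0 := by
  intro u hu v hv
  have key : (⨆ lam ∈ S, L.maxGenEigenspace lam) ≤ rightOrth Ω hΩadd hΩsmul v := by
    refine iSup₂_le fun lam hlam => ?_
    intro u' hu'
    have hle : (⨆ mu ∈ S', L.maxGenEigenspace mu) ≤ leftOrth Ω hΩadd hΩsmul hΩherm u' := by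
      refine iSup₂_le fun mu hmu => ?_
      intro v' hv'
      obtain ⟨i, hi⟩ := (L.mem_maxGenEigenspace lam u').mp hu'
      obtain ⟨j, hj⟩ := (L.mem_maxGenEigenspace mu v').mp hv'
      exact ortho_aux Ω hΩadd hΩsmul hΩherm L hL (h lam hlam mu hmu) (i + j) i j u' v'
        le_rfl hi hj
    exact hle hv
  exact key hu

theorem eq_zero_of_orth (hΩadd : ∀ u u' v, Ω (u + u') v = Ω u v + Ω u' v)
    (hΩherm : ∀ u v, (starRingEnd ℂ) (Ω u v) = Ω v u)
    (hΩnd : ∀ u, (∀ v, Ω u v = 0) → u = 0)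
    (A B C : Submodule ℂ E) (htop : A ⊔ B ⊔ C = ⊤) (u : E)
    (h1 : ∀ v ∈ A, Ω u v = 0) (h2 : ∀ v ∈ B, Ω u v = 0) (h3 : ∀ v ∈ C, Ω u v = 0) :
    u = 0 := by
  apply hΩnd
  intro y
  have hy : y ∈ A ⊔ B ⊔ C := htop ▸ Submodule.mem_top
  obtain ⟨ab, hab, c, hc, rfl⟩ := Submodule.mem_sup.mp hy
  obtain ⟨a, ha, b, hb, rfl⟩ := Submodule.mem_sup.mp hab
  rw [omega_add_right Ω hΩadd hΩherm, omega_add_right Ω hΩadd hΩherm,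
    h1 a ha, h2 b hb, h3 c hc, add_zero, add_zero]

theorem disj3 (hΩadd : ∀ u u' v, Ω (u + u') v = Ω u v + Ω u' v)
    (hΩherm : ∀ u v, (starRingEnd ℂ) (Ω u v) = Ω v u)
    (hΩnd : ∀ u, (∀ v, Ω u v = 0) → u = 0)
    (A B C : Submodule ℂ E) (htop : A ⊔ B ⊔ C = ⊤)
    (hAB : ∀ u ∈ A, ∀ v ∈ B, Ω u v = 0) (hAC : ∀ u ∈ A, ∀ v ∈ C, Ω u v = 0) :
    Disjoint A (B ⊔ C) := by
  rw [Submodule.disjoint_def]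
  intro x hxA hxBC
  obtain ⟨b, hb, c, hc, hx⟩ := Submodule.mem_sup.mp hxBC
  refine eq_zero_of_orth Ω hΩadd hΩherm hΩnd A B C htop x ?_ ?_ ?_
  · intro v hv
    rw [← hx, hΩadd, ← hΩherm v b, ← hΩherm v c,
      hAB v hv b hb, hAC v hv c hc, map_zero, add_zero]
  · intro v hv
    exact hAB x hxA v hv
  · intro v hv
    exact hAC x hxA v hv

theorem mem_triple {A B C : Submodule ℂ E} (htop : A ⊔ B ⊔ C = ⊤) (y : E) :
    ∃ a ∈ A, ∃ b ∈ B, ∃ c ∈ C, y = a + b + c := by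
  have hy : y ∈ A ⊔ B ⊔ C := htop ▸ Submodule.mem_top
  obtain ⟨ab, hab, c, hc, rfl⟩ := Submodule.mem_sup.mp hy
  obtain ⟨a, ha, b, hb, rfl⟩ := Submodule.mem_sup.mp hab
  exact ⟨a, ha, b, hb, c, hc, rfl⟩

theorem iSup_fin3 (f : Fin 3 → Submodule ℂ E) : ⨆ i, f i = f 0 ⊔ f 1 ⊔ f 2 := by
  apply le_antisymm
  · refine iSup_le fun i => ?_
    fin_cases i
    · exact le_sup_of_le_left le_sup_left
    · exact le_sup_of_le_left le_sup_right
    · exact le_sup_right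
  · exact sup_le (sup_le (le_iSup f 0) (le_iSup f 1)) (le_iSup f 2)

/-- An invariant subspace is contained in the sum of the generalized eigenspaces for the
eigenvalues appearing on it. -/
theorem invariant_le [FiniteDimensional ℂ E] (L : Module.End ℂ E) (W : Submodule ℂ E)
    (hW : ∀ x ∈ W, L x ∈ W) (S : Set ℂ)
    (hS : ∀ (lam : ℂ) (x : E), x ∈ W → x ≠ 0 → L x = lam • x → lam ∈ S) :
    W ≤ ⨆ lam ∈ S, L.maxGenEigenspace lam := by
  set L' : Module.End ℂ W := L.restrict hW with hL'def
  have hcoe1 : ∀ (mu : ℂ) (y : W), (((L' - mu • 1) y : W) : E) = (L - mu • 1) (y : E) := by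
    intro mu y
    simp [hL'def, LinearMap.restrict_apply, LinearMap.sub_apply, LinearMap.smul_apply,
      Module.End.one_apply]
  have hcoe : ∀ (mu : ℂ) (k : ℕ) (y : W),
      ((((L' - mu • 1) ^ k) y : W) : E) = ((L - mu • 1) ^ k) (y : E) := by
    intro mu k
    induction k with
    | zero => intro y; simp
    | succ k ihk =>
      intro y
      rw [pow_succ, Module.End.mul_apply, pow_succ, Module.End.mul_apply, ihk, hcoe1]
  intro x hx
  have htop := Module.End.iSup_maxGenEigenspace_eq_top L'
  have hx' : (⟨x, hx⟩ : W) ∈ ⨆ mu, L'.maxGenEigenspace mu := by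
    rw [htop]; trivial
  have hxm : x ∈ Submodule.map W.subtype (⨆ mu, L'.maxGenEigenspace mu) :=
    ⟨⟨x, hx⟩, hx', rfl⟩
  rw [Submodule.map_iSup] at hxm
  refine (iSup_le fun mu => ?_ :
    (⨆ mu, Submodule.map W.subtype (L'.maxGenEigenspace mu)) ≤
      ⨆ lam ∈ S, L.maxGenEigenspace lam) hxm
  by_cases hbot : L'.maxGenEigenspace mu = ⊥
  · rw [hbot, Submodule.map_bot]
    exact bot_le
  · have hev : L'.HasEigenvalue mu := Module.End.HasUnifEigenvalue.lt zero_lt_one hbot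
    obtain ⟨y, hy⟩ := hev.exists_hasEigenvector
    have hLy : L (y : E) = mu • (y : E) := by
      have h1 := hy.apply_eq_smul
      have h2 : ((L' y : W) : E) = L (y : E) := by
        simp [hL'def, LinearMap.restrict_apply]
      rw [← h2, h1]
      simp
    have hy0 : (y : E) ≠ 0 := fun h0 => hy.2 (Subtype.ext h0)
    have hmuS : mu ∈ S := hS mu (y : E) y.2 hy0 hLy
    refine le_trans ?_ (le_biSup _ hmuS)
    rintro z ⟨w, hw, rfl⟩
    obtain ⟨k, hk⟩ := (Module.End.mem_maxGenEigenspace L' mu w).mp hw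
    refine (Module.End.mem_maxGenEigenspace L mu _).mpr ?_
    exact ⟨k, by rw [Submodule.subtype_apply, ← hcoe mu k w, hk, Submodule.coe_zero]⟩

end OmegaProps

end Stmt1Aux

open Stmt1Aux

/-- Unique `L`-invariant `Ω`-orthogonal decomposition `E = E_hu ⊕ E_eu ⊕ E_u` of a unitary
automorphism into hyperbolic-unipotent, elliptic-unipotent and unipotent parts, with `Ω`
non-degenerate on each summand. -/
theorem stmt1 {E : Type*} [AddCommGroup E] [Module ℂ E] [FiniteDimensional ℂ E]
    (Ω : E → E → ℂ)
    (hΩadd : ∀ u u' v, Ω (u + u') v = Ω u v + Ω u' v)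
    (hΩsmul : ∀ (a : ℂ) (u v : E), Ω (a • u) v = a * Ω u v)
    (hΩherm : ∀ u v, (starRingEnd ℂ) (Ω u v) = Ω v u)
    (hΩnd : ∀ u, (∀ v, Ω u v = 0) → u = 0)
    (L : Module.End ℂ E)
    (hbij : Function.Bijective L)
    (hL : ∀ u v, Ω (L u) (L v) = Ω u v) :
    ∃! T : Submodule ℂ E × Submodule ℂ E × Submodule ℂ E,
      DirectSum.IsInternal ![T.1, T.2.1, T.2.2] ∧
      (∀ x ∈ T.1, L x ∈ T.1) ∧ (∀ x ∈ T.2.1, L x ∈ T.2.1) ∧ (∀ x ∈ T.2.2, L x ∈ T.2.2) ∧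
      (∀ u ∈ T.1, ∀ v ∈ T.2.1, Ω u v = 0) ∧
      (∀ u ∈ T.1, ∀ v ∈ T.2.2, Ω u v = 0) ∧
      (∀ u ∈ T.2.1, ∀ v ∈ T.2.2, Ω u v = 0) ∧
      (∀ (lam : ℂ) (x : E), x ∈ T.1 → x ≠ 0 → L x = lam • x → ‖lam‖ ≠ 1) ∧
      (∀ (lam : ℂ) (x : E), x ∈ T.2.1 → x ≠ 0 → L x = lam • x → ‖lam‖ = 1 ∧ lam ≠ 1) ∧
      (∀ (lam : ℂ) (x : E), x ∈ T.2.2 → x ≠ 0 → L x = lam • x → lam = 1) ∧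
      (∀ u ∈ T.1, (∀ v ∈ T.1, Ω u v = 0) → u = 0) ∧
      (∀ u ∈ T.2.1, (∀ v ∈ T.2.1, Ω u v = 0) → u = 0) ∧
      (∀ u ∈ T.2.2, (∀ v ∈ T.2.2, Ω u v = 0) → u = 0) := by
  classical
  set G : ℂ → Submodule ℂ E := L.maxGenEigenspace with hGdef
  set S1 : Set ℂ := {c | ‖c‖ ≠ 1} with hS1def
  set S2 : Set ℂ := {c | ‖c‖ = 1 ∧ c ≠ 1} with hS2def
  set S3 : Set ℂ := {(1 : ℂ)} with hS3def
  set T1 : Submodule ℂ E := ⨆ lam ∈ S1, G lam with hT1def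
  set T2 : Submodule ℂ E := ⨆ lam ∈ S2, G lam with hT2def
  set T3 : Submodule ℂ E := ⨆ lam ∈ S3, G lam with hT3def
  -- basic classification of eigenvalues
  have hGle : ∀ mu : ℂ, G mu ≤ T1 ⊔ T2 ⊔ T3 := by
    intro mu
    by_cases h1 : ‖mu‖ = 1
    · by_cases h2 : mu = 1
      · exact le_trans (le_biSup G (show mu ∈ S3 from h2)) le_sup_right
      · exact le_trans (le_biSup G (show mu ∈ S2 from ⟨h1, h2⟩))
          (le_sup_of_le_left le_sup_right)
    · exact le_trans (le_biSup G (show mu ∈ S1 from h1)) (le_sup_of_le_left le_sup_left)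
  have hT123 : T1 ⊔ T2 ⊔ T3 = ⊤ := by
    rw [eq_top_iff, ← Module.End.iSup_maxGenEigenspace_eq_top L]
    exact iSup_le hGle
  -- invariance
  have hinv : ∀ S : Set ℂ, ∀ x ∈ ⨆ lam ∈ S, G lam, L x ∈ ⨆ lam ∈ S, G lam := by
    intro S
    have hle : (⨆ lam ∈ S, G lam) ≤ Submodule.comap L (⨆ lam ∈ S, G lam) := by
      refine iSup₂_le fun lam hlam => ?_
      intro x hx
      rw [Submodule.mem_comap]
      exact le_biSup G hlam
        (Module.End.mapsTo_maxGenEigenspace_of_comm (Commute.refl L) lam hx)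
    exact fun x hx => hle hx
  -- orthogonality between the three pieces
  have h12 : ∀ u ∈ T1, ∀ v ∈ T2, Ω u v = 0 := by
    refine ortho_sup Ω hΩadd hΩsmul hΩherm L hL S1 S2 ?_
    intro lam hlam mu hmu h
    apply hlam
    have := congrArg norm h
    rwa [norm_mul, RCLike.norm_conj, hmu.1, mul_one, norm_one] at this
  have h13 : ∀ u ∈ T1, ∀ v ∈ T3, Ω u v = 0 := by
    refine ortho_sup Ω hΩadd hΩsmul hΩherm L hL S1 S3 ?_
    intro lam hlam mu hmu h
    apply hlam
    rw [show mu = 1 from hmu] at h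
    have := congrArg norm h
    rwa [norm_mul, RCLike.norm_conj, norm_one, mul_one] at this
  have h23 : ∀ u ∈ T2, ∀ v ∈ T3, Ω u v = 0 := by
    refine ortho_sup Ω hΩadd hΩsmul hΩherm L hL S2 S3 ?_
    intro lam hlam mu hmu h
    rw [show mu = 1 from hmu, map_one, mul_one] at h
    exact hlam.2 h
  have h21 : ∀ u ∈ T2, ∀ v ∈ T1, Ω u v = 0 := fun u hu v hv => by
    rw [← hΩherm v u, h12 v hv u hu, map_zero]
  have h31 : ∀ u ∈ T3, ∀ v ∈ T1, Ω u v = 0 := fun u hu v hv => by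
    rw [← hΩherm v u, h13 v hv u hu, map_zero]
  have h32 : ∀ u ∈ T3, ∀ v ∈ T2, Ω u v = 0 := fun u hu v hv => by
    rw [← hΩherm v u, h23 v hv u hu, map_zero]
  -- alternative tops
  have hT213 : T2 ⊔ T1 ⊔ T3 = ⊤ := by
    rw [eq_top_iff]
    intro y _
    obtain ⟨a, ha, b, hb, c, hc, rfl⟩ := mem_triple hT123 y
    exact add_mem (add_mem (Submodule.mem_sup_left (Submodule.mem_sup_right ha))
      (Submodule.mem_sup_left (Submodule.mem_sup_left hb))) (Submodule.mem_sup_right hc)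
  have hT312 : T3 ⊔ T1 ⊔ T2 = ⊤ := by
    rw [eq_top_iff]
    intro y _
    obtain ⟨a, ha, b, hb, c, hc, rfl⟩ := mem_triple hT123 y
    exact add_mem (add_mem (Submodule.mem_sup_left (Submodule.mem_sup_right ha))
      (Submodule.mem_sup_right hb)) (Submodule.mem_sup_left (Submodule.mem_sup_left hc))
  -- disjointness
  have hdisj1 : Disjoint T1 (T2 ⊔ T3) :=
    disj3 Ω hΩadd hΩherm hΩnd T1 T2 T3 hT123 h12 h13
  have hdisj2 : Disjoint T2 (T1 ⊔ T3) :=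
    disj3 Ω hΩadd hΩherm hΩnd T2 T1 T3 hT213 h21 h23
  have hdisj3 : Disjoint T3 (T1 ⊔ T2) :=
    disj3 Ω hΩadd hΩherm hΩnd T3 T1 T2 hT312 h31 h32
  refine ⟨⟨T1, T2, T3⟩, ⟨?_, ?_, ?_, ?_, ?_, ?_, ?_, ?_, ?_, ?_, ?_, ?_, ?_⟩, ?_⟩
  · -- IsInternal
    rw [DirectSum.isInternal_submodule_iff_iSupIndep_and_iSup_eq_top]
    constructor
    · intro i
      fin_cases i
      · refine Disjoint.mono_right ?_ hdisj1
        refine iSup_le fun j => iSup_le fun hj => ?_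
        fin_cases j
        · exact absurd rfl hj
        · exact le_sup_left
        · exact le_sup_right
      · refine Disjoint.mono_right ?_ hdisj2
        refine iSup_le fun j => iSup_le fun hj => ?_
        fin_cases j
        · exact le_sup_left
        · exact absurd rfl hj
        · exact le_sup_right
      · refine Disjoint.mono_right ?_ hdisj3
        refine iSup_le fun j => iSup_le fun hj => ?_
        fin_cases j
        · exact le_sup_left
        · exact le_sup_right
        · exact absurd rfl hj
    · rw [iSup_fin3]
      simpa using hT123
  · exact hinv S1
  · exact hinv S2
  · exact hinv S3
  · exact h12
  · exact h13
  · exact h23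
  · -- eigenvalues on T1
    intro lam x hx hne heig hnorm
    have hxG : x ∈ G lam := by
      rw [hGdef, Module.End.mem_maxGenEigenspace]
      exact ⟨1, by simp [pow_one, LinearMap.sub_apply, LinearMap.smul_apply,
        Module.End.one_apply, heig]⟩
    have hle : G lam ≤ T2 ⊔ T3 := by
      by_cases h2 : lam = 1
      · exact le_trans (le_biSup G (show lam ∈ S3 from h2)) le_sup_right
      · exact le_trans (le_biSup G (show lam ∈ S2 from ⟨hnorm, h2⟩)) le_sup_left
    exact hne (Submodule.disjoint_def.mp hdisj1 x hx (hle hxG))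
  · -- eigenvalues on T2
    intro lam x hx hne heig
    have hxG : x ∈ G lam := by
      rw [hGdef, Module.End.mem_maxGenEigenspace]
      exact ⟨1, by simp [pow_one, LinearMap.sub_apply, LinearMap.smul_apply,
        Module.End.one_apply, heig]⟩
    by_contra h
    have hle : G lam ≤ T1 ⊔ T3 := by
      by_cases hn : ‖lam‖ = 1
      · have hl1 : lam = 1 := by
          by_contra h1
          exact h ⟨hn, h1⟩
        exact le_trans (le_biSup G (show lam ∈ S3 from hl1)) le_sup_right
      · exact le_trans (le_biSup G (show lam ∈ S1 from hn)) le_sup_left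
    exact hne (Submodule.disjoint_def.mp hdisj2 x hx (hle hxG))
  · -- eigenvalues on T3
    intro lam x hx hne heig
    have hxG : x ∈ G lam := by
      rw [hGdef, Module.End.mem_maxGenEigenspace]
      exact ⟨1, by simp [pow_one, LinearMap.sub_apply, LinearMap.smul_apply,
        Module.End.one_apply, heig]⟩
    by_contra h1
    have hle : G lam ≤ T1 ⊔ T2 := by
      by_cases hn : ‖lam‖ = 1
      · exact le_trans (le_biSup G (show lam ∈ S2 from ⟨hn, h1⟩)) le_sup_right
      · exact le_trans (le_biSup G (show lam ∈ S1 from hn)) le_sup_left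
    exact hne (Submodule.disjoint_def.mp hdisj3 x hx (hle hxG))
  · -- nondegeneracy on T1
    intro u hu h
    exact eq_zero_of_orth Ω hΩadd hΩherm hΩnd T1 T2 T3 hT123 u h
      (fun v hv => h12 u hu v hv) (fun v hv => h13 u hu v hv)
  · -- nondegeneracy on T2
    intro u hu h
    exact eq_zero_of_orth Ω hΩadd hΩherm hΩnd T1 T2 T3 hT123 u
      (fun v hv => h21 u hu v hv) h (fun v hv => h23 u hu v hv)
  · -- nondegeneracy on T3
    intro u hu h
    exact eq_zero_of_orth Ω hΩadd hΩherm hΩnd T1 T2 T3 hT123 u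
      (fun v hv => h31 u hu v hv) (fun v hv => h32 u hu v hv) h
  · -- uniqueness
    rintro ⟨A, B, C⟩ ⟨hint, hAinv, hBinv, hCinv, _, _, _, heA, heB, heC, _, _, _⟩
    dsimp only at hint hAinv hBinv hCinv heA heB heC ⊢
    have hAle : A ≤ T1 :=
      invariant_le L A hAinv S1 (fun lam x hx h0 he => heA lam x hx h0 he)
    have hBle : B ≤ T2 :=
      invariant_le L B hBinv S2 (fun lam x hx h0 he => heB lam x hx h0 he)
    have hCle : C ≤ T3 :=
      invariant_le L C hCinv S3 (fun lam x hx h0 he => heC lam x hx h0 he)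
    have htop' : A ⊔ B ⊔ C = ⊤ := by
      have := hint.submodule_iSup_eq_top
      rw [iSup_fin3] at this
      simpa using this
    have hT1le : T1 ≤ A := by
      intro x hx
      obtain ⟨a, ha, b, hb, c, hc, hy⟩ := mem_triple htop' x
      have hm1 : x - a ∈ T1 := sub_mem hx (hAle ha)
      have hm2 : x - a ∈ T2 ⊔ T3 := by
        have h1 : x - a = b + c := by rw [hy]; abel
        rw [h1]
        exact Submodule.add_mem_sup (hBle hb) (hCle hc)
      have h0 := Submodule.disjoint_def.mp hdisj1 _ hm1 hm2
      rw [sub_eq_zero] at h0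
      rw [h0]
      exact ha
    have hT2le : T2 ≤ B := by
      intro x hx
      obtain ⟨a, ha, b, hb, c, hc, hy⟩ := mem_triple htop' x
      have hm1 : x - b ∈ T2 := sub_mem hx (hBle hb)
      have hm2 : x - b ∈ T1 ⊔ T3 := by
        have h1 : x - b = a + c := by rw [hy]; abel
        rw [h1]
        exact Submodule.add_mem_sup (hAle ha) (hCle hc)
      have h0 := Submodule.disjoint_def.mp hdisj2 _ hm1 hm2
      rw [sub_eq_zero] at h0
      rw [h0]
      exact hb
    have hT3le : T3 ≤ C := by
      intro x hx
      obtain ⟨a, ha, b, hb, c, hc, hy⟩ := mem_triple htop' x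
      have hm1 : x - c ∈ T3 := sub_mem hx (hCle hc)
      have hm2 : x - c ∈ T1 ⊔ T2 := by
        have h1 : x - c = a + b := by rw [hy]; abel
        rw [h1]
        exact Submodule.add_mem_sup (hAle ha) (hBle hb)
      have h0 := Submodule.disjoint_def.mp hdisj3 _ hm1 hm2
      rw [sub_eq_zero] at h0
      rw [h0]
      exact hc
    refine Prod.ext (le_antisymm hAle hT1le) (Prod.ext ?_ ?_)
    · exact le_antisymm hBle hT2le
    · exact le_antisymm hCle hT3le
end

section
/- Let L ∈ U(p,q) fix a point W_0 ∈ closure(D^I_{p,q}), i.e. L(W_0) = W_0 where the action extends continuously to the closure. Define ψ_{W_0}(W) = −log(|det(W_0* W − I_q)|^{-2} det(I_q − W*W)) on D^I_{p,q}. Then for all W ∈ D^I_{p,q}, ψ_{W_0}(L(W)) = ψ_{W_0}(W) + log|det(d − W_0* b)|^2, where L = [[a,b],[c,d]] in block form; in particular ψ_{W_0} is invariant up to an additive constant under the stabilizer of W_0. -/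
/-!
Write `L(W) = N K⁻¹` with `N = a W + b`, `K = c W + d`. The relation `Lᴴ J L = J` gives the cocycle
identity `Kᴴ K - Nᴴ N = 1 - Wᴴ W`, so `det (1 - L(W)ᴴ L(W)) = |det K|⁻² det (1 - Wᴴ W)`. The fixed
point equation `a W₀ + b = W₀ (c W₀ + d)`, combined with `L⁻¹ = J Lᴴ J`, gives
`W₀ᴴ a - c = (d - W₀ᴴ b) W₀ᴴ`, hence `W₀ᴴ L(W) - 1 = (d - W₀ᴴ b)(W₀ᴴ W - 1) K⁻¹`. In the quotient
`|det (W₀ᴴ V - 1)|⁻² det (1 - Vᴴ V)` the factors `|det K|⁻²` cancel, leaving the constant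
`|det (d - W₀ᴴ b)|⁻²`.
-/

open Matrix ComplexOrder

namespace Matrix

section Algebra

variable {R : Type*} [CommRing R] {m n : Type*} [Fintype m] [Fintype n] [DecidableEq n]

noncomputable def moebius (a : Matrix m m R) (b : Matrix m n R) (c : Matrix n m R)
    (d : Matrix n n R) (W : Matrix m n R) : Matrix m n R :=
  (a * W + b) * (c * W + d)⁻¹

variable {a : Matrix m m R} {b : Matrix m n R} {c : Matrix n m R} {d : Matrix n n R}
  {W₀ W : Matrix m n R}

theorem mul_eq_of_moebius_eq (hfix : moebius a b c d W₀ = W₀) (hd : IsUnit d.det) :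
    a * W₀ + b = W₀ * (c * W₀ + d) := by
  -- If `c W₀ + d` were singular, its junk inverse `0` would force `W₀ = 0`, making it `d`.
  have hK : IsUnit (c * W₀ + d).det := by
    by_contra hK
    rw [moebius, nonsing_inv_apply_not_isUnit _ hK, Matrix.mul_zero] at hfix
    subst hfix
    simp_all
  calc a * W₀ + b = (a * W₀ + b) * (c * W₀ + d)⁻¹ * (c * W₀ + d) := by
        rw [Matrix.mul_assoc, nonsing_inv_mul _ hK, Matrix.mul_one]
    _ = W₀ * (c * W₀ + d) := congrArg (· * (c * W₀ + d)) hfix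

variable [StarRing R]

theorem star_dotProduct_one_sub_conjTranspose_mul_self_mulVec (A : Matrix m n R) (x : n → R) :
    star x ⬝ᵥ ((1 - Aᴴ * A) *ᵥ x) = star x ⬝ᵥ x - star (A *ᵥ x) ⬝ᵥ (A *ᵥ x) := by
  rw [sub_mulVec, one_mulVec, dotProduct_sub, ← mulVec_mulVec, dotProduct_mulVec,
    ← star_mulVec]

variable [DecidableEq m]

/-- The block form of `Lᴴ J L = J` for `L = [[a, b], [c, d]]` and `J = diag(1, -1)`,
i.e. of `L ∈ U(p, q)`. -/
structure IsIndefUnitaryBlocks (a : Matrix m m R) (b : Matrix m n R) (c : Matrix n m R)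
    (d : Matrix n n R) : Prop where
  top_left : aᴴ * a - cᴴ * c = 1
  top_right : aᴴ * b = cᴴ * d
  bottom_right : dᴴ * d - bᴴ * b = 1

namespace IsIndefUnitaryBlocks

theorem of_fromBlocks
    (hL : (fromBlocks a b c d)ᴴ * fromBlocks 1 0 0 (-1) * fromBlocks a b c d =
      fromBlocks 1 0 0 (-1)) :
    IsIndefUnitaryBlocks a b c d := by
  simp only [fromBlocks_conjTranspose, fromBlocks_multiply, Matrix.mul_one, Matrix.mul_zero,
    zero_add, add_zero, Matrix.mul_neg, fromBlocks_inj] at hL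
  obtain ⟨h11, h12, -, h22⟩ := hL
  refine ⟨by simpa [sub_eq_add_neg] using h11, ?_, ?_⟩
  · simpa [neg_mul, ← sub_eq_add_neg, sub_eq_zero] using h12
  · rw [← neg_inj, ← h22]; simp only [neg_mul]; abel

variable (h : IsIndefUnitaryBlocks a b c d)
include h

theorem bottom_left : bᴴ * a = dᴴ * c := by
  simpa using congrArg conjTranspose h.top_right

theorem conjTranspose_mul_self_denom (W : Matrix m n R) :
    (c * W + d)ᴴ * (c * W + d) = (a * W + b)ᴴ * (a * W + b) + (1 - Wᴴ * W) := by
  have hc : cᴴ * c = aᴴ * a - 1 := by rw [← h.top_left]; abel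
  have hd : dᴴ * d = bᴴ * b + 1 := by rw [← h.bottom_right]; abel
  calc (c * W + d)ᴴ * (c * W + d)
        = Wᴴ * (cᴴ * c) * W + Wᴴ * (cᴴ * d) + dᴴ * c * W + dᴴ * d := by
        simp only [conjTranspose_add, conjTranspose_mul, Matrix.add_mul, Matrix.mul_add,
          Matrix.mul_assoc]
        abel
    _ = Wᴴ * (aᴴ * a - 1) * W + Wᴴ * (aᴴ * b) + bᴴ * a * W + (bᴴ * b + 1) := by
        rw [hc, hd, h.top_right, h.bottom_left]
    _ = (a * W + b)ᴴ * (a * W + b) + (1 - Wᴴ * W) := by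
        simp only [conjTranspose_add, conjTranspose_mul, Matrix.add_mul, Matrix.mul_add,
          Matrix.mul_sub, Matrix.sub_mul, Matrix.mul_assoc, Matrix.mul_one]
        abel

theorem one_sub_conjTranspose_mul_self_moebius (hK : IsUnit (c * W + d).det) :
    1 - (moebius a b c d W)ᴴ * moebius a b c d W =
      ((c * W + d)⁻¹)ᴴ * (1 - Wᴴ * W) * (c * W + d)⁻¹ := by
  have hKK : (c * W + d) * (c * W + d)⁻¹ = 1 := mul_nonsing_inv _ hK
  rw [eq_sub_of_add_eq' (h.conjTranspose_mul_self_denom W).symm, Matrix.mul_sub, Matrix.sub_mul,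
    moebius, conjTranspose_mul]
  calc 1 - ((c * W + d)⁻¹)ᴴ * (a * W + b)ᴴ * ((a * W + b) * (c * W + d)⁻¹)
      = ((c * W + d) * (c * W + d)⁻¹)ᴴ * ((c * W + d) * (c * W + d)⁻¹)
          - ((c * W + d)⁻¹)ᴴ * (a * W + b)ᴴ * ((a * W + b) * (c * W + d)⁻¹) := by
        rw [hKK, conjTranspose_one, Matrix.one_mul]
    _ = _ := by simp only [conjTranspose_mul, Matrix.mul_assoc]

section FixedPoint

variable (hfix : a * W₀ + b = W₀ * (c * W₀ + d))
include hfix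

theorem sub_mul_denom_eq_one_of_fixed : (dᴴ - bᴴ * W₀) * (c * W₀ + d) = 1 := by
  have hd : dᴴ * d = bᴴ * b + 1 := by rw [← h.bottom_right]; abel
  calc (dᴴ - bᴴ * W₀) * (c * W₀ + d)
        = dᴴ * c * W₀ + dᴴ * d - bᴴ * (W₀ * (c * W₀ + d)) := by
        simp only [Matrix.sub_mul, Matrix.mul_add, Matrix.mul_assoc]; abel
    _ = 1 := by
        rw [← hfix, hd, ← h.bottom_left]
        simp only [Matrix.mul_add, Matrix.mul_assoc]; abel

theorem isUnit_det_sub_of_fixed : IsUnit (d - W₀ᴴ * b).det :=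
  isUnit_det_of_left_inverse (B := (c * W₀ + d)ᴴ) <| by
    simpa using congrArg conjTranspose (h.sub_mul_denom_eq_one_of_fixed hfix)

theorem conjTranspose_mul_sub_of_fixed : W₀ᴴ * a - c = (d - W₀ᴴ * b) * W₀ᴴ := by
  have hinv := h.sub_mul_denom_eq_one_of_fixed hfix
  have hW₀ : (aᴴ * W₀ - cᴴ) * (c * W₀ + d) = W₀ := by
    calc (aᴴ * W₀ - cᴴ) * (c * W₀ + d)
          = aᴴ * (W₀ * (c * W₀ + d)) - cᴴ * c * W₀ - cᴴ * d := by
          simp only [Matrix.sub_mul, Matrix.mul_add, Matrix.mul_assoc]; abel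
      _ = (aᴴ * a - cᴴ * c) * W₀ := by
          rw [← hfix, ← h.top_right]
          simp only [Matrix.mul_add, Matrix.sub_mul, Matrix.mul_assoc]; abel
      _ = W₀ := by rw [h.top_left, Matrix.one_mul]
  have : aᴴ * W₀ - cᴴ = W₀ * (dᴴ - bᴴ * W₀) := by
    calc aᴴ * W₀ - cᴴ = (aᴴ * W₀ - cᴴ) * (c * W₀ + d) * (dᴴ - bᴴ * W₀) := by
          rw [Matrix.mul_assoc, mul_eq_one_comm.mp hinv, Matrix.mul_one]
      _ = W₀ * (dᴴ - bᴴ * W₀) := by rw [hW₀]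
  simpa using congrArg conjTranspose this

theorem conjTranspose_mul_moebius_sub_one (hK : IsUnit (c * W + d).det) :
    W₀ᴴ * moebius a b c d W - 1 = (d - W₀ᴴ * b) * (W₀ᴴ * W - 1) * (c * W + d)⁻¹ := by
  have hnum : W₀ᴴ * (a * W + b) - (c * W + d) = (d - W₀ᴴ * b) * (W₀ᴴ * W - 1) := by
    calc W₀ᴴ * (a * W + b) - (c * W + d) = (W₀ᴴ * a - c) * W - (d - W₀ᴴ * b) := by
          simp only [Matrix.mul_add, Matrix.sub_mul, Matrix.mul_assoc]; abel
      _ = (d - W₀ᴴ * b) * (W₀ᴴ * W - 1) := by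
          rw [h.conjTranspose_mul_sub_of_fixed hfix, Matrix.mul_sub, Matrix.mul_one,
            Matrix.mul_assoc]
  rw [← hnum, Matrix.sub_mul, moebius, ← Matrix.mul_assoc, mul_nonsing_inv _ hK]

end FixedPoint

end IsIndefUnitaryBlocks

end Algebra

section Contraction

variable {𝕜 : Type*} [RCLike 𝕜] {m n : Type*} [Fintype m] [Fintype n] [DecidableEq n]

theorem det_conjTranspose_mul_sub_one_ne_zero {W₀ W : Matrix m n 𝕜}
    (hW₀ : (1 - W₀ᴴ * W₀).PosSemidef) (hW : (1 - Wᴴ * W).PosDef) : (W₀ᴴ * W - 1).det ≠ 0 := by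
  -- A kernel vector `x` has `⟪W₀ x, W x⟫ = ‖x‖²`, `‖W₀ x‖ ≤ ‖x‖` and `‖W x‖ < ‖x‖`,
  -- so that `‖W₀ x - W x‖² < 0`.
  intro h0
  obtain ⟨x, hx0, hx⟩ := exists_mulVec_eq_zero_iff.mpr h0
  rw [sub_mulVec, one_mulVec, sub_eq_zero, ← mulVec_mulVec] at hx
  set u := W₀ *ᵥ x
  set v := W *ᵥ x
  have huv : star u ⬝ᵥ v = star x ⬝ᵥ x := by
    rw [star_mulVec, ← dotProduct_mulVec, hx]
  have hvu : star v ⬝ᵥ u = star x ⬝ᵥ x := by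
    rw [star_dotProduct, huv, ← star_dotProduct]
  have hu : star u ⬝ᵥ u ≤ star x ⬝ᵥ x := by
    have := hW₀.dotProduct_mulVec_nonneg x
    rwa [star_dotProduct_one_sub_conjTranspose_mul_self_mulVec, sub_nonneg] at this
  have hv : star v ⬝ᵥ v < star x ⬝ᵥ x := by
    have := hW.dotProduct_mulVec_pos hx0
    rwa [star_dotProduct_one_sub_conjTranspose_mul_self_mulVec, sub_pos] at this
  have h := dotProduct_star_self_nonneg (u - v)
  rw [star_sub, sub_dotProduct, dotProduct_sub, dotProduct_sub, huv, hvu] at h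
  have hlt : star u ⬝ᵥ u - star x ⬝ᵥ x - (star x ⬝ᵥ x - star v ⬝ᵥ v) < 0 := by
    rw [show star u ⬝ᵥ u - star x ⬝ᵥ x - (star x ⬝ᵥ x - star v ⬝ᵥ v)
      = star u ⬝ᵥ u + star v ⬝ᵥ v - (star x ⬝ᵥ x + star x ⬝ᵥ x) by abel]
    exact sub_neg.mpr (add_lt_add_of_le_of_lt hu hv)
  exact (h.trans_lt hlt).false

variable [DecidableEq m] {a : Matrix m m 𝕜} {b : Matrix m n 𝕜} {c : Matrix n m 𝕜}
  {d : Matrix n n 𝕜}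

theorem IsIndefUnitaryBlocks.isUnit_det_denom (h : IsIndefUnitaryBlocks a b c d)
    {W : Matrix m n 𝕜} (hW : (1 - Wᴴ * W).PosDef) : IsUnit (c * W + d).det := by
  have hpos : ((c * W + d)ᴴ * (c * W + d)).PosDef := by
    rw [h.conjTranspose_mul_self_denom W]
    exact PosDef.posSemidef_add (posSemidef_conjTranspose_mul_self _) hW
  rw [← isUnit_iff_isUnit_det]
  exact isUnit_of_mul_isUnit_right hpos.isUnit

theorem IsIndefUnitaryBlocks.isUnit_det_bottom_right (h : IsIndefUnitaryBlocks a b c d) :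
    IsUnit d.det := by
  simpa using h.isUnit_det_denom (W := 0) (by simpa using PosDef.one)

end Contraction

end Matrix

theorem Complex.re_star_inv_mul_mul_inv (k δ : ℂ) : (star k⁻¹ * δ * k⁻¹).re = δ.re / ‖k‖ ^ 2 := by
  rw [mul_right_comm, Complex.star_def, map_inv₀, ← mul_inv, mul_comm _ k, Complex.mul_conj,
    ← Complex.ofReal_inv, Complex.re_ofReal_mul, Complex.normSq_eq_norm_sq, div_eq_inv_mul]

/-- `exp (-ψ_{W₀}(V))`. -/
noncomputable def expNegPotential {m n : Type*} [Fintype m] [Fintype n] [DecidableEq n]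
    (W₀ V : Matrix m n ℂ) : ℝ :=
  (‖(W₀ᴴ * V - 1).det‖ ^ 2)⁻¹ * ((1 - Vᴴ * V).det).re

section Potential

variable {m n : Type*} [Fintype m] [Fintype n] [DecidableEq n] {W₀ W : Matrix m n ℂ}

theorem expNegPotential_pos (hW₀ : (1 - W₀ᴴ * W₀).PosSemidef) (hW : (1 - Wᴴ * W).PosDef) :
    0 < expNegPotential W₀ W := by
  have hβ := det_conjTranspose_mul_sub_one_ne_zero hW₀ hW
  have hδ : 0 < ((1 - Wᴴ * W).det).re := by simpa using (Complex.lt_def.mp hW.det_pos).1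
  unfold expNegPotential
  positivity

theorem Matrix.IsIndefUnitaryBlocks.expNegPotential_moebius [DecidableEq m]
    {a : Matrix m m ℂ} {b : Matrix m n ℂ} {c : Matrix n m ℂ} {d : Matrix n n ℂ}
    (h : IsIndefUnitaryBlocks a b c d) (hfix : a * W₀ + b = W₀ * (c * W₀ + d))
    (hW : (1 - Wᴴ * W).PosDef) :
    expNegPotential W₀ (moebius a b c d W) =
      (‖(d - W₀ᴴ * b).det‖ ^ 2)⁻¹ * expNegPotential W₀ W := by
  have hK := h.isUnit_det_denom hW
  have hk : ‖(c * W + d).det‖ ≠ 0 := norm_ne_zero_iff.mpr hK.ne_zero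
  unfold expNegPotential
  rw [h.conjTranspose_mul_moebius_sub_one hfix hK, h.one_sub_conjTranspose_mul_self_moebius hK]
  simp only [det_mul, det_conjTranspose, det_nonsing_inv, Ring.inverse_eq_inv']
  rw [Complex.re_star_inv_mul_mul_inv, norm_mul, norm_mul, norm_inv]
  field_simp

end Potential

/-- If `L = [[a,b],[c,d]] ∈ U(p,q)` fixes `W₀` in the closure of `D^I_{p,q}`, then the
Kähler potential `ψ_{W₀}(W) = −log(|det(W₀ᴴW − I)|⁻² det(I − WᴴW))` satisfies
`ψ_{W₀}(L(W)) = ψ_{W₀}(W) + log |det(d − W₀ᴴ b)|²` for all `W ∈ D^I_{p,q}`. -/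
theorem stmt4 (p q : ℕ)
    (a : Matrix (Fin p) (Fin p) ℂ) (b : Matrix (Fin p) (Fin q) ℂ)
    (c : Matrix (Fin q) (Fin p) ℂ) (d : Matrix (Fin q) (Fin q) ℂ)
    (hL : (Matrix.fromBlocks a b c d)ᴴ * Matrix.fromBlocks 1 0 0 (-1) *
        Matrix.fromBlocks a b c d = Matrix.fromBlocks 1 0 0 (-1))
    (W₀ : Matrix (Fin p) (Fin q) ℂ) (hW₀ : (1 - W₀ᴴ * W₀).PosSemidef)
    (hfix : (a * W₀ + b) * (c * W₀ + d)⁻¹ = W₀)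
    (W : Matrix (Fin p) (Fin q) ℂ) (hW : (1 - Wᴴ * W).PosDef)
    (ψ : Matrix (Fin p) (Fin q) ℂ → ℝ)
    (hψ : ∀ V, ψ V =
      - Real.log ((‖(W₀ᴴ * V - 1).det‖ ^ 2)⁻¹ * ((1 - Vᴴ * V).det).re)) :
    ψ ((a * W + b) * (c * W + d)⁻¹) = ψ W + Real.log (‖(d - W₀ᴴ * b).det‖ ^ 2) := by
  have hL' := IsIndefUnitaryBlocks.of_fromBlocks hL
  have hfix' := mul_eq_of_moebius_eq hfix hL'.isUnit_det_bottom_right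
  have hα := (hL'.isUnit_det_sub_of_fixed hfix').ne_zero
  have hψ' : ∀ V, ψ V = -Real.log (expNegPotential W₀ V) := hψ
  rw [hψ', hψ', ← moebius, hL'.expNegPotential_moebius hfix' hW,
    Real.log_mul (by positivity) (expNegPotential_pos hW₀ hW).ne', Real.log_inv]
  ring
end

section
/- Let N ∈ su(E, Ω) be nilpotent of height m (i.e. N^{m+1} = 0, N^m ≠ 0). Then E admits an N-invariant Ω-orthogonal decomposition E = Y ⊕ Z such that the restriction of N to Y is uniform of height m (all Jordan blocks of N on Y have size m+1) and Z ⊆ ker(N^m). -/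
/-!
Induct over nondegenerate `N`-invariant subspaces `W`. If `N ^ m` does not vanish on `W`,
polarization gives `u ∈ W` with `Ω (N ^ m u) u ≠ 0`. Skewness gives
`Ω (N ^ i u) (N ^ j u) = ± Ω (N ^ (i + j) u) u`, which vanishes for `i + j > m` but not for
`i + j = m`; hence the span of `u, N u, …, N ^ m u` is nondegenerate and `N` is uniform of
height `m` on it. Its orthogonal complement in `W` is again nondegenerate, `N`-invariant and
strictly smaller, and the induction continues there until `N ^ m` vanishes on what is left.
-/

open Module Submodule LinearMap

section General

variable {R M : Type*}

theorem Module.End.invtSubmodule_le_invtSubmodule_pow [Semiring R] [AddCommMonoid M]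
    [Module R M] (f : Module.End R M) (n : ℕ) : f.invtSubmodule ≤ (f ^ n).invtSubmodule :=
  fun W hW ↦ by
    rw [Module.End.mem_invtSubmodule_iff_mapsTo, Module.End.coe_pow]
    exact Set.MapsTo.iterate hW n

theorem Module.End.map_pow_le_ker_inf [Semiring R] [AddCommMonoid M] [Module R M]
    {f : Module.End R M} {m : ℕ} (hf : f ^ (m + 1) = 0) {Y : Submodule R M}
    (hY : Y ∈ f.invtSubmodule) : Y.map (f ^ m) ≤ ker f ⊓ Y := by
  rintro _ ⟨y, hy, rfl⟩
  refine ⟨mem_ker.2 ?_, f.invtSubmodule_le_invtSubmodule_pow m hY hy⟩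
  rw [← Module.End.mul_apply, ← pow_succ', hf, LinearMap.zero_apply]

theorem Module.End.ker_inf_sup_of_disjoint [Ring R] [AddCommGroup M] [Module R M]
    {f : Module.End R M} {Y₁ Y₂ : Submodule R M} (h₁ : Y₁ ∈ f.invtSubmodule)
    (h₂ : Y₂ ∈ f.invtSubmodule) (h : Disjoint Y₁ Y₂) :
    ker f ⊓ (Y₁ ⊔ Y₂) = ker f ⊓ Y₁ ⊔ ker f ⊓ Y₂ := by
  refine le_antisymm ?_ (sup_le (inf_le_inf_left _ le_sup_left) (inf_le_inf_left _ le_sup_right))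
  rintro x ⟨hx, hxY⟩
  obtain ⟨y₁, hy₁, y₂, hy₂, rfl⟩ := mem_sup.1 hxY
  have hfy : f y₁ = -f y₂ := eq_neg_of_add_eq_zero_left (by simpa using hx)
  have hfy₁ : f y₁ = 0 := disjoint_def.1 h _ (h₁ hy₁) (hfy ▸ Y₂.neg_mem (h₂ hy₂))
  have hfy₂ : f y₂ = 0 := by simpa [hfy₁] using hfy
  exact add_mem_sup ⟨hfy₁, hy₁⟩ ⟨hfy₂, hy₂⟩

end General

section CyclicSubmodule

variable {R M : Type*} [Semiring R] [AddCommMonoid M] [Module R M]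

def cyclicSubmodule (f : Module.End R M) (u : M) : Submodule R M :=
  span R (Set.range fun k ↦ (f ^ k) u)

variable (f : Module.End R M) (u : M)

theorem cyclicSubmodule_eq_span_sup_map :
    cyclicSubmodule f u = R ∙ u ⊔ (cyclicSubmodule f u).map f := by
  conv_lhs => rw [cyclicSubmodule, ← Nat.range_of_succ, span_union]
  rw [cyclicSubmodule, Submodule.map_span, ← Set.range_comp]
  congr 3
  ext k
  simp [pow_succ']

theorem map_pow_cyclicSubmodule (d : ℕ) :
    (cyclicSubmodule f u).map (f ^ d) =
      R ∙ (f ^ d) u ⊔ (cyclicSubmodule f u).map (f ^ (d + 1)) := by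
  conv_lhs => rw [cyclicSubmodule_eq_span_sup_map]
  rw [Submodule.map_sup, Submodule.map_span, Set.image_singleton, ← map_comp,
    ← Module.End.mul_eq_comp, ← pow_succ]

theorem pow_apply_mem_cyclicSubmodule (k : ℕ) : (f ^ k) u ∈ cyclicSubmodule f u :=
  subset_span ⟨k, rfl⟩

theorem cyclicSubmodule_mem_invtSubmodule : cyclicSubmodule f u ∈ f.invtSubmodule := by
  rw [Module.End.mem_invtSubmodule_iff_map_le]
  conv_rhs => rw [cyclicSubmodule_eq_span_sup_map f u]
  exact le_sup_right

variable {f u}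

theorem cyclicSubmodule_le {W : Submodule R M} (hW : W ∈ f.invtSubmodule) (hu : u ∈ W) :
    cyclicSubmodule f u ≤ W := by
  rw [cyclicSubmodule, span_le]
  rintro _ ⟨k, rfl⟩
  exact f.invtSubmodule_le_invtSubmodule_pow k hW hu

end CyclicSubmodule

section Sesquilinear

variable {E : Type*} [AddCommGroup E] [Module ℂ E]

theorem LinearMap.eq_zero_of_apply_self_eq_zero (C : E →ₗ[ℂ] E →ₗ⋆[ℂ] ℂ) {W : Submodule ℂ E}
    (h : ∀ x ∈ W, C x x = 0) {x y : E} (hx : x ∈ W) (hy : y ∈ W) : C x y = 0 := by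
  have h₁ := h _ (W.add_mem hx hy)
  have h₂ := h _ (W.add_mem hx (W.smul_mem Complex.I hy))
  simp only [map_add, map_smul, map_smulₛₗ, add_apply, smul_apply, smul_eq_mul, h x hx,
    h y hy, Complex.conj_I] at h₁ h₂
  linear_combination h₁ / 2 + Complex.I * h₂ / 2 + (C x y - C y x) / 2 * Complex.I_sq

def IsNondegenerateOn (B : E →ₗ[ℂ] E →ₗ⋆[ℂ] ℂ) (W : Submodule ℂ E) : Prop :=
  ∀ w ∈ W, (∀ w' ∈ W, B w w' = 0) → w = 0

namespace IsNondegenerateOn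

variable {B : E →ₗ[ℂ] E →ₗ⋆[ℂ] ℂ} {W Y₁ Y₂ : Submodule ℂ E}

theorem bot : IsNondegenerateOn B ⊥ := fun _ hw _ ↦ (mem_bot ℂ).1 hw

theorem disjoint_orthogonalBilin (hB : B.IsRefl) (hW : IsNondegenerateOn B W) :
    Disjoint W (W.orthogonalBilin B) :=
  disjoint_def.2 fun _ hw hw' ↦ hW _ hw fun _ hz ↦ hB _ _ (hw' _ hz)

theorem sup (hB : B.IsRefl) (h₁ : IsNondegenerateOn B Y₁) (h₂ : IsNondegenerateOn B Y₂)
    (h : Y₂ ≤ Y₁.orthogonalBilin B) : IsNondegenerateOn B (Y₁ ⊔ Y₂) := by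
  intro x hx hperp
  obtain ⟨y₁, hy₁, y₂, hy₂, rfl⟩ := mem_sup.1 hx
  have e₁ : y₁ = 0 := h₁ _ hy₁ fun y hy ↦ by
    simpa [hB _ _ (h hy₂ y hy)] using hperp y (mem_sup_left hy)
  have e₂ : y₂ = 0 := h₂ _ hy₂ fun y hy ↦ by
    simpa [h hy y₁ hy₁] using hperp y (mem_sup_right hy)
  rw [e₁, e₂, add_zero]

theorem exists_apply_self_ne_zero {T : Module.End ℂ E} (hW : IsNondegenerateOn B W)
    (hT : W ∈ T.invtSubmodule) (hWT : ¬ W ≤ ker T) : ∃ u ∈ W, B (T u) u ≠ 0 := by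
  by_contra! h
  exact hWT fun w hw ↦ hW _ (hT hw) fun w' hw' ↦ (B ∘ₗ T).eq_zero_of_apply_self_eq_zero h hw hw'

end IsNondegenerateOn

/-- `LinearMap.BilinForm.isCompl_orthogonal_iff_disjoint` is only available for bilinear forms;
a sesquilinear `B` and its real part have the same orthogonal complements, because
`re (B (I • y) x) = - im (B y x)`. -/
def reBilin (B : E →ₗ[ℂ] E →ₗ⋆[ℂ] ℂ) : LinearMap.BilinForm ℝ E :=
  LinearMap.mk₂ ℝ (fun x y ↦ (B x y).re) (by simp) (by simp) (by simp)
    (fun c x y ↦ by simp [← Complex.coe_smul])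

section Hermitian

variable {B : E →ₗ[ℂ] E →ₗ⋆[ℂ] ℂ}

theorem reBilin_apply (x y : E) : reBilin B x y = (B x y).re := rfl

theorem orthogonal_reBilin (Y : Submodule ℂ E) :
    (reBilin B).orthogonal (Y.restrictScalars ℝ) = (Y.orthogonalBilin B).restrictScalars ℝ := by
  ext x
  simp only [LinearMap.BilinForm.mem_orthogonal_iff, restrictScalars_mem,
    mem_orthogonalBilin_iff, reBilin_apply]
  refine ⟨fun h y hy ↦ Complex.ext (h y hy) ?_, fun h y hy ↦ by simp [h y hy]⟩
  simpa using h (Complex.I • y) (Y.smul_mem _ hy)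

theorem isRefl_of_conj_symm (hB : ∀ x y, starRingEnd ℂ (B x y) = B y x) : B.IsRefl :=
  fun x y h ↦ by rw [← hB, h, map_zero]

theorem isRefl_reBilin (hB : ∀ x y, starRingEnd ℂ (B x y) = B y x) : (reBilin B).IsRefl :=
  fun x y h ↦ by rw [reBilin_apply, ← hB, Complex.conj_re]; exact h

variable [FiniteDimensional ℂ E] {W Y : Submodule ℂ E}

theorem IsNondegenerateOn.isCompl_orthogonalBilin (hB : ∀ x y, starRingEnd ℂ (B x y) = B y x)
    (hY : IsNondegenerateOn B Y) : IsCompl Y (Y.orthogonalBilin B) := by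
  rw [← isCompl_restrictScalars_iff ℝ, ← orthogonal_reBilin,
    LinearMap.BilinForm.isCompl_orthogonal_iff_disjoint (isRefl_reBilin hB),
    orthogonal_reBilin, disjoint_restrictScalars_iff]
  exact hY.disjoint_orthogonalBilin (isRefl_of_conj_symm hB)

theorem IsNondegenerateOn.inf_orthogonalBilin (hB : ∀ x y, starRingEnd ℂ (B x y) = B y x)
    (hW : IsNondegenerateOn B W) (hY : IsNondegenerateOn B Y) (hYW : Y ≤ W) :
    IsNondegenerateOn B (W ⊓ Y.orthogonalBilin B) := by
  rintro z ⟨hzW, hzY⟩ hperp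
  refine hW z hzW fun w hw ↦ ?_
  obtain ⟨y, hy, z', hz', rfl⟩ :=
    mem_sup.1 ((hY.isCompl_orthogonalBilin hB).sup_eq_top ▸ mem_top : w ∈ Y ⊔ Y.orthogonalBilin B)
  have hz'W : z' ∈ W := by simpa using W.sub_mem hw (hYW hy)
  rw [map_add, isRefl_of_conj_symm hB _ _ (hzY y hy), hperp z' ⟨hz'W, hz'⟩, add_zero]

end Hermitian

section Skew

variable {B : E →ₗ[ℂ] E →ₗ⋆[ℂ] ℂ} {N : Module.End ℂ E}

theorem LinearMap.IsAdjointPair.apply_pow_left (hN : IsAdjointPair B B N (-N)) (j : ℕ)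
    (x y : E) : B ((N ^ j) x) y = (-1) ^ j * B x ((N ^ j) y) := by
  induction j generalizing y with
  | zero => simp
  | succ j ih =>
    have hcomm : (N ^ j) (N y) = N ((N ^ j) y) := LinearMap.congr_fun (pow_mul_comm' N j) y
    rw [pow_succ', Module.End.mul_apply, Module.End.mul_apply, hN, ih, Pi.neg_apply, map_neg,
      map_neg, hcomm]
    ring

theorem LinearMap.IsAdjointPair.orthogonalBilin_mem_invtSubmodule
    (hN : IsAdjointPair B B N (-N)) {Y : Submodule ℂ E} (hY : Y ∈ N.invtSubmodule) :
    Y.orthogonalBilin B ∈ N.invtSubmodule := fun z hz y hy ↦ by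
  simpa [hz _ (hY hy)] using (hN y z).symm

variable {m : ℕ} {u : E}

theorem mem_map_pow_succ_cyclicSubmodule (hN : IsAdjointPair B B N (-N))
    (hnil : N ^ (m + 1) = 0) (hu : B ((N ^ m) u) u ≠ 0) {d : ℕ} (hd : d ≤ m) {x : E}
    (hx : x ∈ (cyclicSubmodule N u).map (N ^ d)) (hperp : B x ((N ^ (m - d)) u) = 0) :
    x ∈ (cyclicSubmodule N u).map (N ^ (d + 1)) := by
  rw [map_pow_cyclicSubmodule] at hx
  obtain ⟨y, hy, z, hz, rfl⟩ := mem_sup.1 hx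
  obtain ⟨a, rfl⟩ := mem_span_singleton.1 hy
  -- pairing with `N ^ (m - d) u` kills `z` and detects the coefficient `a`
  have hz₀ : B z ((N ^ (m - d)) u) = 0 := by
    obtain ⟨w, -, rfl⟩ := hz
    rw [hN.apply_pow_left, ← Module.End.mul_apply, ← pow_add,
      show d + 1 + (m - d) = m + 1 by omega, hnil]
    simp
  have hd₀ : B ((N ^ d) u) ((N ^ (m - d)) u) ≠ 0 := by
    rw [hN.apply_pow_left, ← Module.End.mul_apply, ← pow_add, show d + (m - d) = m by omega]
    rw [hN.apply_pow_left] at hu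
    exact mul_ne_zero (pow_ne_zero _ (by norm_num)) (right_ne_zero_of_mul hu)
  have ha : a = 0 := by simpa [hz₀, hd₀] using hperp
  simpa [ha] using hz

theorem mem_map_pow_cyclicSubmodule (hN : IsAdjointPair B B N (-N)) (hnil : N ^ (m + 1) = 0)
    (hu : B ((N ^ m) u) u ≠ 0) {x : E} (hx : x ∈ cyclicSubmodule N u) {d : ℕ} (hd : d ≤ m + 1)
    (hperp : ∀ j, m < j + d → B x ((N ^ j) u) = 0) :
    x ∈ (cyclicSubmodule N u).map (N ^ d) := by
  induction d with
  | zero => simpa using hx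
  | succ d ih =>
    exact mem_map_pow_succ_cyclicSubmodule hN hnil hu (by omega)
      (ih (by omega) fun j hj ↦ hperp j (by omega)) (hperp _ (by omega))

theorem isNondegenerateOn_cyclicSubmodule (hN : IsAdjointPair B B N (-N))
    (hnil : N ^ (m + 1) = 0) (hu : B ((N ^ m) u) u ≠ 0) :
    IsNondegenerateOn B (cyclicSubmodule N u) := fun x hx hperp ↦ by
  simpa [hnil] using mem_map_pow_cyclicSubmodule hN hnil hu hx le_rfl
    fun j _ ↦ hperp _ (pow_apply_mem_cyclicSubmodule N u j)

theorem ker_inf_cyclicSubmodule_le (hN : IsAdjointPair B B N (-N)) (hnil : N ^ (m + 1) = 0)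
    (hu : B ((N ^ m) u) u ≠ 0) :
    ker N ⊓ cyclicSubmodule N u ≤ (cyclicSubmodule N u).map (N ^ m) := by
  rintro x ⟨hxN, hx⟩
  refine mem_map_pow_cyclicSubmodule hN hnil hu hx (by omega) fun j hj ↦ ?_
  obtain ⟨i, rfl⟩ : ∃ i, j = i + 1 := Nat.exists_eq_add_one.2 (by omega)
  have h := hN x ((N ^ i) u)
  rw [mem_ker.1 hxN, map_zero, LinearMap.zero_apply, Pi.neg_apply, map_neg,
    ← Module.End.mul_apply, ← pow_succ'] at h
  exact neg_eq_zero.1 h.symm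

end Skew

structure IsUniformSummand (B : E →ₗ[ℂ] E →ₗ⋆[ℂ] ℂ) (N : Module.End ℂ E) (m : ℕ)
    (Y : Submodule ℂ E) : Prop where
  mem_invtSubmodule : Y ∈ N.invtSubmodule
  isNondegenerateOn : IsNondegenerateOn B Y
  map_pow_eq : Y.map (N ^ m) = ker N ⊓ Y

namespace IsUniformSummand

variable {B : E →ₗ[ℂ] E →ₗ⋆[ℂ] ℂ} {N : Module.End ℂ E} {m : ℕ} {Y₁ Y₂ : Submodule ℂ E}

theorem bot : IsUniformSummand B N m ⊥ := ⟨Module.End.invtSubmodule.bot_mem N, .bot, by simp⟩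

theorem sup (hB : B.IsRefl) (h₁ : IsUniformSummand B N m Y₁) (h₂ : IsUniformSummand B N m Y₂)
    (h : Y₂ ≤ Y₁.orthogonalBilin B) : IsUniformSummand B N m (Y₁ ⊔ Y₂) where
  mem_invtSubmodule :=
    Module.End.invtSubmodule.sup_mem h₁.mem_invtSubmodule h₂.mem_invtSubmodule
  isNondegenerateOn := h₁.isNondegenerateOn.sup hB h₂.isNondegenerateOn h
  map_pow_eq := by
    rw [Submodule.map_sup, h₁.map_pow_eq, h₂.map_pow_eq, ← Module.End.ker_inf_sup_of_disjoint
      h₁.mem_invtSubmodule h₂.mem_invtSubmodule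
      ((h₁.isNondegenerateOn.disjoint_orthogonalBilin hB).mono_right h)]

end IsUniformSummand

theorem isUniformSummand_cyclicSubmodule {B : E →ₗ[ℂ] E →ₗ⋆[ℂ] ℂ} {N : Module.End ℂ E} {m : ℕ}
    {u : E} (hN : IsAdjointPair B B N (-N)) (hnil : N ^ (m + 1) = 0)
    (hu : B ((N ^ m) u) u ≠ 0) : IsUniformSummand B N m (cyclicSubmodule N u) where
  mem_invtSubmodule := cyclicSubmodule_mem_invtSubmodule N u
  isNondegenerateOn := isNondegenerateOn_cyclicSubmodule hN hnil hu
  map_pow_eq := (N.map_pow_le_ker_inf hnil (cyclicSubmodule_mem_invtSubmodule N u)).antisymm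
    (ker_inf_cyclicSubmodule_le hN hnil hu)

theorem exists_isUniformSummand_le [FiniteDimensional ℂ E] {B : E →ₗ[ℂ] E →ₗ⋆[ℂ] ℂ}
    (hB : ∀ x y, starRingEnd ℂ (B x y) = B y x) {N : Module.End ℂ E}
    (hN : IsAdjointPair B B N (-N)) {m : ℕ} (hnil : N ^ (m + 1) = 0) (W : Submodule ℂ E)
    (hWN : W ∈ N.invtSubmodule) (hW : IsNondegenerateOn B W) :
    ∃ Y ≤ W, IsUniformSummand B N m Y ∧ W ⊓ Y.orthogonalBilin B ≤ ker (N ^ m) := by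
  induction W using WellFoundedLT.induction with
  | ind W ih =>
  by_cases hWm : W ≤ ker (N ^ m)
  · exact ⟨⊥, bot_le, .bot, inf_le_left.trans hWm⟩
  obtain ⟨u, huW, hu⟩ :=
    hW.exists_apply_self_ne_zero (N.invtSubmodule_le_invtSubmodule_pow m hWN) hWm
  have hY₁ := isUniformSummand_cyclicSubmodule hN hnil hu
  have hY₁W : cyclicSubmodule N u ≤ W := cyclicSubmodule_le hWN huW
  have hlt : W ⊓ (cyclicSubmodule N u).orthogonalBilin B < W :=
    SetLike.lt_iff_le_and_exists.2 ⟨inf_le_left, u, huW,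
      fun hu' ↦ hu (hu'.2 _ (pow_apply_mem_cyclicSubmodule N u m))⟩
  obtain ⟨Y₂, hY₂W, hY₂, hZ⟩ := ih _ hlt
    (Module.End.invtSubmodule.inf_mem hWN
      (hN.orthogonalBilin_mem_invtSubmodule hY₁.mem_invtSubmodule))
    (hW.inf_orthogonalBilin hB hY₁.isNondegenerateOn hY₁W)
  refine ⟨_, sup_le hY₁W (hY₂W.trans inf_le_left),
    hY₁.sup (isRefl_of_conj_symm hB) hY₂ (hY₂W.trans inf_le_right), le_trans ?_ hZ⟩
  exact le_inf (inf_le_inf_left _ (orthogonalBilin_le le_sup_left))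
    (inf_le_right.trans (orthogonalBilin_le le_sup_right))

def sesqFormOfConjSymm (Ω : E → E → ℂ) (hadd : ∀ u u' v, Ω (u + u') v = Ω u v + Ω u' v)
    (hsmul : ∀ (a : ℂ) (u v : E), Ω (a • u) v = a * Ω u v)
    (hconj : ∀ u v, starRingEnd ℂ (Ω u v) = Ω v u) : E →ₗ[ℂ] E →ₗ⋆[ℂ] ℂ :=
  LinearMap.mk₂'ₛₗ (RingHom.id ℂ) (starRingEnd ℂ) Ω hadd hsmul
    (fun u v v' ↦ by rw [← hconj, hadd, map_add, hconj, hconj])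
    (fun a u v ↦ by rw [← hconj, hsmul, map_mul, hconj, smul_eq_mul])

end Sesquilinear

/-- Burgoyne–Cushman splitting: a nilpotent skew-Hermitian `N` of height `m` admits an
`N`-invariant `Ω`-orthogonal decomposition `E = Y ⊕ Z` with `N|_Y` uniform of height `m`
(i.e. `ker(N|_Y) = N^m Y` and `N^m Y ≠ 0`), `Ω` non-degenerate on `Y`, and
`Z ⊆ ker(N^m)`. -/
theorem stmt7 {E : Type*} [AddCommGroup E] [Module ℂ E] [FiniteDimensional ℂ E]
    (Ω : E → E → ℂ)
    (hΩadd : ∀ u u' v, Ω (u + u') v = Ω u v + Ω u' v)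
    (hΩsmul : ∀ (a : ℂ) (u v : E), Ω (a • u) v = a * Ω u v)
    (hΩherm : ∀ u v, (starRingEnd ℂ) (Ω u v) = Ω v u)
    (hΩnd : ∀ u, (∀ v, Ω u v = 0) → u = 0)
    (N : Module.End ℂ E)
    (hskew : ∀ u v, Ω (N u) v + Ω u (N v) = 0)
    (m : ℕ) (hnil : N ^ (m + 1) = 0) (hht : N ^ m ≠ 0) :
    ∃ Y Z : Submodule ℂ E,
      IsCompl Y Z ∧
      (∀ x ∈ Y, N x ∈ Y) ∧ (∀ x ∈ Z, N x ∈ Z) ∧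
      (∀ y ∈ Y, ∀ z ∈ Z, Ω y z = 0) ∧
      (∀ y ∈ Y, (∀ y' ∈ Y, Ω y y' = 0) → y = 0) ∧
      Submodule.map (N ^ m) Y = LinearMap.ker N ⊓ Y ∧
      Submodule.map (N ^ m) Y ≠ ⊥ ∧
      Z ≤ LinearMap.ker (N ^ m) := by
  set B := sesqFormOfConjSymm Ω hΩadd hΩsmul hΩherm
  have hN : IsAdjointPair B B N (-N) := fun x y ↦ by
    rw [Pi.neg_apply, map_neg]
    exact eq_neg_of_add_eq_zero_left (hskew x y)
  obtain ⟨Y, -, hY, hZ⟩ := exists_isUniformSummand_le (B := B) hΩherm hN hnil ⊤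
    (Module.End.invtSubmodule.top_mem N) fun w _ h ↦ hΩnd w fun v ↦ h v mem_top
  rw [top_inf_eq] at hZ
  have hYZ := hY.isNondegenerateOn.isCompl_orthogonalBilin (B := B) hΩherm
  refine ⟨Y, Y.orthogonalBilin B, hYZ, hY.mem_invtSubmodule,
    hN.orthogonalBilin_mem_invtSubmodule hY.mem_invtSubmodule, fun y hy z hz ↦ hz y hy,
    hY.isNondegenerateOn, hY.map_pow_eq, fun hbot ↦ hht ?_, hZ⟩
  rw [← ker_eq_top, eq_top_iff, ← hYZ.sup_eq_top]
  exact sup_le (le_ker_iff_map.2 hbot) hZ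
end

section
/- Let N be a nilpotent skew-Hermitian endomorphism of (E, Ω) that is uniform of height m. For j ≥ 0 define the Hermitian forms τ_j(u,v) = Ω((iN)^j u, v). Then there exists a complement F of NE in E such that E = F ⊕ NF ⊕ ⋯ ⊕ N^m F (direct sum), the restriction of τ_j to F vanishes for all 0 ≤ j ≤ m−1, and the restriction of τ_m to F is non-degenerate. -/
open Module LinearMap

set_option linter.unusedSectionVars false
set_option maxHeartbeats 1000000

namespace Stmt8Aux

variable {E : Type*} [AddCommGroup E] [Module ℂ E]



variable {E : Type*} [AddCommGroup E] [Module ℂ E]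

theorem omega_zero_left (Ω : E → E → ℂ)
    (hΩsmul : ∀ (a : ℂ) (u v : E), Ω (a • u) v = a * Ω u v) (v : E) :
    Ω 0 v = 0 := by
  have := hΩsmul 0 0 v
  simpa using this

theorem omega_addr (Ω : E → E → ℂ)
    (hΩadd : ∀ u u' v, Ω (u + u') v = Ω u v + Ω u' v)
    (hΩherm : ∀ u v, (starRingEnd ℂ) (Ω u v) = Ω v u)
    (u v w : E) : Ω u (v + w) = Ω u v + Ω u w := by
  have h := hΩadd v w u
  rw [← hΩherm u v, ← hΩherm u w, ← map_add] at h
  rw [← hΩherm u (v + w)] at h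
  exact (starRingEnd ℂ).injective h

theorem omega_smulr (Ω : E → E → ℂ)
    (hΩsmul : ∀ (a : ℂ) (u v : E), Ω (a • u) v = a * Ω u v)
    (hΩherm : ∀ u v, (starRingEnd ℂ) (Ω u v) = Ω v u)
    (a : ℂ) (u v : E) : Ω u (a • v) = (starRingEnd ℂ) a * Ω u v := by
  have h := hΩsmul a v u
  rw [← hΩherm u (a • v), ← hΩherm u v] at h
  have := congrArg (starRingEnd ℂ) h
  simpa [map_mul] using this

theorem omega_zero_right (Ω : E → E → ℂ)
    (hΩsmul : ∀ (a : ℂ) (u v : E), Ω (a • u) v = a * Ω u v)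
    (hΩherm : ∀ u v, (starRingEnd ℂ) (Ω u v) = Ω v u)
    (u : E) : Ω u 0 = 0 := by
  have := omega_smulr Ω hΩsmul hΩherm 0 u 0
  simpa using this






theorem omega_pow (Ω : E → E → ℂ) (N : Module.End ℂ E)
    (hskew : ∀ u v, Ω (N u) v + Ω u (N v) = 0) :
    ∀ (s : ℕ) (u v : E), Ω u ((N ^ s) v) = (-1 : ℂ) ^ s * Ω ((N ^ s) u) v := by
  intro s
  induction s with
  | zero => intro u v; simp
  | succ s ih =>
    intro u v
    have h1 : (N ^ (s + 1)) v = (N ^ s) (N v) := by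
      rw [pow_succ]; rfl
    have h2 : (N ((N ^ s) u)) = (N ^ (s + 1)) u := by
      rw [pow_succ']; rfl
    rw [h1, ih u (N v)]
    have h3 : Ω ((N ^ s) u) (N v) = - Ω ((N ^ (s+1)) u) v := by
      rw [← h2]
      have := hskew ((N ^ s) u) v
      linear_combination this
    rw [h3, pow_succ]
    ring

theorem ker_pow_le (N : Module.End ℂ E) (m : ℕ) (hnil : N ^ (m + 1) = 0)
    (hunif : LinearMap.ker N = LinearMap.range (N ^ m)) :
    ∀ k, k ≤ m → LinearMap.ker (N ^ k) ≤ LinearMap.range (N ^ (m + 1 - k)) := by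
  intro k
  induction k with
  | zero =>
    intro _ u hu
    simp only [pow_zero, LinearMap.mem_ker, Module.End.one_apply] at hu
    subst hu
    exact zero_mem _
  | succ k ih =>
    intro hk u hu
    have hk' : k ≤ m := by omega
    have hNu : N u ∈ LinearMap.ker (N ^ k) := by
      simp only [LinearMap.mem_ker] at hu ⊢
      have : (N ^ (k + 1)) u = (N ^ k) (N u) := by rw [pow_succ]; rfl
      rw [← this, hu]
    obtain ⟨w, hw⟩ := ih hk' hNu
    -- N u = N^{m+1-k} w = N (N^{m-k} w)
    have hexp : N ^ (m + 1 - k) = N * N ^ (m - k) := by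
      rw [← pow_succ']
      congr 1
      omega
    have h2 : N (u - (N ^ (m - k)) w) = 0 := by
      have : N ((N ^ (m - k)) w) = (N ^ (m + 1 - k)) w := by rw [hexp]; rfl
      rw [map_sub, this, hw, sub_self]
    have h3 : u - (N ^ (m - k)) w ∈ LinearMap.range (N ^ m) := by
      rw [← hunif]; exact h2
    obtain ⟨z, hz⟩ := h3
    have hexp2 : N ^ m = N ^ (m - k) * N ^ k := by
      rw [← pow_add]; congr 1; omega
    refine ⟨(N ^ k) z + w, ?_⟩
    have hgoal : m + 1 - (k + 1) = m - k := by omega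
    rw [hgoal, map_add]
    have : (N ^ (m - k)) ((N ^ k) z) = (N ^ m) z := by rw [hexp2]; rfl
    rw [this, hz]
    abel






/-- For any complement `F` of `NE`, the form `Ω(N^m ·,·)` is nondegenerate on `F`. -/
theorem nondeg_on_compl (Ω : E → E → ℂ)
    (hΩadd : ∀ u u' v, Ω (u + u') v = Ω u v + Ω u' v)
    (hΩsmul : ∀ (a : ℂ) (u v : E), Ω (a • u) v = a * Ω u v)
    (hΩherm : ∀ u v, (starRingEnd ℂ) (Ω u v) = Ω v u)
    (hΩnd : ∀ u, (∀ v, Ω u v = 0) → u = 0)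
    (N : Module.End ℂ E)
    (hskew : ∀ u v, Ω (N u) v + Ω u (N v) = 0)
    (m : ℕ) (hnil : N ^ (m + 1) = 0)
    (hunif : LinearMap.ker N = LinearMap.range (N ^ m))
    (F : Submodule ℂ E) (hF : IsCompl F (LinearMap.range N))
    (u : E) (hu : u ∈ F) (h0 : ∀ v ∈ F, Ω ((N ^ m) u) v = 0) : u = 0 := by
  have hall : ∀ v : E, Ω ((N ^ m) u) v = 0 := by
    intro v
    have hv : v ∈ F ⊔ LinearMap.range N := by rw [hF.codisjoint.eq_top]; trivial
    obtain ⟨f, hf, z, hz, rfl⟩ := Submodule.mem_sup.1 hv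
    obtain ⟨w, rfl⟩ := hz
    rw [omega_addr Ω hΩadd hΩherm, h0 f hf]
    have h1 : Ω ((N ^ m) u) (N w) = - Ω ((N ^ (m + 1)) u) w := by
      have := omega_pow Ω N hskew 1 ((N ^ m) u) w
      have e1 : N ((N ^ m) u) = (N ^ (m + 1)) u := by rw [pow_succ']; rfl
      simp only [pow_one] at this
      rw [this, e1]; ring
    rw [h1, hnil]
    simp [omega_zero_left Ω hΩsmul]
  have hker : (N ^ m) u = 0 := hΩnd _ hall
  have humem : u ∈ LinearMap.range N := by
    have h := ker_pow_le N m hnil hunif m le_rfl (by simpa [LinearMap.mem_ker] using hker)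
    rwa [show m + 1 - m = 1 by omega, pow_one] at h
  exact (Submodule.disjoint_def.1 hF.disjoint) u hu humem

/-- Any complement of `NE` generates an internal direct sum decomposition. -/
theorem isInternal_of_compl
    (N : Module.End ℂ E)
    (m : ℕ) (hnil : N ^ (m + 1) = 0)
    (hunif : LinearMap.ker N = LinearMap.range (N ^ m))
    (F : Submodule ℂ E) (hF : IsCompl F (LinearMap.range N)) :
    DirectSum.IsInternal (fun j : Fin (m + 1) => Submodule.map (N ^ (j : ℕ)) F) := by
  have hker : LinearMap.ker (N ^ m) ≤ LinearMap.range N := by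
    have h := ker_pow_le N m hnil hunif m le_rfl
    rwa [show m + 1 - m = 1 by omega, pow_one] at h
  -- spanning
  have hsup : ⨆ j : Fin (m + 1), Submodule.map (N ^ (j : ℕ)) F = ⊤ := by
    have key : ∀ d, d ≤ m + 1 → LinearMap.range (N ^ (m + 1 - d)) ≤
        ⨆ j : Fin (m + 1), Submodule.map (N ^ (j : ℕ)) F := by
      intro d
      induction d with
      | zero =>
        intro _
        simp only [Nat.sub_zero, hnil]
        rintro x ⟨y, rfl⟩
        simp only [LinearMap.zero_apply]
        exact zero_mem _
      | succ d ih =>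
        intro hd
        rintro x ⟨y, rfl⟩
        set a := m + 1 - (d + 1) with ha
        have haa : a ≤ m := by omega
        have hy : y ∈ F ⊔ LinearMap.range N := by rw [hF.codisjoint.eq_top]; trivial
        obtain ⟨f, hf, z, hz, rfl⟩ := Submodule.mem_sup.1 hy
        obtain ⟨w, rfl⟩ := hz
        rw [map_add]
        refine add_mem ?_ ?_
        · exact Submodule.mem_iSup_of_mem ⟨a, by omega⟩ ⟨f, hf, rfl⟩
        · have e1 : (N ^ a) (N w) = (N ^ (m + 1 - d)) w := by
            have : N ^ (m + 1 - d) = N ^ a * N := by rw [← pow_succ]; congr 1; omega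
            rw [this]; rfl
          rw [e1]
          exact ih (by omega) ⟨w, rfl⟩
    have h := key (m + 1) le_rfl
    rw [Nat.sub_self, pow_zero] at h
    exact top_le_iff.mp (by simpa [Module.End.one_eq_id, LinearMap.range_id] using h)
  -- all-zero lemma
  have allzero : ∀ v : Fin (m + 1) → E, (∀ j : Fin (m + 1), v j ∈ Submodule.map (N ^ (j : ℕ)) F) →
      (∑ j, v j) = 0 → ∀ i, v i = 0 := by
    intro v hv hsum
    have key : ∀ t : ℕ, ∀ i : Fin (m + 1), (i : ℕ) < t → v i = 0 := by
      intro t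
      induction t with
      | zero => intro i hi; omega
      | succ t ih =>
        intro i hi
        rcases Nat.lt_or_ge (i : ℕ) t with h | h
        · exact ih i h
        have hit : (i : ℕ) = t := by omega
        have htm : t ≤ m := by omega
        -- apply N^{m-t} to the sum
        have hNsum : ∑ j, (N ^ (m - t)) (v j) = 0 := by
          rw [← map_sum, hsum, map_zero]
        have hzero : ∀ j : Fin (m + 1), j ≠ i → (N ^ (m - t)) (v j) = 0 := by
          intro j hj
          rcases Nat.lt_or_ge (j : ℕ) t with hjt | hjt
          · rw [ih j hjt, map_zero]
          · -- j > t (since j ≠ i, j ≥ t, and i = t)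
            have hjgt : t < (j : ℕ) := by
              rcases Nat.eq_or_lt_of_le hjt with he | hl
              · exfalso; exact hj (Fin.ext (by omega))
              · exact hl
            obtain ⟨f, _, hveq⟩ := hv j
            rw [← hveq]
            have h2 : (N ^ (m - t)) ((N ^ (j : ℕ)) f) = (N ^ (m - t + (j : ℕ))) f := by
              rw [pow_add]; rfl
            rw [h2]
            have hbig : N ^ (m - t + (j : ℕ)) = 0 :=
              pow_eq_zero_of_le (by omega) hnil
            rw [hbig]; rfl
        have hvi : (N ^ (m - t)) (v i) = 0 := by
          rw [Finset.sum_eq_single i (fun j _ hj => hzero j hj) (by simp)] at hNsum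
          exact hNsum
        obtain ⟨f, hfF, hveq⟩ := hv i
        rw [← hveq] at hvi ⊢
        have : (N ^ m) f = 0 := by
          have e : (N ^ (m - t)) ((N ^ (i : ℕ)) f) = (N ^ m) f := by
            rw [← Module.End.mul_apply, ← pow_add]
            congr 2
            omega
          rw [← e, hvi]
        have hfr : f ∈ LinearMap.range N := hker (by simpa [LinearMap.mem_ker] using this)
        have : f = 0 := (Submodule.disjoint_def.1 hF.disjoint) f hfF hfr
        rw [this, map_zero]
    intro i
    exact key (m + 1) i i.isLt
  -- independence
  have hindep : iSupIndep (fun j : Fin (m + 1) => Submodule.map (N ^ (j : ℕ)) F) := by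
    intro i
    rw [disjoint_iff, Submodule.eq_bot_iff]
    intro x hx
    rw [Submodule.mem_inf] at hx
    obtain ⟨hxi, hxrest⟩ := hx
    rw [Submodule.mem_iSup_iff_exists_finsupp] at hxrest
    obtain ⟨g, hg, hgsum⟩ := hxrest
    classical
    have hgsum' : ∑ j, g j = x := by
      rwa [Finsupp.sum_fintype _ _ (fun _ => rfl)] at hgsum
    have hgi : g i = 0 := by
      have h := hg i
      rw [iSup_neg (by simp)] at h
      simpa using h
    set v : Fin (m + 1) → E := Function.update g i (-x) with hvdef
    have hvmem : ∀ j : Fin (m + 1), v j ∈ Submodule.map (N ^ (j : ℕ)) F := by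
      intro j
      by_cases hji : j = i
      · subst hji
        simp only [v, Function.update_self]
        exact neg_mem hxi
      · simp only [v, Function.update_of_ne hji]
        have h := hg j
        rwa [iSup_pos hji] at h
    have hvsum : ∑ j, v j = 0 := by
      rw [Finset.sum_update_of_mem (Finset.mem_univ i)]
      rw [Finset.sum_sdiff_eq_sub (by simp)]
      rw [hgsum']
      simp [hgi]
    have hz := allzero v hvmem hvsum i
    simp only [v, Function.update_self, neg_eq_zero] at hz
    exact hz
  exact DirectSum.isInternal_submodule_of_iSupIndep_of_iSup_eq_top hindep hsup


def dform (Ω : E → E → ℂ)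
    (hΩadd : ∀ u u' v, Ω (u + u') v = Ω u v + Ω u' v)
    (hΩsmul : ∀ (a : ℂ) (u v : E), Ω (a • u) v = a * Ω u v)
    (hΩherm : ∀ u v, (starRingEnd ℂ) (Ω u v) = Ω v u)
    (A : Module.End ℂ E) (F : Submodule ℂ E) : ↥F →ₗ[ℝ] Module.Dual ℂ ↥F where
  toFun u :=
    { toFun := fun v => Ω ↑v (A ↑u)
      map_add' := fun v w => hΩadd ↑v ↑w (A ↑u)
      map_smul' := fun a v => by simpa using hΩsmul a ↑v (A ↑u) }
  map_add' u u' := by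
    ext v
    simp only [LinearMap.coe_mk, AddHom.coe_mk, LinearMap.add_apply]
    rw [Submodule.coe_add, map_add]
    exact omega_addr Ω hΩadd hΩherm ↑v (A ↑u) (A ↑u')
  map_smul' r u := by
    ext v
    simp only [LinearMap.coe_mk, AddHom.coe_mk, RingHom.id_apply, LinearMap.smul_apply]
    have h1 : ((r • u : ↥F) : E) = (r : ℂ) • (↑u : E) := rfl
    rw [h1, map_smul, omega_smulr Ω hΩsmul hΩherm]
    simp [Complex.real_smul]

@[simp] theorem dform_apply (Ω : E → E → ℂ) (h1 h2 h3) (A : Module.End ℂ E)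
    (F : Submodule ℂ E) (u v : ↥F) :
    dform Ω h1 h2 h3 A F u v = Ω ↑v (A ↑u) := rfl

theorem step [FiniteDimensional ℂ E] (Ω : E → E → ℂ)
    (hΩadd : ∀ u u' v, Ω (u + u') v = Ω u v + Ω u' v)
    (hΩsmul : ∀ (a : ℂ) (u v : E), Ω (a • u) v = a * Ω u v)
    (hΩherm : ∀ u v, (starRingEnd ℂ) (Ω u v) = Ω v u)
    (hΩnd : ∀ u, (∀ v, Ω u v = 0) → u = 0)
    (N : Module.End ℂ E)
    (hskew : ∀ u v, Ω (N u) v + Ω u (N v) = 0)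
    (m : ℕ) (hnil : N ^ (m + 1) = 0)
    (hunif : LinearMap.ker N = LinearMap.range (N ^ m))
    (k : ℕ) (hk : k < m)
    (F : Submodule ℂ E) (hF : IsCompl F (LinearMap.range N))
    (hvan : ∀ j, k + 1 ≤ j → j < m → ∀ u ∈ F, ∀ v ∈ F, Ω ((N ^ j) u) v = 0) :
    ∃ F' : Submodule ℂ E, IsCompl F' (LinearMap.range N) ∧
      ∀ j, k ≤ j → j < m → ∀ u ∈ F', ∀ v ∈ F', Ω ((N ^ j) u) v = 0 := by
  classical
  have habr := omega_addr Ω hΩadd hΩherm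
  have hpow := omega_pow Ω N hskew
  have hz1 := omega_zero_left Ω hΩsmul
  -- existence of the correcting operator T
  obtain ⟨T, hT⟩ : ∃ T : ↥F →ₗ[ℂ] ↥F, ∀ x v : ↥F,
      Ω ↑v ((N ^ m) ↑(T x)) = (-(1/2) : ℂ) * Ω ↑v ((N ^ k) ↑x) := by
    set Dm := dform Ω hΩadd hΩsmul hΩherm (N ^ m) F with hDmdef
    set G := dform Ω hΩadd hΩsmul hΩherm (N ^ k) F with hGdef
    have hDminj : Function.Injective Dm := by
      rw [← LinearMap.ker_eq_bot]
      rw [LinearMap.ker_eq_bot']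
      intro u hu
      have h0 : ∀ v ∈ F, Ω ((N ^ m) ↑u) v = 0 := by
        intro v hv
        have h := DFunLike.congr_fun hu (⟨v, hv⟩ : ↥F)
        simp only [hDmdef, dform_apply, LinearMap.zero_apply] at h
        rw [← hΩherm, h, map_zero]
      have := nondeg_on_compl Ω hΩadd hΩsmul hΩherm hΩnd N hskew m hnil hunif F hF
        ↑u u.2 h0
      exact Subtype.ext this
    have hfr : finrank ℝ ↥F = finrank ℝ (Module.Dual ℂ ↥F) := by
      rw [finrank_real_of_complex, finrank_real_of_complex, Subspace.dual_finrank_eq]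
    have hDsurj : Function.Surjective Dm :=
      (LinearMap.injective_iff_surjective_of_finrank_eq_finrank hfr).mp hDminj
    set e := LinearEquiv.ofBijective Dm ⟨hDminj, hDsurj⟩ with hedef
    set T0 : ↥F → ↥F := fun x => e.symm ((-(1/2) : ℝ) • G x) with hT0def
    have he_app : ∀ x : ↥F, Dm (T0 x) = (-(1/2) : ℝ) • G x := by
      intro x
      have : e (T0 x) = (-(1/2) : ℝ) • G x := e.apply_symm_apply _
      exact this
    have hT0 : ∀ x v : ↥F, Ω ↑v ((N ^ m) ↑(T0 x)) = (-(1/2) : ℂ) * Ω ↑v ((N ^ k) ↑x) := by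
      intro x v
      have h := DFunLike.congr_fun (he_app x) v
      simp only [hDmdef, hGdef, dform_apply, LinearMap.smul_apply] at h
      rw [h, Complex.real_smul]
      norm_num
    -- complex-linearity of T0
    have hsmul_c : ∀ (c : ℂ) (A : Module.End ℂ E) (u : ↥F),
        dform Ω hΩadd hΩsmul hΩherm A F (c • u) =
          (starRingEnd ℂ) c • dform Ω hΩadd hΩsmul hΩherm A F u := by
      intro c A u
      ext v
      simp only [dform_apply, LinearMap.smul_apply, smul_eq_mul]
      rw [Submodule.coe_smul, map_smul]
      exact omega_smulr Ω hΩsmul hΩherm c ↑v (A ↑u)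
    have hT0_smul : ∀ (c : ℂ) (x : ↥F), T0 (c • x) = c • T0 x := by
      intro c x
      apply hDminj
      rw [he_app (c • x)]
      have h1 : Dm (c • T0 x) = (starRingEnd ℂ) c • Dm (T0 x) := hsmul_c c _ _
      rw [h1, he_app x, hGdef, hsmul_c c _ x]
      rw [smul_comm]
    have hT0_add : ∀ x y : ↥F, T0 (x + y) = T0 x + T0 y := by
      intro x y
      simp only [hT0def, map_add, smul_add]
    exact ⟨{ toFun := T0, map_add' := hT0_add, map_smul' := hT0_smul }, hT0⟩
  -- the corrected subspace
  set Φ : ↥F →ₗ[ℂ] E := F.subtype + (N ^ (m - k)) ∘ₗ (F.subtype ∘ₗ T) with hΦdef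
  have hΦ : ∀ x : ↥F, Φ x = ↑x + (N ^ (m - k)) ↑(T x) := fun x => rfl
  set F' := LinearMap.range Φ with hF'def
  have hNrange : ∀ z : E, (N ^ (m - k)) z ∈ LinearMap.range N := by
    intro z
    have h : (N ^ (m - k)) z = N ((N ^ (m - k - 1)) z) := by
      rw [show m - k = (m - k - 1) + 1 by omega, pow_succ']
      rfl
    exact ⟨(N ^ (m - k - 1)) z, h.symm⟩
  have hcompl : IsCompl F' (LinearMap.range N) := by
    constructor
    · rw [Submodule.disjoint_def]
      rintro x ⟨a, rfl⟩ hxr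
      have ha : (↑a : E) ∈ LinearMap.range N := by
        have h2 : (↑a : E) = Φ a - (N ^ (m - k)) ↑(T a) := by rw [hΦ]; abel
        rw [h2]
        exact sub_mem hxr (hNrange _)
      have : (↑a : E) = 0 := (Submodule.disjoint_def.1 hF.disjoint) ↑a a.2 ha
      have ha0 : a = 0 := Subtype.ext this
      rw [ha0, map_zero]
    · rw [codisjoint_iff, eq_top_iff]
      intro x _
      have hx : x ∈ F ⊔ LinearMap.range N := by rw [hF.codisjoint.eq_top]; trivial
      obtain ⟨f, hf, z, hz, rfl⟩ := Submodule.mem_sup.1 hx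
      apply Submodule.mem_sup.2
      refine ⟨Φ ⟨f, hf⟩, ⟨⟨f, hf⟩, rfl⟩, z - (N ^ (m - k)) ↑(T ⟨f, hf⟩),
        sub_mem hz (hNrange _), ?_⟩
      rw [hΦ]
      abel
  refine ⟨F', hcompl, ?_⟩
  rintro j hkj hjm u' ⟨a, rfl⟩ v' ⟨b, rfl⟩
  rw [hΦ, hΦ]
  have hexp1 : ∀ (s t : ℕ) (w : E), (N ^ s) ((N ^ t) w) = (N ^ (s + t)) w := by
    intro s t w
    rw [pow_add]
    rfl
  rw [map_add, hexp1 j (m - k)]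
  rw [hΩadd, habr, habr]
  -- names
  set Ta : E := ↑(T a) with hTa
  set Tb : E := ↑(T b) with hTb
  have hbig : ∀ s : ℕ, m + 1 ≤ s → N ^ s = 0 := fun s hs => pow_eq_zero_of_le hs hnil
  rcases Nat.eq_or_lt_of_le hkj with hje | hjl
  · -- j = k
    subst hje
    have e1 : (N ^ (k + (m - k))) Ta = (N ^ m) Ta := by
      rw [show k + (m - k) = m from by omega]
    rw [e1]
    have ht2 : Ω ((N ^ m) Ta) ↑b = (-(1/2) : ℂ) * Ω ((N ^ k) ↑a) ↑b := by
      have h := hT a b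
      have h2 := congrArg (starRingEnd ℂ) h
      rw [map_mul, hΩherm, hΩherm] at h2
      have hc2 : (starRingEnd ℂ) (-(1/2) : ℂ) = -(1/2) := by
        rw [map_neg, map_div₀, map_one, map_ofNat]
      rw [h2, hc2]
    have hmb : Ω ((N ^ m) ↑a) Tb
        = ((-1 : ℂ) ^ m * (-(1/2)) * ((-1 : ℂ) ^ k * Ω ((N ^ k) ↑a) ↑b)) := by
      have h := hT b a
      rw [hpow m ↑a Tb, hpow k ↑a ↑b] at h
      have hsq : (-1 : ℂ) ^ m * (-1 : ℂ) ^ m = 1 := by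
        rw [← pow_add, ← two_mul, pow_mul]
        norm_num
      calc Ω ((N ^ m) ↑a) Tb
          = (-1 : ℂ) ^ m * ((-1 : ℂ) ^ m * Ω ((N ^ m) ↑a) Tb) := by
            rw [← mul_assoc, hsq, one_mul]
        _ = _ := by rw [h]; ring
    have hc : (-1 : ℂ) ^ (m - k) * ((-1 : ℂ) ^ m * (-(1/2)) * (-1 : ℂ) ^ k)
        = (-(1/2) : ℂ) := by
      have h1 : (-1 : ℂ) ^ (m - k) * (-1 : ℂ) ^ k = (-1 : ℂ) ^ m := by
        rw [← pow_add]
        congr 1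
        omega
      have h2 : (-1 : ℂ) ^ m * (-1 : ℂ) ^ m = 1 := by
        rw [← pow_add, ← two_mul, pow_mul]
        norm_num
      calc (-1 : ℂ) ^ (m - k) * ((-1 : ℂ) ^ m * (-(1/2)) * (-1 : ℂ) ^ k)
          = ((-1 : ℂ) ^ (m - k) * (-1 : ℂ) ^ k) * (-1 : ℂ) ^ m * (-(1/2)) := by ring
        _ = (-1 : ℂ) ^ m * (-1 : ℂ) ^ m * (-(1/2)) := by rw [h1]
        _ = -(1/2) := by rw [h2]; ring
    have ht3 : Ω ((N ^ k) ↑a) ((N ^ (m - k)) Tb)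
        = (-(1/2) : ℂ) * Ω ((N ^ k) ↑a) ↑b := by
      rw [hpow (m - k) ((N ^ k) ↑a) Tb, hexp1 (m - k) k ↑a,
        show m - k + k = m from by omega, hmb]
      calc (-1 : ℂ) ^ (m - k) * ((-1 : ℂ) ^ m * (-(1/2)) * ((-1 : ℂ) ^ k * Ω ((N ^ k) ↑a) ↑b))
          = ((-1 : ℂ) ^ (m - k) * ((-1 : ℂ) ^ m * (-(1/2)) * (-1 : ℂ) ^ k)) * Ω ((N ^ k) ↑a) ↑b := by
            ring
        _ = (-(1/2) : ℂ) * Ω ((N ^ k) ↑a) ↑b := by rw [hc]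
    have ht4 : Ω ((N ^ m) Ta) ((N ^ (m - k)) Tb) = 0 := by
      rw [hpow (m - k) ((N ^ m) Ta) Tb, hexp1 (m - k) m Ta,
        hbig (m - k + m) (by omega)]
      simp [hz1]
    rw [ht2, ht3, ht4]
    ring
  · -- j > k
    have ht1 : Ω ((N ^ j) ↑a) ↑b = 0 := hvan j hjl hjm ↑a a.2 ↑b b.2
    have hYz : (N ^ (j + (m - k))) Ta = 0 := by
      rw [hbig (j + (m - k)) (by omega)]
      rfl
    have ht3 : Ω ((N ^ j) ↑a) ((N ^ (m - k)) Tb) = 0 := by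
      rw [hpow (m - k) ((N ^ j) ↑a) Tb, hexp1 (m - k) j ↑a,
        hbig (m - k + j) (by omega)]
      simp [hz1]
    rw [ht1, ht3, hYz, hz1, hz1]
    ring

theorem good_compl [FiniteDimensional ℂ E] (Ω : E → E → ℂ)
    (hΩadd : ∀ u u' v, Ω (u + u') v = Ω u v + Ω u' v)
    (hΩsmul : ∀ (a : ℂ) (u v : E), Ω (a • u) v = a * Ω u v)
    (hΩherm : ∀ u v, (starRingEnd ℂ) (Ω u v) = Ω v u)
    (hΩnd : ∀ u, (∀ v, Ω u v = 0) → u = 0)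
    (N : Module.End ℂ E)
    (hskew : ∀ u v, Ω (N u) v + Ω u (N v) = 0)
    (m : ℕ) (hnil : N ^ (m + 1) = 0)
    (hunif : LinearMap.ker N = LinearMap.range (N ^ m)) :
    ∃ F : Submodule ℂ E, IsCompl F (LinearMap.range N) ∧
      ∀ j < m, ∀ u ∈ F, ∀ v ∈ F, Ω ((N ^ j) u) v = 0 := by
  have key : ∀ d : ℕ, ∃ F : Submodule ℂ E, IsCompl F (LinearMap.range N) ∧
      ∀ j, m - d ≤ j → j < m → ∀ u ∈ F, ∀ v ∈ F, Ω ((N ^ j) u) v = 0 := by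
    intro d
    induction d with
    | zero =>
      obtain ⟨F, hF⟩ := Submodule.exists_isCompl (LinearMap.range N)
      exact ⟨F, hF.symm, fun j hj1 hj2 => absurd hj2 (by omega)⟩
    | succ d ih =>
      obtain ⟨F, hF, hvan⟩ := ih
      by_cases hd : d < m
      · have hk : m - (d + 1) < m := by omega
        obtain ⟨F', hF', hvan'⟩ := step Ω hΩadd hΩsmul hΩherm hΩnd N hskew m hnil hunif
          (m - (d + 1)) hk F hF (fun j hj1 hj2 => hvan j (by omega) hj2)
        exact ⟨F', hF', fun j hj1 hj2 => hvan' j hj1 hj2⟩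
      · exact ⟨F, hF, fun j hj1 hj2 => hvan j (by omega) hj2⟩
  obtain ⟨F, hF, hvan⟩ := key m
  exact ⟨F, hF, fun j hj => hvan j (by omega) hj⟩

end Stmt8Aux

/-- For `N` nilpotent skew-Hermitian and uniform of height `m` (i.e. `N^{m+1} = 0` and
`ker N = N^m E`), there is a complement `F` of `NE` with
`E = F ⊕ NF ⊕ ⋯ ⊕ N^m F`, `τ_j = Ω((iN)^j ·, ·)` vanishing on `F` for `j < m`,
and `τ_m` non-degenerate on `F`. -/
theorem stmt8 {E : Type*} [AddCommGroup E] [Module ℂ E] [FiniteDimensional ℂ E]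
    (Ω : E → E → ℂ)
    (hΩadd : ∀ u u' v, Ω (u + u') v = Ω u v + Ω u' v)
    (hΩsmul : ∀ (a : ℂ) (u v : E), Ω (a • u) v = a * Ω u v)
    (hΩherm : ∀ u v, (starRingEnd ℂ) (Ω u v) = Ω v u)
    (hΩnd : ∀ u, (∀ v, Ω u v = 0) → u = 0)
    (N : Module.End ℂ E)
    (hskew : ∀ u v, Ω (N u) v + Ω u (N v) = 0)
    (m : ℕ) (hnil : N ^ (m + 1) = 0)
    (hunif : LinearMap.ker N = LinearMap.range (N ^ m)) :
    ∃ F : Submodule ℂ E,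
      IsCompl F (LinearMap.range N) ∧
      DirectSum.IsInternal (fun j : Fin (m + 1) => Submodule.map (N ^ (j : ℕ)) F) ∧
      (∀ j < m, ∀ u ∈ F, ∀ v ∈ F, Ω (((Complex.I • N) ^ j) u) v = 0) ∧
      (∀ u ∈ F, (∀ v ∈ F, Ω (((Complex.I • N) ^ m) u) v = 0) → u = 0) := by
  obtain ⟨F, hF, hvan⟩ := Stmt8Aux.good_compl Ω hΩadd hΩsmul hΩherm hΩnd N hskew m hnil hunif
  have hIN : ∀ (j : ℕ) (u : E), ((Complex.I • N) ^ j) u = (Complex.I ^ j) • ((N ^ j) u) := by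
    intro j u
    rw [smul_pow]
    rfl
  refine ⟨F, hF, Stmt8Aux.isInternal_of_compl N m hnil hunif F hF, ?_, ?_⟩
  · intro j hj u hu v hv
    rw [hIN, hΩsmul, hvan j hj u hu v hv, mul_zero]
  · intro u hu h0
    apply Stmt8Aux.nondeg_on_compl Ω hΩadd hΩsmul hΩherm hΩnd N hskew m hnil hunif F hF u hu
    intro v hv
    have h := h0 v hv
    rw [hIN, hΩsmul] at h
    rcases mul_eq_zero.1 h with h | h
    · exact absurd h (pow_ne_zero _ Complex.I_ne_zero)
    · exact h
end

section
/- Let N be a nilpotent skew-Hermitian endomorphism of (E, Ω) with a single Jordan block (i.e. dim(E/NE) = 1, dim E = n). Then there exists a Jordan basis e_1, …, e_n for N (with N e_j = e_{j−1}, N e_1 = 0) in which the matrix of Ω is antidiagonal: Ω(e_j, e_k) = 0 unless j + k = n + 1. -/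
/-!
Take `v` with `N ^ (n - 1) v ≠ 0`. Then `N ^ (n - 1) v, …, N v, v` is a Jordan basis, and
skewness gives `Ω (N ^ a v) (N ^ b v) = ± Ω v (N ^ (a + b) v)`, so it suffices to make the moments
`Ω v (N ^ k v)` vanish for `k ≠ n - 1`. For `k ≥ n` they vanish since `N ^ n = 0`, while
nondegeneracy forces `Ω v (N ^ (n - 1) v) ≠ 0`. The moments below `n - 1` are killed from the top
down: with `p = n - 1 - k`, replacing `v` by `v + c • N ^ p v` leaves the moments above `k`
unchanged and adds `(c̄ + (-1) ^ p c) Ω v (N ^ (n - 1) v)` to the `k`-th one. As conjugation acts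
on the `k`-th moment by the sign `(-1) ^ k`, some `c` makes it zero.
-/

open Module ComplexConjugate

section CyclicVector

variable {K V : Type*} [Field K] [AddCommGroup V] [Module K V] {N : Module.End K V}

theorem linearIndependent_pow_apply {v : V} {m : ℕ} (hv0 : (N ^ (m + 1)) v = 0)
    (hv : (N ^ m) v ≠ 0) : LinearIndependent K fun i : Fin (m + 1) => (N ^ (i : ℕ)) v := by
  induction m generalizing v with
  | zero => simpa [linearIndependent_unique_iff] using hv
  | succ m ih =>
    have htail : Fin.tail (fun i : Fin (m + 2) => (N ^ (i : ℕ)) v) =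
        fun i : Fin (m + 1) => (N ^ (i : ℕ)) (N v) := by
      funext i
      simp [Fin.tail, pow_succ]
    have hspan : Submodule.span K (Set.range fun i : Fin (m + 1) => (N ^ (i : ℕ)) (N v)) ≤
        LinearMap.ker (N ^ (m + 1)) := by
      refine Submodule.span_le.2 ?_
      rintro _ ⟨i, rfl⟩
      rw [SetLike.mem_coe, LinearMap.mem_ker, ← Module.End.mul_apply, ← Module.End.mul_apply,
        mul_assoc, ← pow_succ, ← pow_add]
      exact Module.End.pow_map_zero_of_le (by omega) hv0
    rw [linearIndependent_finSucc, htail]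
    refine ⟨ih ?_ ?_, fun hmem => hv (hspan hmem)⟩
    · rwa [← Module.End.mul_apply, ← pow_succ]
    · rwa [← Module.End.mul_apply, ← pow_succ]

noncomputable def cyclicBasis {v : V} {m : ℕ} (hv0 : (N ^ (m + 1)) v = 0) (hv : (N ^ m) v ≠ 0)
    (hm : finrank K V = m + 1) : Basis (Fin (m + 1)) K V :=
  basisOfLinearIndependentOfCardEqFinrank
    ((linearIndependent_pow_apply hv0 hv).comp Fin.rev Fin.rev_injective)
    (by rw [Fintype.card_fin, hm])

variable {v : V} {m : ℕ} (hv0 : (N ^ (m + 1)) v = 0) (hv : (N ^ m) v ≠ 0)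
  (hm : finrank K V = m + 1)

theorem cyclicBasis_apply (i : Fin (m + 1)) : cyclicBasis hv0 hv hm i = (N ^ (m - i)) v := by
  simp [cyclicBasis, Fin.val_rev]

theorem apply_cyclicBasis (i : Fin (m + 1)) :
    N (cyclicBasis hv0 hv hm i) =
      if 0 < (i : ℕ) then cyclicBasis hv0 hv hm ⟨i - 1, by omega⟩ else 0 := by
  simp only [cyclicBasis_apply, ← Module.End.mul_apply, ← pow_succ']
  split_ifs with hi
  · congr 2
    omega
  · rwa [show m - i + 1 = m + 1 by omega]

end CyclicVector

theorem exists_conj_add_neg_one_pow_mul_eq {z : ℂ} (p : ℕ) (hz : conj z = (-1) ^ p * z) :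
    ∃ c : ℂ, conj c + (-1) ^ p * c = z := by
  refine ⟨(-1) ^ p * z / 2, ?_⟩
  have hsq : ((-1 : ℂ) ^ p) ^ 2 = 1 := by rw [pow_right_comm, neg_one_sq, one_pow]
  simp only [map_div₀, map_mul, map_pow, map_neg, map_one, map_ofNat, hz]
  linear_combination z * hsq

def sesqFormOfHermitian {E : Type*} [AddCommGroup E] [Module ℂ E] (Ω : E → E → ℂ)
    (hadd : ∀ u u' v, Ω (u + u') v = Ω u v + Ω u' v)
    (hsmul : ∀ (a : ℂ) (u v : E), Ω (a • u) v = a * Ω u v)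
    (herm : ∀ u v, conj (Ω u v) = Ω v u) : E →ₗ[ℂ] E →ₗ⋆[ℂ] ℂ :=
  LinearMap.mk₂'ₛₗ (RingHom.id ℂ) (starRingEnd ℂ) Ω hadd hsmul
    (fun u v v' => by rw [← herm, hadd, map_add, herm, herm])
    (fun a u v => by rw [← herm, hsmul, map_mul, herm]; rfl)

namespace LinearMap

variable {E : Type*} [AddCommGroup E] [Module ℂ E] (B : E →ₗ[ℂ] E →ₗ⋆[ℂ] ℂ) {N : Module.End ℂ E}

theorem apply_pow_left (hN : ∀ u v, B (N u) v + B u (N v) = 0) (a : ℕ) (u v : E) :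
    B ((N ^ a) u) v = (-1) ^ a * B u ((N ^ a) v) := by
  induction a generalizing u with
  | zero => simp
  | succ a ih =>
    rw [pow_succ N, Module.End.mul_apply, ih, ← (Commute.self_pow N a).eq, Module.End.mul_apply]
    linear_combination (-1) ^ a * hN u ((N ^ a) v)

theorem conj_apply_pow_self (hB : ∀ u v, conj (B u v) = B v u)
    (hN : ∀ u v, B (N u) v + B u (N v) = 0) (k : ℕ) (v : E) :
    conj (B v ((N ^ k) v)) = (-1) ^ k * B v ((N ^ k) v) := by
  rw [hB, apply_pow_left B hN]

theorem apply_add_smul_pow_self (hN : ∀ u v, B (N u) v + B u (N v) = 0) (c : ℂ) (p k : ℕ)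
    (v : E) :
    B (v + c • (N ^ p) v) ((N ^ k) (v + c • (N ^ p) v)) =
      B v ((N ^ k) v) + (conj c + (-1) ^ p * c) * B v ((N ^ (k + p)) v) +
        (-1) ^ p * c * conj c * B v ((N ^ (k + p + p)) v) := by
  simp only [map_add, map_smul, map_smulₛₗ, add_apply, smul_apply, apply_pow_left B hN p,
    ← Module.End.mul_apply, ← pow_add, smul_eq_mul]
  rw [add_comm p k, add_comm p (k + p)]
  ring

variable {m : ℕ}

theorem apply_pow_self_ne_zero (hN : ∀ u v, B (N u) v + B u (N v) = 0) (hB : B.SeparatingLeft)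
    (hNm : N ^ (m + 1) = 0) (hm : finrank ℂ E = m + 1) {v : E} (hv : (N ^ m) v ≠ 0) :
    B v ((N ^ m) v) ≠ 0 := by
  intro h
  have hv0 : (N ^ (m + 1)) v = 0 := by rw [hNm, zero_apply]
  refine hv (hB _ fun w => ?_)
  suffices B ((N ^ m) v) = 0 by rw [this, zero_apply]
  refine (cyclicBasis hv0 hv hm).ext fun i => ?_
  rw [cyclicBasis_apply, apply_pow_left B hN, ← Module.End.mul_apply, ← pow_add, zero_apply]
  rcases Nat.eq_zero_or_pos (m - i) with hi | hi
  · rw [hi, add_zero, h, mul_zero]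
  · rw [pow_eq_zero_of_le (by omega) hNm, zero_apply, map_zero, mul_zero]

theorem exists_apply_pow_self_eq_zero_Ico_of_Ioo (hB : ∀ u v, conj (B u v) = B v u)
    (hN : ∀ u v, B (N u) v + B u (N v) = 0) (hsep : B.SeparatingLeft)
    (hNm : N ^ (m + 1) = 0) (hm : finrank ℂ E = m + 1) {M : ℕ} (hM : M < m) {v : E}
    (hv : (N ^ m) v ≠ 0) (hvanish : ∀ k ∈ Set.Ioo M m, B v ((N ^ k) v) = 0) :
    ∃ w, (N ^ m) w ≠ 0 ∧ ∀ k ∈ Set.Ico M m, B w ((N ^ k) w) = 0 := by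
  obtain ⟨p, rfl⟩ : ∃ p, m = M + p := ⟨m - M, by omega⟩
  have hF := apply_pow_self_ne_zero B hN hsep hNm hm hv
  have hhigh : ∀ k, M + p < k → B v ((N ^ k) v) = 0 := fun k hk => by
    rw [pow_eq_zero_of_le hk hNm, zero_apply, map_zero]
  obtain ⟨c, hc⟩ := exists_conj_add_neg_one_pow_mul_eq p
    (z := -B v ((N ^ M) v) / B v ((N ^ (M + p)) v)) (by
      rw [map_div₀, map_neg, conj_apply_pow_self B hB hN, conj_apply_pow_self B hB hN, pow_add]
      field_simp
      rw [pow_right_comm, neg_one_sq, one_pow, mul_one])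
  refine ⟨v + c • (N ^ p) v, ?_, fun k ⟨hMk, hkm⟩ => ?_⟩
  · rwa [map_add, map_smul, ← Module.End.mul_apply, ← pow_add,
      pow_eq_zero_of_le (show M + p + 1 ≤ M + p + p by omega) hNm, zero_apply, smul_zero,
      add_zero]
  · rw [apply_add_smul_pow_self B hN, hhigh (k + p + p) (by omega), mul_zero, add_zero]
    rcases hMk.eq_or_lt with rfl | hlt
    · rw [hc]
      field_simp
      ring
    · rw [hvanish k ⟨hlt, hkm⟩, hhigh (k + p) (by omega)]
      ring

theorem exists_apply_pow_self_eq_zero_of_ne (hB : ∀ u v, conj (B u v) = B v u)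
    (hN : ∀ u v, B (N u) v + B u (N v) = 0) (hsep : B.SeparatingLeft)
    (hNm : N ^ (m + 1) = 0) (hNm' : N ^ m ≠ 0) (hm : finrank ℂ E = m + 1) :
    ∃ v, (N ^ m) v ≠ 0 ∧ ∀ k ≠ m, B v ((N ^ k) v) = 0 := by
  have hIco : ∀ M ≤ m, ∃ v, (N ^ m) v ≠ 0 ∧ ∀ k ∈ Set.Ico M m, B v ((N ^ k) v) = 0 := by
    refine fun M hM => Nat.decreasingInduction (fun M hM ⟨v, hv, hvanish⟩ =>
      exists_apply_pow_self_eq_zero_Ico_of_Ioo B hB hN hsep hNm hm hM hv hvanish) ?_ hM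
    obtain ⟨v, hv⟩ : ∃ v, (N ^ m) v ≠ 0 := by
      by_contra! h
      exact hNm' (LinearMap.ext h)
    exact ⟨v, hv, fun k hk => absurd hk.2 hk.1.not_gt⟩
  obtain ⟨v, hv, hvanish⟩ := hIco 0 m.zero_le
  refine ⟨v, hv, fun k hk => ?_⟩
  rcases hk.lt_or_gt with hlt | hgt
  · exact hvanish k ⟨k.zero_le, hlt⟩
  · rw [pow_eq_zero_of_le hgt hNm, zero_apply, map_zero]

end LinearMap

theorem stmt9_general {E : Type*} [AddCommGroup E] [Module ℂ E]
    (Ω : E → E → ℂ)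
    (hΩadd : ∀ u u' v, Ω (u + u') v = Ω u v + Ω u' v)
    (hΩsmul : ∀ (a : ℂ) (u v : E), Ω (a • u) v = a * Ω u v)
    (hΩherm : ∀ u v, (starRingEnd ℂ) (Ω u v) = Ω v u)
    (hΩnd : ∀ u, (∀ v, Ω u v = 0) → u = 0)
    (N : Module.End ℂ E)
    (hskew : ∀ u v, Ω (N u) v + Ω u (N v) = 0)
    (n : ℕ) (hn : Module.finrank ℂ E = n)
    (hNn : N ^ n = 0) (hNn1 : N ^ (n - 1) ≠ 0) :
    ∃ b : Module.Basis (Fin n) ℂ E,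
      (∀ i : Fin n, N (b i) =
        if 0 < (i : ℕ) then b ⟨(i : ℕ) - 1, lt_of_le_of_lt (Nat.sub_le _ _) i.isLt⟩ else 0) ∧
      (∀ i j : Fin n, (i : ℕ) + (j : ℕ) + 1 ≠ n → Ω (b i) (b j) = 0) := by
  obtain ⟨m, rfl⟩ : ∃ m, n = m + 1 := Nat.exists_eq_add_one.2 <| Nat.pos_of_ne_zero <| by
    rintro rfl
    exact hNn1 hNn
  set B := sesqFormOfHermitian Ω hΩadd hΩsmul hΩherm
  obtain ⟨v, hv, hmoments⟩ :=
    B.exists_apply_pow_self_eq_zero_of_ne hΩherm hskew hΩnd hNn hNn1 hn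
  have hv0 : (N ^ (m + 1)) v = 0 := by rw [hNn, LinearMap.zero_apply]
  refine ⟨cyclicBasis hv0 hv hn, apply_cyclicBasis hv0 hv hn, fun i j hij => ?_⟩
  change B _ _ = 0
  rw [cyclicBasis_apply, cyclicBasis_apply, B.apply_pow_left hskew, ← Module.End.mul_apply,
    ← pow_add, hmoments _ (by omega), mul_zero]

/-- If a nilpotent skew-Hermitian `N` on an `n`-dimensional `(E, Ω)` is a single Jordan
block (`N^n = 0`, `N^{n-1} ≠ 0`), there is a Jordan basis in which the matrix of `Ω`
is antidiagonal. -/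
theorem stmt9 {E : Type*} [AddCommGroup E] [Module ℂ E] [FiniteDimensional ℂ E]
    (Ω : E → E → ℂ)
    (hΩadd : ∀ u u' v, Ω (u + u') v = Ω u v + Ω u' v)
    (hΩsmul : ∀ (a : ℂ) (u v : E), Ω (a • u) v = a * Ω u v)
    (hΩherm : ∀ u v, (starRingEnd ℂ) (Ω u v) = Ω v u)
    (hΩnd : ∀ u, (∀ v, Ω u v = 0) → u = 0)
    (N : Module.End ℂ E)
    (hskew : ∀ u v, Ω (N u) v + Ω u (N v) = 0)
    (n : ℕ) (hn : Module.finrank ℂ E = n)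
    (hNn : N ^ n = 0) (hNn1 : N ^ (n - 1) ≠ 0) :
    ∃ b : Module.Basis (Fin n) ℂ E,
      (∀ i : Fin n, N (b i) =
        if 0 < (i : ℕ) then b ⟨(i : ℕ) - 1, lt_of_le_of_lt (Nat.sub_le _ _) i.isLt⟩ else 0) ∧
      (∀ i j : Fin n, (i : ℕ) + (j : ℕ) + 1 ≠ n → Ω (b i) (b j) = 0) :=
  stmt9_general Ω hΩadd hΩsmul hΩherm hΩnd N hskew n hn hNn hNn1
end

section
/- Let (E, Ω) be a finite-dimensional complex vector space with non-degenerate Hermitian form and let N ∈ u(E, Ω) be nilpotent. Then E admits an Ω-orthogonal decomposition into N-invariant subspaces E = ⊕_j E_j such that Ω is non-degenerate on each E_j and the restriction of N to each E_j is a single Jordan block. -/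
/-!
Work with the sesquilinear form `B x y = Ω y x` and induct on the dimension of an `N`-invariant
subspace `F` on which `B` is nondegenerate. Let `m` be largest with `N ^ m ≠ 0` on `F`; by
polarization and nondegeneracy of `F` there is `v ∈ F` with `Ω (N ^ m v) v ≠ 0`. The cyclic
subspace `W` spanned by the `N ^ i v` is nondegenerate: if `u = N ^ j (a v + N w)` lies in its
radical, which is `N`-invariant, then `0 = B v (N ^ (m - j) u) = a B v (N ^ m v)`, so `a = 0`;
inductively the radical lies in `N ^ (m + 1) W = 0`. Hence `F = W ⊕ (Wᗮ ⊓ F)`, where the second summand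
is again `N`-invariant (by skewness) and nondegenerate, and one recurses. Pairwise orthogonal
nondegenerate blocks are automatically independent.
-/

open Module Submodule

namespace Module.End

variable {R V : Type*} [CommSemiring R] [AddCommMonoid V] [Module R V]

def cyclicSpan (N : End R V) (v : V) : Submodule R V :=
  span R (Set.range fun i : ℕ => (N ^ i) v)

variable (N : End R V) (v : V)

theorem pow_apply_mem_cyclicSpan (i : ℕ) : (N ^ i) v ∈ N.cyclicSpan v :=
  subset_span ⟨i, rfl⟩

theorem mem_cyclicSpan_self : v ∈ N.cyclicSpan v := by
  simpa using N.pow_apply_mem_cyclicSpan v 0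

theorem cyclicSpan_mem_invtSubmodule : N.cyclicSpan v ∈ N.invtSubmodule :=
  span_le.mpr <| by
    rintro _ ⟨i, rfl⟩
    rw [SetLike.mem_coe, mem_comap, ← mul_apply, ← pow_succ']
    exact N.pow_apply_mem_cyclicSpan v (i + 1)

theorem cyclicSpan_le {F : Submodule R V} (hF : F ∈ N.invtSubmodule) (hv : v ∈ F) :
    N.cyclicSpan v ≤ F :=
  span_le.mpr <| by
    rintro _ ⟨i, rfl⟩
    exact pow_apply_mem_of_forall_mem i hF v hv

theorem cyclicSpan_le_span_singleton_sup_map :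
    N.cyclicSpan v ≤ R ∙ v ⊔ (N.cyclicSpan v).map N :=
  span_le.mpr <| by
    rintro _ ⟨_ | i, rfl⟩
    · exact mem_sup_left (by simp [mem_span_singleton_self])
    · refine mem_sup_right ?_
      simpa only [pow_succ', mul_apply] using mem_map_of_mem (N.pow_apply_mem_cyclicSpan v i)

theorem pow_apply_eq_zero_of_mem_cyclicSpan {m : ℕ} (hv : (N ^ m) v = 0) {x : V}
    (hx : x ∈ N.cyclicSpan v) : (N ^ m) x = 0 := by
  refine N.cyclicSpan_le v (F := LinearMap.ker (N ^ m)) (fun y (hy : (N ^ m) y = 0) => ?_) hv hx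
  rw [mem_comap, LinearMap.mem_ker, ← mul_apply, pow_mul_comm', mul_apply, hy, map_zero]

end Module.End

theorem IsNilpotent.exists_pow_apply_ne_zero_pow_succ_apply_eq_zero {R V : Type*}
    [CommSemiring R] [AddCommMonoid V] [Module R V] {N : End R V} (hN : IsNilpotent N)
    {F : Submodule R V} (hF : F ≠ ⊥) :
    ∃ m, (∃ x ∈ F, (N ^ m) x ≠ 0) ∧ ∀ x ∈ F, (N ^ (m + 1)) x = 0 := by
  classical
  have hex : ∃ n, ∀ x ∈ F, (N ^ n) x = 0 := hN.imp fun n hn x _ => by rw [hn]; rfl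
  obtain ⟨m, hm⟩ : ∃ m, Nat.find hex = m + 1 := by
    refine Nat.exists_eq_add_one.mpr (Nat.pos_of_ne_zero fun h0 => hF ?_)
    exact (Submodule.eq_bot_iff F).mpr fun x hx => by simpa [h0] using Nat.find_spec hex x hx
  refine ⟨m, ?_, hm ▸ Nat.find_spec hex⟩
  simpa using Nat.find_min hex (hm ▸ Nat.lt_succ_self m)

theorem iSup_fin_cons {α : Type*} [CompleteLattice α] {k : ℕ} (a : α) (f : Fin k → α) :
    ⨆ i, (Fin.cons a f : Fin (k + 1) → α) i = a ⊔ ⨆ i, f i := by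
  rw [← (finSuccEquiv k).symm.iSup_comp, iSup_option]
  simp

namespace Submodule

variable {K V : Type*} [Field K] [AddCommGroup V] [Module K V] {J : K →+* K}
  {B : V →ₛₗ[J] V →ₗ[K] K}

theorem orthogonalBilin_sup (S T : Submodule K V) :
    (S ⊔ T).orthogonalBilin B = S.orthogonalBilin B ⊓ T.orthogonalBilin B := by
  refine le_antisymm (le_inf (orthogonalBilin_le le_sup_left) (orthogonalBilin_le le_sup_right)) ?_
  rintro y ⟨hS, hT⟩ x hx
  obtain ⟨s, hs, t, ht, rfl⟩ := mem_sup.mp hx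
  rw [map_add, LinearMap.add_apply, hS s hs, hT t ht, add_zero]

theorem le_orthogonalBilin_comm (hB : B.IsRefl) {S T : Submodule K V} :
    S ≤ T.orthogonalBilin B ↔ T ≤ S.orthogonalBilin B :=
  ⟨fun h _ ht _ hs => hB _ _ (h hs _ ht), fun h _ hs _ ht => hB _ _ (h ht _ hs)⟩

theorem isCompl_orthogonalBilin_of_disjoint {W : Submodule K V} [FiniteDimensional K W]
    (hW : Disjoint W (W.orthogonalBilin B)) : IsCompl W (W.orthogonalBilin B) := by
  let b := Module.finBasis K W
  -- `Wᗮ` is cut out by the functionals `B (b j)`, which are independent on `W`.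
  let L : V →ₗ[K] Fin (finrank K W) → K := LinearMap.pi fun j => B (b j)
  have hker : ∀ y, L y = 0 → y ∈ W.orthogonalBilin B := by
    intro y hy
    have : (B.flip y).comp W.subtype = 0 := b.ext fun j => congr_fun hy j
    exact fun x hx => LinearMap.congr_fun this ⟨x, hx⟩
  have hinj : Function.Injective (L.comp W.subtype) := by
    refine (injective_iff_map_eq_zero _).mpr fun x hx => ?_
    exact Subtype.ext (disjoint_def.mp hW x x.2 (hker x hx))
  have hsurj := (LinearMap.injective_iff_surjective_of_finrank_eq_finrank (by simp)).mp hinj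
  refine ⟨hW, codisjoint_iff.mpr (eq_top_iff.mpr fun x _ => ?_)⟩
  obtain ⟨w, hw⟩ := hsurj (L x)
  have hxw : x - w ∈ W.orthogonalBilin B := hker _ <| by
    rw [map_sub, ← hw]
    exact sub_self _
  simpa using add_mem_sup w.2 hxw

theorem iSupIndep_of_pairwise_le_orthogonalBilin {ι : Type*} {Ej : ι → Submodule K V}
    (horth : Pairwise fun i j => Ej i ≤ (Ej j).orthogonalBilin B)
    (hnd : ∀ i, Disjoint (Ej i) ((Ej i).orthogonalBilin B)) : iSupIndep Ej :=
  fun i => (hnd i).mono_right (iSup₂_le fun _ hj => horth hj)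

variable {N : End K V} (hN : ∀ x y, B (N x) y = -B x (N y))
include hN

theorem orthogonalBilin_mem_invtSubmodule {W : Submodule K V} (hW : W ∈ N.invtSubmodule) :
    W.orthogonalBilin B ∈ N.invtSubmodule := by
  intro y hy x hx
  rw [← neg_eq_zero, ← hN, hy _ (hW hx)]

theorem disjoint_cyclicSpan_orthogonalBilin {v : V} {m : ℕ} (hm : (N ^ (m + 1)) v = 0)
    (hv : B v ((N ^ m) v) ≠ 0) :
    Disjoint (N.cyclicSpan v) ((N.cyclicSpan v).orthogonalBilin B) := by
  set W := N.cyclicSpan v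
  have hWinv : W ∈ N.invtSubmodule := N.cyclicSpan_mem_invtSubmodule v
  have key : ∀ j ≤ m + 1, W ⊓ W.orthogonalBilin B ≤ W.map (N ^ j) := by
    intro j
    induction j with
    | zero => intro _; rw [pow_zero, End.one_eq_id, map_id]; exact inf_le_left
    | succ j ih =>
      intro hj u hu
      obtain ⟨w, hw, rfl⟩ := ih (by omega) hu
      obtain ⟨y, hy, _, ⟨w', hw', rfl⟩, rfl⟩ :=
        mem_sup.mp (N.cyclicSpan_le_span_singleton_sup_map v hw)
      obtain ⟨a, rfl⟩ := mem_span_singleton.mp hy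
      obtain ⟨r, rfl⟩ : ∃ r, m = j + r := ⟨m - j, by omega⟩
      have hr : (N ^ r) ((N ^ j) (a • v + N w')) = a • (N ^ (j + r)) v := by
        rw [← End.mul_apply, ← pow_add, map_add, ← End.mul_apply, ← pow_succ, add_comm r j,
          N.pow_apply_eq_zero_of_mem_cyclicSpan v hm hw', add_zero, map_smul]
      have hB0 : B v ((N ^ r) ((N ^ j) (a • v + N w'))) = 0 :=
        End.pow_apply_mem_of_forall_mem r (orthogonalBilin_mem_invtSubmodule hN hWinv) _ hu.2 v
          (N.mem_cyclicSpan_self v)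
      rw [hr, map_smul, smul_eq_mul] at hB0
      obtain rfl : a = 0 := (mul_eq_zero.mp hB0).resolve_right hv
      exact ⟨w', hw', by simp [pow_succ]⟩
  refine disjoint_iff_inf_le.mpr ((key (m + 1) le_rfl).trans ?_)
  rintro _ ⟨w, hw, rfl⟩
  exact N.pow_apply_eq_zero_of_mem_cyclicSpan v hm hw

end Submodule

theorem LinearMap.eq_zero_of_forall_apply_self_eq_zero {V : Type*} [AddCommGroup V]
    [Module ℂ V] {C : V →ₗ⋆[ℂ] V →ₗ[ℂ] ℂ} (h : ∀ x, C x x = 0) : C = 0 := by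
  ext x y
  have hxy := h (x + y)
  have hxIy := h (x + Complex.I • y)
  simp only [map_add, LinearMap.map_smulₛₗ, LinearMap.add_apply, LinearMap.smul_apply, h,
    smul_eq_mul, Complex.conj_I, RingHom.id_apply, mul_zero, zero_add, add_zero] at hxy hxIy
  simp only [LinearMap.zero_apply]
  linear_combination (hxy - Complex.I * hxIy + (C x y - C y x) * Complex.I_sq) / 2

section Hermitian

variable {E : Type*} [AddCommGroup E] [Module ℂ E] {B : E →ₗ⋆[ℂ] E →ₗ[ℂ] ℂ} {N : End ℂ E}

theorem exists_apply_pow_apply_ne_zero (hnil : IsNilpotent N) {F : Submodule ℂ E}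
    (hF : F ∈ N.invtSubmodule) (hFnd : Disjoint F (F.orthogonalBilin B)) (hF0 : F ≠ ⊥) :
    ∃ v ∈ F, ∃ m, (N ^ (m + 1)) v = 0 ∧ B v ((N ^ m) v) ≠ 0 := by
  obtain ⟨m, ⟨x, hxF, hx⟩, hm⟩ := hnil.exists_pow_apply_ne_zero_pow_succ_apply_eq_zero hF0
  by_contra! h
  have hC : (B.compl₂ (N ^ m)).domRestrict₁₂ F F = 0 :=
    LinearMap.eq_zero_of_forall_apply_self_eq_zero fun y => h y y.2 m (hm y y.2)
  refine hx (disjoint_def.mp hFnd _ (End.pow_apply_mem_of_forall_mem m hF x hxF) fun y hy => ?_)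
  exact LinearMap.congr_fun₂ hC ⟨y, hy⟩ ⟨x, hxF⟩

theorem exists_orthogonal_cyclicSpan_decomposition [FiniteDimensional ℂ E] (hB : B.IsRefl)
    (hN : ∀ x y, B (N x) y = -B x (N y)) (hnil : IsNilpotent N) (F : Submodule ℂ E)
    (hF : F ∈ N.invtSubmodule) (hFnd : Disjoint F (F.orthogonalBilin B)) :
    ∃ (k : ℕ) (Ej : Fin k → Submodule ℂ E), (⨆ j, Ej j) = F ∧
      Pairwise (fun i j => Ej i ≤ (Ej j).orthogonalBilin B) ∧
      (∀ j, Disjoint (Ej j) ((Ej j).orthogonalBilin B)) ∧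
      ∀ j, ∃ v ≠ 0, Ej j = N.cyclicSpan v := by
  induction hd : finrank ℂ F using Nat.strong_induction_on generalizing F with
  | _ d ih =>
  rcases eq_or_ne F ⊥ with rfl | hF0
  · exact ⟨0, Fin.elim0, iSup_of_empty _, fun i => i.elim0, fun i => i.elim0, fun i => i.elim0⟩
  obtain ⟨v, hvF, m, hm, hv⟩ := exists_apply_pow_apply_ne_zero hnil hF hFnd hF0
  set W := N.cyclicSpan v
  have hWinv : W ∈ N.invtSubmodule := N.cyclicSpan_mem_invtSubmodule v
  have hWnd : Disjoint W (W.orthogonalBilin B) := disjoint_cyclicSpan_orthogonalBilin hN hm hv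
  set F' := W.orthogonalBilin B ⊓ F
  have hsup : W ⊔ F' = F := by
    rw [← sup_inf_assoc_of_le _ (N.cyclicSpan_le v hF hvF),
      (isCompl_orthogonalBilin_of_disjoint hWnd).sup_eq_top, top_inf_eq]
  have hv0 : v ≠ 0 := by rintro rfl; simp at hv
  have hlt : finrank ℂ F' < d := hd ▸ Submodule.finrank_lt_finrank_of_lt
    (SetLike.lt_iff_le_and_exists.mpr ⟨inf_le_right, v, hvF,
      fun hv' => hv0 (disjoint_def.mp hWnd v (N.mem_cyclicSpan_self v) hv'.1)⟩)
  have hF'nd : Disjoint F' (F'.orthogonalBilin B) := by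
    refine disjoint_def.mpr fun x hx hx' => disjoint_def.mp hFnd x hx.2 ?_
    rw [← hsup, orthogonalBilin_sup]
    exact ⟨hx.1, hx'⟩
  obtain ⟨k, Ej, hsupE, horth, hnd, hcyc⟩ :=
    ih _ hlt F' (End.invtSubmodule.inf_mem (orthogonalBilin_mem_invtSubmodule hN hWinv) hF)
      hF'nd rfl
  have hEj : ∀ j, Ej j ≤ W.orthogonalBilin B :=
    fun j => (le_iSup Ej j).trans (hsupE.trans_le inf_le_left)
  refine ⟨k + 1, Fin.cons W Ej, ?_, ?_, ?_, ?_⟩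
  · rw [iSup_fin_cons, hsupE, hsup]
  · exact pairwise_fin_succ_iff.mpr
      ⟨hEj, fun j => (le_orthogonalBilin_comm hB).mpr (hEj j), horth⟩
  · exact Fin.forall_fin_succ.mpr ⟨hWnd, hnd⟩
  · exact Fin.forall_fin_succ.mpr ⟨⟨v, hv0, rfl⟩, hcyc⟩

end Hermitian

/-- Mathlib's sesquilinear forms are conjugate-linear in the first argument, so `Ω` is
encoded with its arguments swapped. -/
theorem exists_sesqForm_apply_eq {E : Type*} [AddCommGroup E] [Module ℂ E] (Ω : E → E → ℂ)
    (hΩadd : ∀ u u' v, Ω (u + u') v = Ω u v + Ω u' v)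
    (hΩsmul : ∀ (a : ℂ) (u v : E), Ω (a • u) v = a * Ω u v)
    (hΩherm : ∀ u v, (starRingEnd ℂ) (Ω u v) = Ω v u) :
    ∃ B : E →ₗ⋆[ℂ] E →ₗ[ℂ] ℂ, ∀ x y, B x y = Ω y x :=
  ⟨LinearMap.mk₂'ₛₗ (starRingEnd ℂ) (RingHom.id ℂ) (fun x y => Ω y x)
    (fun x x' y => by rw [← hΩherm, hΩadd, map_add, hΩherm, hΩherm])
    (fun c x y => by rw [← hΩherm, hΩsmul, map_mul, hΩherm, smul_eq_mul])
    (fun x y y' => hΩadd y y' x) (fun c x y => hΩsmul c y x), fun _ _ => rfl⟩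

/-- A nilpotent `N ∈ u(E,Ω)` admits an `Ω`-orthogonal decomposition of `E` into
`N`-invariant subspaces on each of which `Ω` is non-degenerate and `N` is a single
Jordan block (a nonzero cyclic subspace). -/
theorem stmt10 {E : Type*} [AddCommGroup E] [Module ℂ E] [FiniteDimensional ℂ E]
    (Ω : E → E → ℂ)
    (hΩadd : ∀ u u' v, Ω (u + u') v = Ω u v + Ω u' v)
    (hΩsmul : ∀ (a : ℂ) (u v : E), Ω (a • u) v = a * Ω u v)
    (hΩherm : ∀ u v, (starRingEnd ℂ) (Ω u v) = Ω v u)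
    (hΩnd : ∀ u, (∀ v, Ω u v = 0) → u = 0)
    (N : Module.End ℂ E)
    (hskew : ∀ u v, Ω (N u) v + Ω u (N v) = 0)
    (hnil : IsNilpotent N) :
    ∃ (k : ℕ) (Ej : Fin k → Submodule ℂ E),
      DirectSum.IsInternal Ej ∧
      (∀ j, ∀ x ∈ Ej j, N x ∈ Ej j) ∧
      (∀ j j', j ≠ j' → ∀ u ∈ Ej j, ∀ v ∈ Ej j', Ω u v = 0) ∧
      (∀ j, ∀ u ∈ Ej j, (∀ v ∈ Ej j, Ω u v = 0) → u = 0) ∧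
      (∀ j, ∃ v, v ∈ Ej j ∧ v ≠ 0 ∧
        Ej j = Submodule.span ℂ (Set.range fun i : ℕ => (N ^ i) v)) := by
  obtain ⟨B, hBΩ⟩ := exists_sesqForm_apply_eq Ω hΩadd hΩsmul hΩherm
  have hB : B.IsSymm := ⟨fun x y => by simp only [hBΩ]; exact hΩherm y x⟩
  have hN : ∀ x y, B (N x) y = -B x (N y) := fun x y => by
    simp only [hBΩ]
    linear_combination hskew y x
  have htop : Disjoint ⊤ ((⊤ : Submodule ℂ E).orthogonalBilin B) :=
    disjoint_def.mpr fun x _ hx => hΩnd x fun v => hBΩ v x ▸ hx v trivial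
  obtain ⟨k, Ej, hsup, horth, hnd, hcyc⟩ :=
    exists_orthogonal_cyclicSpan_decomposition hB.isRefl hN hnil ⊤ (End.invtSubmodule.top_mem N) htop
  refine ⟨k, Ej, (DirectSum.isInternal_submodule_iff_iSupIndep_and_iSup_eq_top Ej).mpr
    ⟨iSupIndep_of_pairwise_le_orthogonalBilin horth hnd, hsup⟩, fun j => ?_,
    fun j j' hjj' u hu v hv => hBΩ v u ▸ horth hjj' hu v hv,
    fun j u hu hu' => disjoint_def.mp (hnd j) u hu fun v hv => hBΩ v u ▸ hu' v hv, fun j => ?_⟩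
  all_goals obtain ⟨v, hv0, hEj⟩ := hcyc j; rw [hEj]
  · exact fun x hx => N.cyclicSpan_mem_invtSubmodule v hx
  · exact ⟨v, N.mem_cyclicSpan_self v, hv0, rfl⟩
end

section
/- Let D be an n×n complex matrix whose entries d_{j,k} vanish except possibly when j + k = n + 2 (entries on the 'second antidiagonal'). Let P(x) = det(x·I − D) be its characteristic polynomial. Then P'(0) = (−1)^{n−1+⌊(n−1)/2⌋} · ∏_{j=2}^{n} d_{j, n+2−j}. -/
open Polynomial Matrix

private lemma tri_eq (m : ℕ) : (m + 1) * m = m * (m - 1) + 2 * m := by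
  cases m with
  | zero => rfl
  | succ q => simp only [Nat.succ_sub_one]; ring

private lemma two_dvd_tri (m : ℕ) : 2 ∣ m * (m - 1) := by
  cases m with
  | zero => simp
  | succ q => simpa [Nat.mul_comm] using (Nat.even_mul_succ_self q).two_dvd

private lemma tri_parity (m : ℕ) : (m * (m - 1) / 2) % 2 = (m / 2) % 2 := by
  rcases Nat.even_or_odd m with ⟨k, hk⟩ | ⟨k, hk⟩
  · -- m = k + k
    have hd : m * (m - 1) = 2 * (k * (m - 1)) := by
      subst hk; ring
    have h2 : m * (m - 1) / 2 = k * (m - 1) := by omega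
    have hm2 : m / 2 = k := by omega
    rw [h2, hm2, Nat.mul_mod]
    rcases Nat.eq_zero_or_pos k with h0 | h0
    · subst h0; simp
    · have h3 : (m - 1) % 2 = 1 := by omega
      rw [h3, mul_one]
      omega
  · -- m = 2 * k + 1
    have hd : m * (m - 1) = 2 * (m * k) := by
      rw [show m - 1 = 2 * k from by omega]; ring
    have h2 : m * (m - 1) / 2 = m * k := by omega
    have hm1 : m % 2 = 1 := by omega
    have hm2 : m / 2 = k := by omega
    rw [h2, hm2, Nat.mul_mod, hm1, one_mul]
    omega

private lemma det_antidiag (m : ℕ) (A : Matrix (Fin m) (Fin m) ℂ)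
    (hA : ∀ i j : Fin m, (i : ℕ) + (j : ℕ) ≠ m - 1 → A i j = 0) :
    A.det = (-1 : ℂ) ^ (m * (m - 1) / 2) * ∏ i : Fin m, A i i.rev := by
  induction m with
  | zero => simp
  | succ m ih =>
    rw [Matrix.det_succ_row_zero]
    rw [Fintype.sum_eq_single (Fin.last m)]
    · have hmin : (A.submatrix Fin.succ (Fin.last m).succAbove).det =
          (-1 : ℂ) ^ (m * (m - 1) / 2) *
            ∏ i : Fin m, A i.succ (Fin.castSucc i.rev) := by
        rw [Fin.succAbove_last]
        exact ih (A.submatrix Fin.succ Fin.castSucc) (fun i j h => by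
          apply hA
          simp only [Fin.val_succ, Fin.coe_castSucc]
          omega)
      have hrev0 : (0 : Fin (m + 1)).rev = Fin.last m := by
        ext; simp
      have hprod : ∀ i : Fin m, A i.succ i.succ.rev = A i.succ (Fin.castSucc i.rev) := by
        intro i; rw [Fin.rev_succ]
      rw [hmin, Fin.prod_univ_succ, hrev0,
        Finset.prod_congr rfl (fun i (_ : i ∈ Finset.univ) => hprod i)]
      have hexp : m + m * (m - 1) / 2 = (m + 1) * (m + 1 - 1) / 2 := by
        have h1 := tri_eq m
        obtain ⟨t, ht⟩ := two_dvd_tri m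
        have h2 : (m + 1) * (m + 1 - 1) = (m + 1) * m := by
          rw [Nat.add_sub_cancel]
        omega
      simp only [Fin.val_last]
      rw [← hexp, pow_add]
      ring
    · intro j hj
      have hjm : (j : ℕ) < m :=
        lt_of_le_of_ne (Nat.lt_succ_iff.mp j.isLt) (fun h => hj (Fin.ext h))
      have h0 : A 0 j = 0 := hA 0 j (by simp only [Fin.val_zero]; omega)
      rw [h0]; ring

/-- If an `n×n` matrix `D` has nonzero entries only on the second antidiagonal
(1-based indices `j + k = n + 2`, i.e. 0-based `j + k = n`), then the derivative of its
characteristic polynomial at `0` equals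
`(−1)^{n−1+⌊(n−1)/2⌋} · ∏_{j=2}^{n} d_{j, n+2−j}`. -/
theorem stmt11 (n : ℕ) (hn : 0 < n) (D : Matrix (Fin n) (Fin n) ℂ)
    (hD : ∀ j k : Fin n, (j : ℕ) + (k : ℕ) ≠ n → D j k = 0) :
    (Polynomial.derivative D.charpoly).eval 0 =
      (-1 : ℂ) ^ (n - 1 + (n - 1) / 2) *
        ∏ i : Fin (n - 1),
          D ⟨(i : ℕ) + 1, by have := i.isLt; omega⟩ ⟨n - 1 - (i : ℕ), by have := i.isLt; omega⟩ := by
  obtain ⟨m, rfl⟩ : ∃ m, n = m + 1 := ⟨n - 1, by omega⟩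
  set A : Matrix (Fin m) (Fin m) ℂ := D.submatrix Fin.succ Fin.succ with hAdef
  -- charpoly D = X * charpoly A
  have hfac : D.charpoly = X * A.charpoly := by
    rw [Matrix.charpoly, Matrix.det_succ_row_zero]
    rw [Fintype.sum_eq_single (0 : Fin (m + 1))]
    · have h00 : charmatrix D 0 0 = X := by
        rw [charmatrix_apply_eq, hD 0 0 (by simp only [Fin.val_zero]; omega), map_zero, sub_zero]
      have hsub : (charmatrix D).submatrix Fin.succ (0 : Fin (m+1)).succAbove
          = charmatrix A := by
        rw [Fin.succAbove_zero]
        ext i j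
        by_cases h : i = j
        · subst h
          simp [charmatrix_apply_eq, hAdef]
        · rw [Matrix.submatrix_apply, charmatrix_apply_ne _ _ _ (by simpa [Fin.succ_inj] using h),
            charmatrix_apply_ne _ _ _ h]
          simp [hAdef]
      rw [hsub, h00]
      simp [Matrix.charpoly]
    · intro j hj
      have : charmatrix D 0 j = 0 := by
        rw [charmatrix_apply_ne _ _ _ (fun h => hj h.symm),
          hD 0 j (by have := j.isLt; simp only [Fin.val_zero]; omega), map_zero, neg_zero]
      rw [this]; ring
  rw [hfac]
  rw [derivative_mul, derivative_X, one_mul]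
  simp only [eval_add, eval_mul, eval_X, zero_mul, add_zero]
  rw [← Polynomial.coeff_zero_eq_eval_zero]
  have hcoeff : A.charpoly.coeff 0 = (-1 : ℂ) ^ m * A.det := by
    have := Matrix.det_eq_sign_charpoly_coeff A
    rw [Fintype.card_fin] at this
    rw [this, ← mul_assoc, ← pow_add, ← two_mul, pow_mul, neg_one_sq, one_pow, one_mul]
  rw [hcoeff, det_antidiag m A (fun i j h => by
    apply hD
    simp only [hAdef, Fin.val_succ]
    omega)]
  have hprod : (∏ i : Fin m, A i i.rev) =
      ∏ i : Fin (m + 1 - 1),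
        D ⟨(i : ℕ) + 1, by have := i.isLt; omega⟩
          ⟨m + 1 - 1 - (i : ℕ), by have := i.isLt; omega⟩ := by
    apply Finset.prod_congr rfl
    intro i _
    simp only [hAdef, Matrix.submatrix_apply]
    congr 1 <;> ext <;> simp [Fin.rev] <;> omega
  rw [hprod, ← mul_assoc, ← pow_add]
  congr 1
  rw [neg_one_pow_eq_pow_mod_two, neg_one_pow_eq_pow_mod_two (n := m + 1 - 1 + (m + 1 - 1) / 2)]
  congr 1
  have := tri_parity m
  omega
end

section
/- For θ ∈ (0, 2π), lim_{s→0⁺} [ (θ/(2π))^{−s} + Σ_{k=1}^{∞} ( |k + θ/(2π)|^{−s} − |k − θ/(2π)|^{−s} ) ] = 1 − θ/π. -/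
open Filter Real Set


lemma mvt_rpow_aux {s u v : ℝ} (hs : 0 < s) (hu : 0 < u) (huv : u ≤ v) :
    s * (v - u) * v ^ (-(s+1)) ≤ u ^ (-s) - v ^ (-s) ∧
      u ^ (-s) - v ^ (-s) ≤ s * (v - u) * u ^ (-(s+1)) := by
  rcases eq_or_lt_of_le huv with rfl | huv'
  · simp
  have hv : 0 < v := hu.trans_le huv
  have hvu : (0:ℝ) < v - u := sub_pos.mpr huv'
  have hderiv : ∀ x ∈ Set.Ioo u v, HasDerivAt (fun x : ℝ => x ^ (-s))
      (-s * x ^ (-s - 1)) x := by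
    intro x hx
    have hx0 : x ≠ 0 := ne_of_gt (hu.trans hx.1)
    simpa using Real.hasDerivAt_rpow_const (p := -s) (Or.inl hx0)
  have hcont : ContinuousOn (fun x : ℝ => x ^ (-s)) (Set.Icc u v) := by
    intro x hx
    have hx0 : x ≠ 0 := ne_of_gt (hu.trans_le hx.1)
    exact ((Real.hasDerivAt_rpow_const (p := -s) (Or.inl hx0)).continuousAt).continuousWithinAt
  obtain ⟨c, hc, hceq⟩ := exists_hasDerivAt_eq_slope (fun x : ℝ => x ^ (-s))
    (fun x => -s * x ^ (-s - 1)) huv' hcont hderiv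
  have hc0 : 0 < c := hu.trans hc.1
  have key : u ^ (-s) - v ^ (-s) = s * (v - u) * c ^ (-(s+1)) := by
    rw [eq_div_iff (ne_of_gt hvu)] at hceq
    rw [show (-(s+1)) = -s - 1 by ring]
    linear_combination hceq
  rw [key]
  have hmul : 0 ≤ s * (v - u) := mul_nonneg hs.le (by linarith)
  constructor
  · exact mul_le_mul_of_nonneg_left
      (Real.rpow_le_rpow_of_nonpos hc0 hc.2.le (by linarith)) hmul
  · exact mul_le_mul_of_nonneg_left
      (Real.rpow_le_rpow_of_nonpos hu hc.1.le (by linarith)) hmul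

lemma hasSum_telescope {f : ℕ → ℝ} (hf : ∀ k, f (k+1) ≤ f k)
    (h0 : Tendsto f atTop (nhds 0)) :
    HasSum (fun k => f k - f (k+1)) (f 0) := by
  have hnonneg : ∀ k, 0 ≤ f k - f (k+1) := fun k => sub_nonneg.mpr (hf k)
  rw [hasSum_iff_tendsto_nat_of_nonneg hnonneg (f 0)]
  simp only [Finset.sum_range_sub' f]
  simpa using tendsto_const_nhds.sub h0

lemma antitone_aux {c s : ℝ} (hc : 0 < 1 + c) (hs : 0 < s) (k : ℕ) :
    ((k:ℝ) + 1 + 1 + c) ^ (-s) ≤ ((k:ℝ) + 1 + c) ^ (-s) :=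
  Real.rpow_le_rpow_of_nonpos (by have := Nat.cast_nonneg (α:=ℝ) k; linarith) (by linarith) (by linarith)

lemma tendsto_aux {c s : ℝ} (hs : 0 < s) :
    Tendsto (fun k : ℕ => ((k:ℝ) + 1 + c) ^ (-s)) atTop (nhds 0) := by
  apply (tendsto_rpow_neg_atTop hs).comp
  exact tendsto_atTop_add_const_right _ _
    (tendsto_atTop_add_const_right _ _ tendsto_natCast_atTop_atTop)

lemma hasSum_tele' {c s : ℝ} (hc : 0 < 1 + c) (hs : 0 < s) :
    HasSum (fun k : ℕ => ((k:ℝ) + 1 + c) ^ (-s) - ((k:ℝ) + 1 + 1 + c) ^ (-s))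
      ((1 + c) ^ (-s)) := by
  have := hasSum_telescope (f := fun k : ℕ => ((k:ℝ) + 1 + c) ^ (-s))
    (fun k => by push_cast; exact antitone_aux hc hs k) (tendsto_aux hs)
  simp only [Nat.cast_zero, zero_add] at this
  refine this.congr_fun fun k => ?_
  push_cast
  ring_nf

lemma summable_aux {c s : ℝ} (hc : 0 < 1 + c) (hs : 0 < s) :
    Summable (fun k : ℕ => ((k:ℝ) + 1 + c) ^ (-(s+1))) := by
  rw [← summable_nat_add_iff 1]
  have main : Summable (fun k : ℕ => ((k:ℝ) + 1 + 1 + c) ^ (-(s+1))) := by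
    refine Summable.of_nonneg_of_le (fun k => Real.rpow_nonneg (by have := Nat.cast_nonneg (α:=ℝ) k; linarith) _) (fun k => ?_)
      (((hasSum_tele' hc hs).summable).mul_left (1/s))
    have h := (mvt_rpow_aux hs (u := (k:ℝ) + 1 + c) (v := (k:ℝ) + 1 + 1 + c)
      (by have := Nat.cast_nonneg (α:=ℝ) k; linarith) (by linarith)).1
    rw [show ((k:ℝ)+1+1+c) - ((k:ℝ)+1+c) = 1 by ring, mul_one] at h
    have h2 := mul_le_mul_of_nonneg_left h (le_of_lt (one_div_pos.mpr hs))
    have h3 : (1/s) * (s * ((k:ℝ)+1+1+c) ^ (-(s+1))) = ((k:ℝ)+1+1+c) ^ (-(s+1)) := by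
      field_simp
    linarith
  refine main.congr fun k => ?_
  push_cast
  ring_nf

lemma bound_aux {a s : ℝ} (ha0 : 0 < a) (ha1 : a < 1) (hs : 0 < s) :
    a ^ (-s) - 2*a*((1-a) ^ (-s) + s * (1-a) ^ (-(s+1))) ≤
      a ^ (-s) + ∑' k : ℕ, (|((k : ℝ) + 1) + a| ^ (-s) - |((k : ℝ) + 1) - a| ^ (-s)) ∧
    a ^ (-s) + ∑' k : ℕ, (|((k : ℝ) + 1) + a| ^ (-s) - |((k : ℝ) + 1) - a| ^ (-s)) ≤
      a ^ (-s) - 2*a*((1+a) ^ (-s)) := by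
  have h1a : (0:ℝ) < 1 + a := by linarith
  have h1b : (0:ℝ) < 1 + -a := by linarith
  have hpos : ∀ k:ℕ, (0:ℝ) < (k:ℝ)+1-a := fun k => by
    have := Nat.cast_nonneg (α:=ℝ) k; linarith
  have hpos' : ∀ k:ℕ, (0:ℝ) < (k:ℝ)+1+a := fun k => by
    have := Nat.cast_nonneg (α:=ℝ) k; linarith
  have habs : (fun k:ℕ => |((k:ℝ)+1)+a| ^ (-s) - |((k:ℝ)+1)-a| ^ (-s)) =
      fun k:ℕ => ((k:ℝ)+1+a)^(-s) - ((k:ℝ)+1-a)^(-s) := by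
    funext k
    rw [abs_of_pos (hpos' k), abs_of_pos (hpos k)]
  rw [habs]
  have sumP : Summable fun k:ℕ => ((k:ℝ)+1+a)^(-(s+1)) := summable_aux h1a hs
  have sumQ : Summable fun k:ℕ => ((k:ℝ)+1-a)^(-(s+1)) :=
    (summable_aux h1b hs).congr fun k => by
      rw [show (k:ℝ)+1+-a = (k:ℝ)+1-a from by ring]
  have hmvt : ∀ k:ℕ, s*(2*a)*(((k:ℝ)+1+a)^(-(s+1))) ≤
      ((k:ℝ)+1-a)^(-s) - ((k:ℝ)+1+a)^(-s) ∧
      ((k:ℝ)+1-a)^(-s) - ((k:ℝ)+1+a)^(-s) ≤ s*(2*a)*(((k:ℝ)+1-a)^(-(s+1))) := by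
    intro k
    have h := mvt_rpow_aux hs (hpos k) (by linarith : (k:ℝ)+1-a ≤ (k:ℝ)+1+a)
    rwa [show ((k:ℝ)+1+a) - ((k:ℝ)+1-a) = 2*a from by ring] at h
  have sumNT : Summable (fun k:ℕ => ((k:ℝ)+1-a)^(-s) - ((k:ℝ)+1+a)^(-s)) :=
    Summable.of_nonneg_of_le
      (fun k => sub_nonneg.mpr
        (Real.rpow_le_rpow_of_nonpos (hpos k) (by linarith) (by linarith)))
      (fun k => (hmvt k).2) (sumQ.mul_left (s*(2*a)))
  have sumT : Summable (fun k:ℕ => ((k:ℝ)+1+a)^(-s) - ((k:ℝ)+1-a)^(-s)) := by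
    have := sumNT.neg
    refine this.congr fun k => ?_; ring
  have hTU : (∑' k:ℕ, (((k:ℝ)+1+a)^(-s) - ((k:ℝ)+1-a)^(-s))) ≤
      -(s*(2*a)) * ∑' k:ℕ, ((k:ℝ)+1+a)^(-(s+1)) := by
    rw [← tsum_mul_left]
    refine Summable.tsum_le_tsum (fun k => ?_) sumT (sumP.mul_left _)
    have := (hmvt k).1; linarith
  have hTL : -(s*(2*a)) * (∑' k:ℕ, ((k:ℝ)+1-a)^(-(s+1))) ≤
      ∑' k:ℕ, (((k:ℝ)+1+a)^(-s) - ((k:ℝ)+1-a)^(-s)) := by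
    rw [← tsum_mul_left]
    refine Summable.tsum_le_tsum (fun k => ?_) (sumQ.mul_left _) sumT
    have := (hmvt k).2; linarith
  have hP : (1+a) ^ (-s) ≤ s * ∑' k:ℕ, ((k:ℝ)+1+a)^(-(s+1)) := by
    rw [← tsum_mul_left, ← (hasSum_tele' h1a hs).tsum_eq]
    refine Summable.tsum_le_tsum (fun k => ?_) (hasSum_tele' h1a hs).summable (sumP.mul_left _)
    have h := (mvt_rpow_aux hs (u := (k:ℝ)+1+a) (v := (k:ℝ)+1+1+a) (hpos' k)
      (by linarith)).2
    rwa [show ((k:ℝ)+1+1+a) - ((k:ℝ)+1+a) = 1 from by ring, mul_one] at h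
  have sumQ2 : Summable fun k : ℕ => ((k:ℝ)+1+1-a)^(-(s+1)) := by
    have := (summable_nat_add_iff 1).mpr sumQ
    refine this.congr fun k => ?_
    push_cast; ring_nf
  have hQshift : ∑' k:ℕ, ((k:ℝ)+1-a)^(-(s+1)) =
      (1-a)^(-(s+1)) + ∑' k:ℕ, ((k:ℝ)+1+1-a)^(-(s+1)) := by
    rw [Summable.tsum_eq_zero_add sumQ]
    congr 1
    · norm_num
    · exact tsum_congr fun k => by push_cast; ring_nf
  have hQ2 : s * ∑' k:ℕ, ((k:ℝ)+1+1-a)^(-(s+1)) ≤ (1-a) ^ (-s) := by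
    rw [← tsum_mul_left, show (1:ℝ)-a = 1+-a from by ring,
      ← (hasSum_tele' h1b hs).tsum_eq]
    refine Summable.tsum_le_tsum (fun k => ?_) (sumQ2.mul_left _) (hasSum_tele' h1b hs).summable
    have hu : (0:ℝ) < (k:ℝ)+1+-a := by have := Nat.cast_nonneg (α:=ℝ) k; linarith
    have h := (mvt_rpow_aux hs (u := (k:ℝ)+1+-a) (v := (k:ℝ)+1+1+-a) hu
      (by linarith)).1
    rw [show ((k:ℝ)+1+1+-a) - ((k:ℝ)+1+-a) = 1 from by ring, mul_one] at h
    have hbase : ((k:ℝ)+1+1+-a) = ((k:ℝ)+1+1-a) := by ring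
    rw [hbase] at h
    exact h
  have hQbound : s * ∑' k:ℕ, ((k:ℝ)+1-a)^(-(s+1)) ≤ (1-a)^(-s) + s * (1-a)^(-(s+1)) := by
    rw [hQshift, mul_add]
    linarith
  constructor
  · have h2 := mul_le_mul_of_nonneg_left hQbound (show (0:ℝ) ≤ 2*a by linarith)
    nlinarith [hTL]
  · have h3 := mul_le_mul_of_nonneg_left hP (show (0:ℝ) ≤ 2*a by linarith)
    nlinarith [hTU]

theorem stmt12_key {a : ℝ} (ha0 : 0 < a) (ha1 : a < 1) :
    Tendsto
      (fun s : ℝ => a ^ (-s) +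
        ∑' k : ℕ, (|((k : ℝ) + 1) + a| ^ (-s) - |((k : ℝ) + 1) - a| ^ (-s)))
      (nhdsWithin 0 (Set.Ioi 0)) (nhds (1 - 2 * a)) := by
  have hcont : ∀ b : ℝ, 0 < b →
      Tendsto (fun s : ℝ => b ^ (-s)) (nhdsWithin (0:ℝ) (Ioi 0)) (nhds 1) := by
    intro b hb
    have hc : Continuous fun s : ℝ => b ^ (-s) := by
      simp only [Real.rpow_def_of_pos hb]
      exact Real.continuous_exp.comp (continuous_const.mul continuous_neg)
    have h2 := (hc.tendsto 0).mono_left (nhdsWithin_le_nhds (s := Ioi (0:ℝ)))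
    simpa using h2
  have hcont2 : Tendsto (fun s : ℝ => s * (1-a) ^ (-(s+1)))
      (nhdsWithin (0:ℝ) (Ioi 0)) (nhds 0) := by
    have hc : Continuous fun s : ℝ => s * (1-a) ^ (-(s+1)) := by
      simp only [Real.rpow_def_of_pos (by linarith : (0:ℝ) < 1 - a)]
      exact continuous_id.mul (Real.continuous_exp.comp
        (continuous_const.mul (continuous_neg.comp (continuous_id.add continuous_const))))
    have h2 := (hc.tendsto 0).mono_left (nhdsWithin_le_nhds (s := Ioi (0:ℝ)))
    simpa using h2
  have hLlim : Tendsto (fun s : ℝ => a ^ (-s) - 2*a*((1-a) ^ (-s) + s * (1-a) ^ (-(s+1))))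
      (nhdsWithin (0:ℝ) (Ioi 0)) (nhds (1 - 2*a)) := by
    have := (hcont a ha0).sub
      (((hcont (1-a) (by linarith)).add hcont2).const_mul (2*a))
    simpa using this
  have hUlim : Tendsto (fun s : ℝ => a ^ (-s) - 2*a*((1+a) ^ (-s)))
      (nhdsWithin (0:ℝ) (Ioi 0)) (nhds (1 - 2*a)) := by
    have := (hcont a ha0).sub ((hcont (1+a) (by linarith)).const_mul (2*a))
    simpa using this
  refine tendsto_of_tendsto_of_tendsto_of_le_of_le' hLlim hUlim ?_ ?_
  · filter_upwards [self_mem_nhdsWithin] with s hs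
    exact (bound_aux ha0 ha1 hs).1
  · filter_upwards [self_mem_nhdsWithin] with s hs
    exact (bound_aux ha0 ha1 hs).2

/-- For `θ ∈ (0, 2π)`,
`lim_{s→0⁺} [(θ/2π)^{−s} + Σ_{k≥1}(|k + θ/2π|^{−s} − |k − θ/2π|^{−s})] = 1 − θ/π`. -/
theorem stmt12 (θ : ℝ) (hθ : θ ∈ Set.Ioo 0 (2 * Real.pi)) :
    Filter.Tendsto
      (fun s : ℝ =>
        (θ / (2 * Real.pi)) ^ (-s) +
          ∑' k : ℕ,
            (|((k : ℝ) + 1) + θ / (2 * Real.pi)| ^ (-s) -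
              |((k : ℝ) + 1) - θ / (2 * Real.pi)| ^ (-s)))
      (nhdsWithin 0 (Set.Ioi 0)) (nhds (1 - θ / Real.pi)) := by
  have hpi : (0:ℝ) < 2 * Real.pi := by positivity
  have ha0 : 0 < θ / (2 * Real.pi) := div_pos hθ.1 hpi
  have ha1 : θ / (2 * Real.pi) < 1 := (div_lt_one hpi).mpr hθ.2
  have h := stmt12_key ha0 ha1
  have heq : 1 - 2 * (θ / (2 * Real.pi)) = 1 - θ / Real.pi := by
    have : Real.pi ≠ 0 := Real.pi_ne_zero
    field_simp
  rwa [heq] at h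
end

section
/- Suppose a > 0, l > 0, b, c ∈ R, and there exists c_0 > 0 such that (a k² + b k + c)^{1/2} ≥ l + c_0 k for all integers k ≥ 1. Then lim_{s→0⁺} Σ_{k=1}^{∞} [ ((a k² + b k + c)^{1/2} − l)^{−s} − ((a k² + b k + c)^{1/2} + l)^{−s} ] = 2l/√a. -/
open Filter Real Set Topology

private lemma tendsto_const_rpow_neg {C : ℝ} (hC : 0 < C) :
    Tendsto (fun s : ℝ => C ^ (-s)) (𝓝[>] (0:ℝ)) (𝓝 1) := by
  have h : (fun s : ℝ => C ^ (-s)) = fun s => Real.exp (Real.log C * (-s)) := by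
    funext s; rw [Real.rpow_def_of_pos hC]
  rw [h]
  have hc : Continuous fun s : ℝ => Real.exp (Real.log C * (-s)) := by continuity
  have := (hc.tendsto 0).mono_left (nhdsWithin_le_nhds (s := Set.Ioi (0:ℝ)))
  simpa using this

private lemma tendsto_mul_const_rpow {C : ℝ} (hC : 0 < C) :
    Tendsto (fun s : ℝ => s * C ^ (-(s+1))) (𝓝[>] (0:ℝ)) (𝓝 0) := by
  have h : (fun s : ℝ => s * C ^ (-(s+1))) = fun s => s * Real.exp (Real.log C * (-(s+1))) := by
    funext s; rw [Real.rpow_def_of_pos hC]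
  rw [h]
  have hc : Continuous fun s : ℝ => s * Real.exp (Real.log C * (-(s+1))) := by continuity
  have := (hc.tendsto 0).mono_left (nhdsWithin_le_nhds (s := Set.Ioi (0:ℝ)))
  simpa using this

private lemma mvt_rpow' {s p q : ℝ} (hp : 0 < p) (hpq : p < q) :
    ∃ ξ ∈ Set.Ioo p q, p ^ (-s) - q ^ (-s) = s * ξ ^ (-(s+1)) * (q - p) := by
  obtain ⟨ξ, hξ, hderiv⟩ := exists_hasDerivAt_eq_slope (fun t => t ^ (-s))
      (fun t => (-s) * t ^ (-s - 1)) hpq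
      (fun t ht => by
        have ht0 : 0 < t := lt_of_lt_of_le hp ht.1
        exact (Real.continuousAt_rpow_const t (-s) (Or.inl ht0.ne')).continuousWithinAt)
      (fun t ht => by
        have ht0 : 0 < t := lt_trans hp ht.1
        simpa using (Real.hasDerivAt_rpow_const (x := t) (p := -s) (Or.inl ht0.ne')))
  refine ⟨ξ, hξ, ?_⟩
  have hqp : (0:ℝ) < q - p := sub_pos.2 hpq
  have hexp : -(s+1) = -s - 1 := by ring
  rw [hexp]
  field_simp at hderiv
  nlinarith [hderiv]

private lemma diff_le {s l x : ℝ} (hs : 0 < s) (hl : 0 < l) (hx : l < x) :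
    2*l*(s * (x+l) ^ (-(s+1))) ≤ (x-l) ^ (-s) - (x+l) ^ (-s) ∧
      (x-l) ^ (-s) - (x+l) ^ (-s) ≤ 2*l*(s * (x-l) ^ (-(s+1))) := by
  have hp : (0:ℝ) < x - l := by linarith
  have hpq : x - l < x + l := by linarith
  obtain ⟨ξ, hξ, heq⟩ := mvt_rpow' (s := s) hp hpq
  have hq : x + l - (x - l) = 2 * l := by ring
  rw [hq] at heq
  have hξ0 : 0 < ξ := lt_trans hp hξ.1
  have h1 : ξ ^ (-(s+1)) ≤ (x - l) ^ (-(s+1)) :=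
    Real.rpow_le_rpow_of_nonpos hp hξ.1.le (by linarith)
  have h2 : (x + l) ^ (-(s+1)) ≤ ξ ^ (-(s+1)) :=
    Real.rpow_le_rpow_of_nonpos hξ0 hξ.2.le (by linarith)
  constructor
  · rw [heq]
    nlinarith [mul_le_mul_of_nonneg_left h2 (by positivity : (0:ℝ) ≤ 2*l*s)]
  · rw [heq]
    nlinarith [mul_le_mul_of_nonneg_left h1 (by positivity : (0:ℝ) ≤ 2*l*s)]
private lemma lemmaB (α u : ℝ) (M : ℕ) (hα : 0 < α) (hMu : 0 < α * ((M:ℝ)+1) + u) :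
    Tendsto (fun s : ℝ => s * ∑' k : ℕ, (α * ((k:ℝ) + (M:ℝ) + 1) + u) ^ (-(s+1)))
      (𝓝[>] (0:ℝ)) (𝓝 (1/α)) := by
  set C := α * ((M:ℝ)+1) + u with hCdef
  set t : ℕ → ℝ := fun k => α * ((k:ℝ) + (M:ℝ) + 1) + u with ht
  have htk : ∀ k : ℕ, t k = α * (k:ℝ) + C := by intro k; simp only [ht, hCdef]; ring
  have ht0 : ∀ k, 0 < t k := by
    intro k; rw [htk]
    have : (0:ℝ) ≤ α * (k:ℝ) := by positivity
    linarith
  have htsucc : ∀ k : ℕ, t (k+1) = t k + α := by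
    intro k; rw [htk, htk]; push_cast; ring
  have htlt : ∀ k, t k < t (k+1) := fun k => by rw [htsucc]; linarith
  set β := min α C with hβ
  have hβ0 : 0 < β := lt_min hα hMu
  have hβk : ∀ k : ℕ, β * ((k:ℝ)+1) ≤ t k := by
    intro k; rw [htk]
    have h1 : β ≤ α := min_le_left _ _
    have h2 : β ≤ C := min_le_right _ _
    have hk : (0:ℝ) ≤ (k:ℝ) := Nat.cast_nonneg k
    nlinarith
  have hgsum : ∀ s : ℝ, 0 < s → Summable (fun k : ℕ => (t k) ^ (-(s+1))) := by
    intro s hs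
    have hbase : Summable (fun k : ℕ => ((k:ℝ)+1) ^ (-(s+1))) := by
      have h := Real.summable_nat_rpow (p := -(s+1)) |>.2 (by linarith)
      have h2 := (summable_nat_add_iff 1).mpr h
      simpa using h2
    refine Summable.of_nonneg_of_le (fun k => Real.rpow_nonneg (ht0 k).le _) (fun k => ?_)
      (hbase.mul_left (β ^ (-(s+1))))
    have hmul : (β * ((k:ℝ)+1)) ^ (-(s+1)) = β ^ (-(s+1)) * ((k:ℝ)+1) ^ (-(s+1)) :=
      Real.mul_rpow hβ0.le (by positivity)
    calc (t k) ^ (-(s+1)) ≤ (β * ((k:ℝ)+1)) ^ (-(s+1)) :=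
          Real.rpow_le_rpow_of_nonpos (by positivity) (hβk k) (by linarith)
      _ = _ := hmul
  have key : ∀ s : ℝ, 0 < s →
      C ^ (-s) / α ≤ s * ∑' k, (t k) ^ (-(s+1)) ∧
      s * ∑' k, (t k) ^ (-(s+1)) ≤ C ^ (-s) / α + s * C ^ (-(s+1)) := by
    intro s hs
    have hg := hgsum s hs
    choose ξ hξ hξeq using fun k => mvt_rpow' (s := s) (ht0 k) (htlt k)
    set d : ℕ → ℝ := fun k => ((t k) ^ (-s) - (t (k+1)) ^ (-s)) / (s * α) with hd
    have hsα : (0:ℝ) < s * α := by positivity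
    have hdξ : ∀ k, d k = ξ k ^ (-(s+1)) := by
      intro k
      simp only [hd]
      rw [hξeq k, htsucc k]
      field_simp
      ring
    have hd0 : ∀ k, 0 ≤ d k := fun k =>
      (hdξ k) ▸ Real.rpow_nonneg (le_of_lt (lt_trans (ht0 k) (hξ k).1)) _
    have hdle : ∀ k, d k ≤ (t k) ^ (-(s+1)) := by
      intro k
      rw [hdξ k]
      exact Real.rpow_le_rpow_of_nonpos (ht0 k) (hξ k).1.le (by linarith)
    have hdge : ∀ k, (t (k+1)) ^ (-(s+1)) ≤ d k := by
      intro k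
      rw [hdξ k]
      exact Real.rpow_le_rpow_of_nonpos (lt_trans (ht0 k) (hξ k).1) (hξ k).2.le (by linarith)
    have hdsum : Summable d := Summable.of_nonneg_of_le hd0 hdle hg
    have hpartial : ∀ n : ℕ, ∑ k ∈ Finset.range n, d k = ((t 0) ^ (-s) - (t n) ^ (-s)) / (s*α) := by
      intro n
      simp only [hd]
      rw [← Finset.sum_div]
      congr 1
      exact Finset.sum_range_sub' (fun k => (t k) ^ (-s)) n
    have htop : Tendsto (fun n : ℕ => (t n) ^ (-s)) atTop (𝓝 0) := by
      have h1 : Tendsto t atTop atTop := by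
        have h2 : Tendsto (fun k : ℕ => α * (k:ℝ) + C) atTop atTop :=
          tendsto_atTop_add_const_right _ C ((tendsto_natCast_atTop_atTop).const_mul_atTop hα)
        exact h2.congr (fun k => (htk k).symm)
      exact (tendsto_rpow_neg_atTop hs).comp h1
    have hlim : Tendsto (fun n => ∑ k ∈ Finset.range n, d k) atTop (𝓝 ((t 0) ^ (-s) / (s*α))) := by
      have h2 := (tendsto_const_nhds (x := (t 0) ^ (-s)) (f := atTop (α := ℕ)) |>.sub htop).div_const (s*α)
      simp only [sub_zero] at h2
      exact h2.congr (fun n => (hpartial n).symm)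
    have ht00 : t 0 = C := by rw [htk]; simp
    have htsumd : ∑' k, d k = C ^ (-s) / (s*α) := by
      rw [← ht00]
      exact tendsto_nhds_unique hdsum.hasSum.tendsto_sum_nat hlim
    have hg1 : Summable (fun k : ℕ => (t (k+1)) ^ (-(s+1))) := (summable_nat_add_iff 1).mpr hg
    have hlow : C ^ (-s) / (s*α) ≤ ∑' k, (t k) ^ (-(s+1)) := by
      rw [← htsumd]; exact Summable.tsum_le_tsum hdle hdsum hg
    have hup : ∑' k, (t (k+1)) ^ (-(s+1)) ≤ C ^ (-s) / (s*α) := by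
      rw [← htsumd]; exact Summable.tsum_le_tsum hdge hg1 hdsum
    have hsplit : ∑' k, (t k) ^ (-(s+1)) = (t 0) ^ (-(s+1)) + ∑' k, (t (k+1)) ^ (-(s+1)) :=
      Summable.tsum_eq_zero_add hg
    constructor
    · have h3 := mul_le_mul_of_nonneg_left hlow hs.le
      have h4 : s * (C ^ (-s) / (s*α)) = C ^ (-s) / α := by field_simp
      linarith
    · have h3 := mul_le_mul_of_nonneg_left hup hs.le
      have h4 : s * (C ^ (-s) / (s*α)) = C ^ (-s) / α := by field_simp
      rw [hsplit, mul_add, ht00]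
      linarith
  have hlow := (tendsto_const_rpow_neg hMu).div_const α
  have hup := ((tendsto_const_rpow_neg hMu).div_const α).add (tendsto_mul_const_rpow hMu)
  rw [add_zero] at hup
  refine tendsto_of_tendsto_of_tendsto_of_le_of_le' hlow hup ?_ ?_
  · exact eventually_mem_nhdsWithin.mono (fun s hs => (key s hs).1)
  · exact eventually_mem_nhdsWithin.mono (fun s hs => (key s hs).2)
private lemma summableB (α u : ℝ) (M : ℕ) (hα : 0 < α) (hMu : 0 < α * ((M:ℝ)+1) + u)
    (s : ℝ) (hs : 0 < s) :
    Summable (fun k : ℕ => (α * ((k:ℝ) + (M:ℝ) + 1) + u) ^ (-(s+1))) := by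
  set C := α * ((M:ℝ)+1) + u with hCdef
  set β := min α C with hβ
  have hβ0 : 0 < β := lt_min hα hMu
  have hβk : ∀ k : ℕ, β * ((k:ℝ)+1) ≤ α * ((k:ℝ) + (M:ℝ) + 1) + u := by
    intro k
    have h1 : β ≤ α := min_le_left _ _
    have h2 : β ≤ C := min_le_right _ _
    have hk : (0:ℝ) ≤ (k:ℝ) := Nat.cast_nonneg k
    have hC : α * ((k:ℝ) + (M:ℝ) + 1) + u = α * (k:ℝ) + C := by rw [hCdef]; ring
    rw [hC]
    nlinarith
  have hpos : ∀ k : ℕ, 0 < α * ((k:ℝ) + (M:ℝ) + 1) + u :=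
    fun k => lt_of_lt_of_le (by positivity) (hβk k)
  have hbase : Summable (fun k : ℕ => ((k:ℝ)+1) ^ (-(s+1))) := by
    have h := Real.summable_nat_rpow (p := -(s+1)) |>.2 (by linarith)
    have h2 := (summable_nat_add_iff 1).mpr h
    simpa using h2
  refine Summable.of_nonneg_of_le (fun k => Real.rpow_nonneg (hpos k).le _) (fun k => ?_)
    (hbase.mul_left (β ^ (-(s+1))))
  have hmul : (β * ((k:ℝ)+1)) ^ (-(s+1)) = β ^ (-(s+1)) * ((k:ℝ)+1) ^ (-(s+1)) :=
    Real.mul_rpow hβ0.le (by positivity)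
  calc (α * ((k:ℝ) + (M:ℝ) + 1) + u) ^ (-(s+1)) ≤ (β * ((k:ℝ)+1)) ^ (-(s+1)) :=
        Real.rpow_le_rpow_of_nonpos (by positivity) (hβk k) (by linarith)
    _ = _ := hmul

set_option maxHeartbeats 1000000 in
/-- If `√(ak² + bk + c) ≥ l + c₀k` for all `k ≥ 1` (with `a, l, c₀ > 0`), then
`lim_{s→0⁺} Σ_{k≥1} [(√(ak²+bk+c) − l)^{−s} − (√(ak²+bk+c) + l)^{−s}] = 2l/√a`. -/
theorem stmt13 (a l b c c₀ : ℝ) (ha : 0 < a) (hl : 0 < l) (hc₀ : 0 < c₀)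
    (hbound : ∀ k : ℕ, 1 ≤ k →
      l + c₀ * (k : ℝ) ≤ Real.sqrt (a * (k : ℝ) ^ 2 + b * (k : ℝ) + c)) :
    Filter.Tendsto
      (fun s : ℝ =>
        ∑' k : ℕ,
          ((Real.sqrt (a * ((k : ℝ) + 1) ^ 2 + b * ((k : ℝ) + 1) + c) - l) ^ (-s) -
            (Real.sqrt (a * ((k : ℝ) + 1) ^ 2 + b * ((k : ℝ) + 1) + c) + l) ^ (-s)))
      (nhdsWithin 0 (Set.Ioi 0)) (nhds (2 * l / Real.sqrt a)) := by
  obtain ⟨sa, hsadef⟩ : ∃ x : ℝ, x = Real.sqrt a := ⟨_, rfl⟩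
  rw [← hsadef]
  have hsa : 0 < sa := hsadef ▸ Real.sqrt_pos.2 ha
  have hsa2 : sa ^ 2 = a := hsadef ▸ Real.sq_sqrt ha.le
  obtain ⟨D, hDdef⟩ : ∃ D : ℝ, D = |b| / (2 * sa) + Real.sqrt |c| + 1 := ⟨_, rfl⟩
  have hsc : 0 ≤ Real.sqrt |c| := Real.sqrt_nonneg _
  have hD : 0 < D := by rw [hDdef]; positivity
  have hDkey : 2 * sa * D = |b| + 2 * sa * Real.sqrt |c| + 2 * sa := by
    rw [hDdef]; field_simp
  have hDb : |b| + 2 * sa ≤ 2 * sa * D := by rw [hDkey]; nlinarith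
  have hDc : |c| ≤ D ^ 2 := by
    have h0 : (0:ℝ) ≤ |b| / (2 * sa) := div_nonneg (abs_nonneg b) (by positivity)
    have h1 : Real.sqrt |c| ≤ D := by rw [hDdef]; linarith
    nlinarith [Real.sq_sqrt (abs_nonneg c)]
  -- upper bound on sqrt
  have hupper : ∀ r : ℝ, 0 ≤ r → Real.sqrt (a * r ^ 2 + b * r + c) ≤ sa * r + D := by
    intro r hr
    have h1 : a * r ^ 2 + b * r + c ≤ (sa * r + D) ^ 2 := by
      have h2 : b * r ≤ 2 * sa * D * r := by
        nlinarith [le_abs_self b, mul_le_mul_of_nonneg_right hDb hr, abs_nonneg b,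
          mul_le_mul_of_nonneg_right (le_abs_self b) hr]
      nlinarith [le_abs_self c]
    calc Real.sqrt (a * r ^ 2 + b * r + c) ≤ Real.sqrt ((sa * r + D) ^ 2) :=
          Real.sqrt_le_sqrt h1
      _ = sa * r + D := Real.sqrt_sq (by positivity)
  -- lower bound on sqrt
  have hlowr : ∀ r : ℝ, D + l ≤ sa * r → D ^ 2 ≤ 2 * sa * r + c →
      sa * r - D ≤ Real.sqrt (a * r ^ 2 + b * r + c) := by
    intro r h1 h2
    have hr0 : 0 ≤ r := by nlinarith
    have hcoef : 2 * sa ≤ b + 2 * sa * D := by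
      have := neg_abs_le b
      linarith
    have h3 : (sa * r - D) ^ 2 ≤ a * r ^ 2 + b * r + c := by
      have h4 := mul_le_mul_of_nonneg_right hcoef hr0
      nlinarith
    have h5 : 0 ≤ sa * r - D := by linarith
    exact (Real.le_sqrt h5 (le_trans (by positivity) h3)).2 h3
  -- choice of M
  obtain ⟨M, hMdef⟩ : ∃ M : ℕ, M = ⌈(D ^ 2 + |c|) / (2 * sa) + (D + l) / sa⌉₊ := ⟨_, rfl⟩
  have hMle : (D ^ 2 + |c|) / (2 * sa) + (D + l) / sa ≤ (M:ℝ) := by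
    rw [hMdef]; exact Nat.le_ceil _
  have hq1 : (0:ℝ) ≤ (D ^ 2 + |c|) / (2 * sa) := by positivity
  have hq2 : (0:ℝ) ≤ (D + l) / sa := by positivity
  have hM1 : D + l ≤ sa * (M:ℝ) := by
    have : (D + l) / sa ≤ (M:ℝ) := by linarith
    calc D + l = sa * ((D + l) / sa) := by field_simp
      _ ≤ sa * (M:ℝ) := by nlinarith
  have hM2 : D ^ 2 + |c| ≤ 2 * sa * (M:ℝ) := by
    have h : (D ^ 2 + |c|) / (2 * sa) ≤ (M:ℝ) := by linarith
    calc D ^ 2 + |c| = 2 * sa * ((D ^ 2 + |c|) / (2 * sa)) := by field_simp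
      _ ≤ 2 * sa * (M:ℝ) := by nlinarith
  obtain ⟨E, hEdef⟩ : ∃ E : ℝ, E = D + l := ⟨_, rfl⟩
  have hE : 0 < E := by rw [hEdef]; positivity
  have hMuP : 0 < sa * ((M:ℝ)+1) + E := by
    have : (0:ℝ) ≤ sa * ((M:ℝ)+1) := by positivity
    linarith
  have hMuN : 0 < sa * ((M:ℝ)+1) + (-E) := by
    rw [hEdef]
    nlinarith
  -- per-index facts
  have hr0 : ∀ j : ℕ, (0:ℝ) < (j:ℝ) + 1 := fun j => by positivity
  have hXgt : ∀ j : ℕ, l < Real.sqrt (a * ((j:ℝ)+1) ^ 2 + b * ((j:ℝ)+1) + c) := by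
    intro j
    have h := hbound (j+1) (by omega)
    push_cast at h
    have := mul_pos hc₀ (hr0 j)
    linarith
  have hXc : ∀ j : ℕ, l + c₀ * ((j:ℝ)+1) ≤ Real.sqrt (a * ((j:ℝ)+1) ^ 2 + b * ((j:ℝ)+1) + c) := by
    intro j
    have h := hbound (j+1) (by omega)
    push_cast at h
    linarith
  set T : ℕ → ℝ → ℝ := fun j s =>
    ((Real.sqrt (a * ((j:ℝ) + 1) ^ 2 + b * ((j:ℝ) + 1) + c) - l) ^ (-s) -
      (Real.sqrt (a * ((j:ℝ) + 1) ^ 2 + b * ((j:ℝ) + 1) + c) + l) ^ (-s)) with hT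
  have hcast : ∀ i : ℕ, ((i + M : ℕ):ℝ) + 1 = (i:ℝ) + (M:ℝ) + 1 := by
    intro i; push_cast; ring
  have hTtail : ∀ (s : ℝ) (k : ℕ), T (k+M) s =
      ((Real.sqrt (a * ((k:ℝ) + (M:ℝ) + 1) ^ 2 + b * ((k:ℝ) + (M:ℝ) + 1) + c) - l) ^ (-s) -
        (Real.sqrt (a * ((k:ℝ) + (M:ℝ) + 1) ^ 2 + b * ((k:ℝ) + (M:ℝ) + 1) + c) + l) ^ (-s)) := by
    intro s k; simp only [hT]; rw [hcast]
  have hrpos : ∀ k : ℕ, (0:ℝ) ≤ (k:ℝ) + (M:ℝ) + 1 := fun k => by positivity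
  have hrge : ∀ k : ℕ, (M:ℝ) + 1 ≤ (k:ℝ) + (M:ℝ) + 1 := by
    intro k
    have : (0:ℝ) ≤ (k:ℝ) := Nat.cast_nonneg k
    linarith
  have hc1 : ∀ k : ℕ, D + l + sa ≤ sa * ((k:ℝ) + (M:ℝ) + 1) := by
    intro k
    have h2 : sa * ((k:ℝ) + (M:ℝ) + 1) = sa*(k:ℝ) + sa*(M:ℝ) + sa := by ring
    rw [h2]
    have h3 : (0:ℝ) ≤ sa * (k:ℝ) := mul_nonneg hsa.le (Nat.cast_nonneg k)
    linarith [hM1]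
  have hc2 : ∀ k : ℕ, D ^ 2 ≤ 2 * sa * ((k:ℝ) + (M:ℝ) + 1) + c := by
    intro k
    have h2 : 2*sa*((k:ℝ) + (M:ℝ) + 1) = 2*(sa*(k:ℝ)) + 2*(sa*(M:ℝ)) + 2*sa := by ring
    rw [h2]
    have h3 : (0:ℝ) ≤ sa * (k:ℝ) := mul_nonneg hsa.le (Nat.cast_nonneg k)
    have h4 : 2*(sa*(M:ℝ)) = 2*sa*(M:ℝ) := by ring
    rw [h4]
    linarith [hM2, neg_abs_le c, hsa.le]
  have hXgt' : ∀ k : ℕ, l < Real.sqrt (a * ((k:ℝ) + (M:ℝ) + 1) ^ 2 + b * ((k:ℝ) + (M:ℝ) + 1) + c) := by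
    intro k
    have h := hXgt (k+M)
    rwa [hcast k] at h
  -- termwise nonnegativity
  have hterm_nonneg : ∀ s : ℝ, 0 < s → ∀ j : ℕ, 0 ≤ T j s := by
    intro s hs j
    simp only [hT]
    have hx := hXgt j
    have h1 : (Real.sqrt (a * ((j:ℝ) + 1) ^ 2 + b * ((j:ℝ) + 1) + c) + l) ^ (-s) ≤
        (Real.sqrt (a * ((j:ℝ) + 1) ^ 2 + b * ((j:ℝ) + 1) + c) - l) ^ (-s) :=
      Real.rpow_le_rpow_of_nonpos (by linarith) (by linarith) (by linarith)
    linarith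
  -- termwise lower bound on tail
  have hterm_low : ∀ s : ℝ, 0 < s → ∀ k : ℕ,
      2*l*(s * (sa * ((k:ℝ) + (M:ℝ) + 1) + E) ^ (-(s+1))) ≤ T (k+M) s := by
    intro s hs k
    rw [hTtail]
    have hx0 : 0 ≤ Real.sqrt (a * ((k:ℝ) + (M:ℝ) + 1) ^ 2 + b * ((k:ℝ) + (M:ℝ) + 1) + c) :=
      Real.sqrt_nonneg _
    have hA := (diff_le hs hl (hXgt' k)).1
    have hup' := hupper ((k:ℝ) + (M:ℝ) + 1) (hrpos k)
    have hB : (sa * ((k:ℝ) + (M:ℝ) + 1) + E) ^ (-(s+1)) ≤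
        (Real.sqrt (a * ((k:ℝ) + (M:ℝ) + 1) ^ 2 + b * ((k:ℝ) + (M:ℝ) + 1) + c) + l) ^ (-(s+1)) :=
      Real.rpow_le_rpow_of_nonpos (by linarith) (by rw [hEdef]; linarith) (by linarith)
    nlinarith [mul_le_mul_of_nonneg_left hB (by positivity : (0:ℝ) ≤ 2*l*s)]
  -- termwise upper bound on tail
  have hterm_high : ∀ s : ℝ, 0 < s → ∀ k : ℕ,
      T (k+M) s ≤ 2*l*(s * (sa * ((k:ℝ) + (M:ℝ) + 1) + -E) ^ (-(s+1))) := by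
    intro s hs k
    rw [hTtail]
    have hA := (diff_le hs hl (hXgt' k)).2
    have hlo' := hlowr ((k:ℝ) + (M:ℝ) + 1) (by have := hc1 k; linarith) (hc2 k)
    have hposN : 0 < sa * ((k:ℝ) + (M:ℝ) + 1) + -E := by
      rw [hEdef]; have := hc1 k; linarith
    have hB : (Real.sqrt (a * ((k:ℝ) + (M:ℝ) + 1) ^ 2 + b * ((k:ℝ) + (M:ℝ) + 1) + c) - l) ^ (-(s+1)) ≤
        (sa * ((k:ℝ) + (M:ℝ) + 1) + -E) ^ (-(s+1)) :=
      Real.rpow_le_rpow_of_nonpos hposN (by rw [hEdef]; linarith) (by linarith)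
    nlinarith [mul_le_mul_of_nonneg_left hB (by positivity : (0:ℝ) ≤ 2*l*s)]
  -- summability
  have hSP : ∀ s : ℝ, 0 < s →
      Summable (fun k : ℕ => (sa * ((k:ℝ) + (M:ℝ) + 1) + E) ^ (-(s+1))) :=
    fun s hs => summableB sa E M hsa hMuP s hs
  have hSN : ∀ s : ℝ, 0 < s →
      Summable (fun k : ℕ => (sa * ((k:ℝ) + (M:ℝ) + 1) + -E) ^ (-(s+1))) :=
    fun s hs => summableB sa (-E) M hsa hMuN s hs
  have hStail : ∀ s : ℝ, 0 < s → Summable (fun k : ℕ => T (k+M) s) := by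
    intro s hs
    exact Summable.of_nonneg_of_le (fun k => hterm_nonneg s hs (k+M)) (hterm_high s hs)
      (((hSN s hs).mul_left s).mul_left (2*l))
  have hTfull : ∀ s : ℝ, 0 < s → Summable (fun j : ℕ => T j s) :=
    fun s hs => (summable_nat_add_iff M).mp (hStail s hs)
  -- tail limit
  have hBP := (lemmaB sa E M hsa hMuP).const_mul (2*l)
  have hBN := (lemmaB sa (-E) M hsa hMuN).const_mul (2*l)
  rw [mul_one_div] at hBP hBN
  have htail : Tendsto (fun s : ℝ => ∑' k : ℕ, T (k+M) s) (𝓝[>] (0:ℝ)) (𝓝 (2*l/sa)) := by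
    refine tendsto_of_tendsto_of_tendsto_of_le_of_le' hBP hBN ?_ ?_
    · refine eventually_mem_nhdsWithin.mono (fun s hs => ?_)
      have hs' : (0:ℝ) < s := hs
      calc 2*l*(s * ∑' k : ℕ, (sa * ((k:ℝ) + (M:ℝ) + 1) + E) ^ (-(s+1)))
          = ∑' k : ℕ, 2*l*(s * (sa * ((k:ℝ) + (M:ℝ) + 1) + E) ^ (-(s+1))) := by
            rw [tsum_mul_left, tsum_mul_left]
        _ ≤ ∑' k : ℕ, T (k+M) s :=
            Summable.tsum_le_tsum (hterm_low s hs') (((hSP s hs').mul_left s).mul_left (2*l)) (hStail s hs')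
    · refine eventually_mem_nhdsWithin.mono (fun s hs => ?_)
      have hs' : (0:ℝ) < s := hs
      calc ∑' k : ℕ, T (k+M) s
          ≤ ∑' k : ℕ, 2*l*(s * (sa * ((k:ℝ) + (M:ℝ) + 1) + -E) ^ (-(s+1))) :=
            Summable.tsum_le_tsum (hterm_high s hs') (hStail s hs') (((hSN s hs').mul_left s).mul_left (2*l))
        _ = 2*l*(s * ∑' k : ℕ, (sa * ((k:ℝ) + (M:ℝ) + 1) + -E) ^ (-(s+1))) := by
            rw [tsum_mul_left, tsum_mul_left]
  -- finite part
  have hfin : Tendsto (fun s : ℝ => ∑ j ∈ Finset.range M, T j s) (𝓝[>] (0:ℝ)) (𝓝 0) := by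
    have hterm : ∀ j : ℕ, Tendsto (fun s : ℝ => T j s) (𝓝[>] (0:ℝ)) (𝓝 0) := by
      intro j
      have hx := hXgt j
      have hx0 : 0 ≤ Real.sqrt (a * ((j:ℝ) + 1) ^ 2 + b * ((j:ℝ) + 1) + c) := Real.sqrt_nonneg _
      have hp : 0 < Real.sqrt (a * ((j:ℝ) + 1) ^ 2 + b * ((j:ℝ) + 1) + c) - l := by linarith
      have hq : 0 < Real.sqrt (a * ((j:ℝ) + 1) ^ 2 + b * ((j:ℝ) + 1) + c) + l := by linarith
      have h := (tendsto_const_rpow_neg hp).sub (tendsto_const_rpow_neg hq)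
      simp only [sub_self] at h
      exact h
    have h := tendsto_finset_sum (Finset.range M) (fun j _ => hterm j)
    simpa using h
  -- combine
  have hcomb := hfin.add htail
  rw [zero_add] at hcomb
  have hsplit : (fun s : ℝ => ∑ j ∈ Finset.range M, T j s + ∑' k : ℕ, T (k+M) s)
      =ᶠ[𝓝[>] (0:ℝ)] (fun s : ℝ => ∑' j : ℕ, T j s) := by
    refine eventually_mem_nhdsWithin.mono (fun s hs => ?_)
    exact Summable.sum_add_tsum_nat_add M (hTfull s hs)
  exact hcomb.congr' hsplit
end

section
/- Let Z = Z (the integers), and let 0 → Z → H → G → 1 be a central extension classified by a 2-cocycle c: G × G → Z. Assume that no nonzero integer multiple of c is a coboundary (i.e. n·c = df for f: G → Z implies n = 0) and that Hom(G, Z) = 0. Then Hom(H, Z) = 0. -/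
/-!
Write `k = c 1 1` and `n = ψ (1 - k, 1)`. On the fibre over `1` the twisted law says that
`a ↦ ψ (a - k, 1)` is additive, hence equal to `a ↦ a * n`; multiplying by `(0, g)` on the
right then gives `ψ (a, g) = a * n + ψ (0, g)`. Substituted back into the twisted law, this says
that `n • c` is the coboundary of `g ↦ ψ (0, g)`, so `n = 0`. Then `g ↦ ψ (0, g)` is a
homomorphism `G → ℤ`, hence zero, and so is `ψ`.
-/

def IsTwistedAddHom {G : Type*} [Mul G] (c : G → G → ℤ) (ψ : ℤ × G → ℤ) : Prop :=
  ∀ h h' : ℤ × G, ψ (h.1 + h'.1 + c h.2 h'.2, h.2 * h'.2) = ψ h + ψ h'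

namespace IsTwistedAddHom

variable {G : Type*} [MulOneClass G] {c : G → G → ℤ} {ψ : ℤ × G → ℤ}

theorem apply_sub_one_add (hψ : IsTwistedAddHom c ψ) (a b : ℤ) :
    ψ (a + b - c 1 1, 1) = ψ (a - c 1 1, 1) + ψ (b - c 1 1, 1) := by
  have h := hψ (a - c 1 1, 1) (b - c 1 1, 1)
  rwa [one_mul, show a - c 1 1 + (b - c 1 1) + c 1 1 = a + b - c 1 1 by ring] at h

theorem apply_sub_one (hψ : IsTwistedAddHom c ψ) (a : ℤ) :
    ψ (a - c 1 1, 1) = a * ψ (1 - c 1 1, 1) := by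
  let u : ℤ →+ ℤ := AddMonoidHom.mk' (fun a ↦ ψ (a - c 1 1, 1)) hψ.apply_sub_one_add
  exact AddMonoidHom.apply_int (f := u) (n := a)

theorem apply_eq (hψ : IsTwistedAddHom c ψ) (a : ℤ) (g : G) :
    ψ (a, g) = a * ψ (1 - c 1 1, 1) + ψ (0, g) := by
  have hmul : ∀ b, ψ (b + c 1 g, g) = (b + c 1 1) * ψ (1 - c 1 1, 1) + ψ (0, g) := fun b ↦ by
    have h := hψ (b, 1) (0, g)
    have hb := hψ.apply_sub_one (b + c 1 1)
    rw [add_sub_cancel_right] at hb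
    simp only [add_zero, one_mul] at h
    rw [h, hb]
  -- Evaluating at `b = a - c 1 g` and at `b = - c 1 g` shows the `c 1 g - c 1 1` terms cancel.
  have ha := hmul (a - c 1 g)
  have h0 := hmul (-c 1 g)
  simp only [sub_add_cancel, neg_add_cancel] at ha h0
  linear_combination ha - h0

theorem isCoboundary (hψ : IsTwistedAddHom c ψ) (g g' : G) :
    ψ (1 - c 1 1, 1) * c g g' = ψ (0, g) + ψ (0, g') - ψ (0, g * g') := by
  have h := hψ (0, g) (0, g')
  rw [hψ.apply_eq] at h
  simp only [add_zero, zero_add] at h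
  linear_combination h

end IsTwistedAddHom

theorem stmt15_general {G : Type*} [Group G] (c : G → G → ℤ)
    (hnc : ∀ (n : ℤ) (f : G → ℤ), (∀ g g', n * c g g' = f g + f g' - f (g * g')) → n = 0)
    (hG : ∀ φ : G → ℤ, (∀ g g', φ (g * g') = φ g + φ g') → ∀ g, φ g = 0) :
    ∀ ψ : ℤ × G → ℤ,
      (∀ h h' : ℤ × G, ψ (h.1 + h'.1 + c h.2 h'.2, h.2 * h'.2) = ψ h + ψ h') →
      ∀ h, ψ h = 0 := by
  intro ψ (hψ : IsTwistedAddHom c ψ) ⟨a, g⟩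
  have hn : ψ (1 - c 1 1, 1) = 0 := hnc _ _ hψ.isCoboundary
  have hf : ∀ g, ψ (0, g) = 0 := hG (fun g ↦ ψ (0, g)) fun g g' ↦ by
    linear_combination hψ.isCoboundary g g' - c g g' * hn
  rw [hψ.apply_eq, hn, hf, mul_zero, add_zero]

/-- If no nonzero integer multiple of the 2-cocycle `c : G × G → ℤ` is a coboundary and
`Hom(G, ℤ) = 0`, then `Hom(H, ℤ) = 0` for the central extension `H = ℤ × G` twisted
by `c`. -/
theorem stmt15 {G : Type*} [Group G] (c : G → G → ℤ)
    (hcoc : ∀ g g' g'' : G, c g g' + c (g * g') g'' = c g' g'' + c g (g' * g''))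
    (hnc : ∀ (n : ℤ) (f : G → ℤ), (∀ g g', n * c g g' = f g + f g' - f (g * g')) → n = 0)
    (hG : ∀ φ : G → ℤ, (∀ g g', φ (g * g') = φ g + φ g') → ∀ g, φ g = 0) :
    ∀ ψ : ℤ × G → ℤ,
      (∀ h h' : ℤ × G, ψ (h.1 + h'.1 + c h.2 h'.2, h.2 * h'.2) = ψ h + ψ h') →
      ∀ h, ψ h = 0 :=
  stmt15_general c hnc hG
end
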